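/- arXiv:2301.10402 — 10 statements merged into one kernel-verified Lean document; each statement's English description precedes it below -/
import Mathlib

section
/- The vector field v(x) = (-π e^{x1} cos(π x2), e^{x1} sin(π x2)) together with pressure p(x) = -(π²/2) e^{2x1} is a solution of the steady hydrostatic Euler equations v1 ∂x1 v1 + v2 ∂x2 v1 = -∂x1 p, ∂x2 p = 0, ∂x1 v1 + ∂x2 v2 = 0 in the strip ℝ × (0,1), and satisfies v2 = 0 on the boundary lines x2 = 0 and x2 = 1, while v is not a shear flow (i.e., v depends nontrivially on x1). -/
open Real Set

/-- The vector field `v = (-π e^{x1} cos(π x2), e^{x1} sin(π x2))` with pressure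
`p = -(π²/2) e^{2 x1}` solves the steady hydrostatic Euler equations in the strip
`ℝ × (0,1)`, satisfies `v2 = 0` on the boundary lines `x2 = 0` and `x2 = 1`,
and is not a shear flow. -/
theorem stmt_0 (v1 v2 p : ℝ → ℝ → ℝ)
    (hv1 : v1 = fun x1 x2 => -Real.pi * Real.exp x1 * Real.cos (Real.pi * x2))
    (hv2 : v2 = fun x1 x2 => Real.exp x1 * Real.sin (Real.pi * x2))
    (hp : p = fun x1 _ => -(Real.pi ^ 2 / 2) * Real.exp (2 * x1)) :
    (∀ x1 : ℝ, ∀ x2 ∈ Set.Ioo (0:ℝ) 1,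
      v1 x1 x2 * deriv (fun t => v1 t x2) x1
        + v2 x1 x2 * deriv (fun t => v1 x1 t) x2
        = - deriv (fun t => p t x2) x1
      ∧ deriv (fun t => p x1 t) x2 = 0
      ∧ deriv (fun t => v1 t x2) x1 + deriv (fun t => v2 x1 t) x2 = 0)
    ∧ (∀ x1 : ℝ, v2 x1 0 = 0 ∧ v2 x1 1 = 0)
    ∧ ¬ (∃ g : ℝ → ℝ × ℝ, ∀ x1 : ℝ, ∀ x2 ∈ Set.Icc (0:ℝ) 1,
          (v1 x1 x2, v2 x1 x2) = g x2) := by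
  subst hv1 hv2 hp
  refine ⟨?_, ?_, ?_⟩
  · intro x1 x2 _
    have hπt : ∀ s : ℝ, HasDerivAt (fun t : ℝ => Real.pi * t) Real.pi s := by
      intro s
      simpa using (hasDerivAt_id s).const_mul Real.pi
    have d1 : HasDerivAt (fun t => -Real.pi * Real.exp t * Real.cos (Real.pi * x2))
        (-Real.pi * Real.exp x1 * Real.cos (Real.pi * x2)) x1 := by
      simpa [mul_assoc, mul_comm, mul_left_comm] using
        ((Real.hasDerivAt_exp x1).const_mul (-Real.pi)).mul_const (Real.cos (Real.pi * x2))
    have d2 : HasDerivAt (fun t => -Real.pi * Real.exp x1 * Real.cos (Real.pi * t))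
        (-Real.pi * Real.exp x1 * (-Real.sin (Real.pi * x2) * Real.pi)) x2 := by
      exact ((hπt x2).cos).const_mul (-Real.pi * Real.exp x1)
    have d3 : HasDerivAt (fun t => -(Real.pi ^ 2 / 2) * Real.exp (2 * t))
        (-(Real.pi ^ 2 / 2) * (Real.exp (2 * x1) * 2)) x1 := by
      have h2t : HasDerivAt (fun t : ℝ => 2 * t) 2 x1 := by
        simpa using (hasDerivAt_id x1).const_mul (2 : ℝ)
      exact (h2t.exp).const_mul (-(Real.pi ^ 2 / 2))
    have d4 : HasDerivAt (fun t => Real.exp x1 * Real.sin (Real.pi * t))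
        (Real.exp x1 * (Real.cos (Real.pi * x2) * Real.pi)) x2 := by
      exact ((hπt x2).sin).const_mul (Real.exp x1)
    rw [d1.deriv, d2.deriv, d3.deriv, d4.deriv]
    refine ⟨?_, by simp, by ring⟩
    have htrig := Real.sin_sq_add_cos_sq (Real.pi * x2)
    have hexp : Real.exp (2 * x1) = Real.exp x1 * Real.exp x1 := by
      rw [two_mul, Real.exp_add]
    rw [hexp]
    beta_reduce
    linear_combination (Real.pi ^ 2 * Real.exp x1 * Real.exp x1) * htrig
  · intro x1; constructor <;> simp
  · rintro ⟨g, hg⟩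
    have hmem : (1/2 : ℝ) ∈ Set.Icc (0:ℝ) 1 := by norm_num
    have h0 := hg 0 (1/2) hmem
    have h1 := hg 1 (1/2) hmem
    have := h0.trans h1.symm
    have h2 := congrArg Prod.snd this
    simp only at h2
    have hs : Real.sin (Real.pi * (1/2)) = 1 := by
      rw [show Real.pi * (1/2) = Real.pi / 2 by ring, Real.sin_pi_div_two]
    rw [hs] at h2
    simp at h2
    have h3 : (1:ℝ) < Real.exp 1 := by simpa using Real.exp_lt_exp.mpr (show (0:ℝ) < 1 by norm_num)
    linarith
end

section
/- Let 𝔣 : ℝ → ℝ be Lipschitz continuous and η0 < η1 real constants. If η ∈ C²(0,1) ∩ C[0,1] solves η'' = 𝔣(η) on (0,1) with η(0) = η0, η(1) = η1, and satisfies η0 < η(x) < η1 for all x ∈ (0,1), then η is strictly increasing on [0,1], and moreover any two such solutions coincide. -/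
/-!
Along a solution the energy `η'² / 2 - F(η)` is constant, where `F' = 𝔣`. At an interior
critical point `c`, uniqueness for the Lipschitz system `(η, η')' = (η', 𝔣 η)` makes `η`
symmetric about `c`, so `η` takes a boundary value at an interior point (or `η 0 = η 1`),
contradicting the pinching. Hence `η'` has constant sign, necessarily positive, and
`η' = √(2 (F(η) + E))`: the time `η` needs between two levels `a < b` is
`∫ₐᵇ dw / √(2 (F(w) + E))`. A solution of smaller energy is therefore slower between any two
levels; as both solutions sweep all of `(η0, η1)` within the unit time interval, each level is
reached by both at the same moment.
-/

open Set intervalIntegral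

noncomputable def potential (f : ℝ → ℝ) (w : ℝ) : ℝ := ∫ t in (0 : ℝ)..w, f t

noncomputable def energy (f : ℝ → ℝ) (η η' : ℝ → ℝ) (x : ℝ) : ℝ :=
  η' x ^ 2 / 2 - potential f (η x)

noncomputable def speed (f : ℝ → ℝ) (E w : ℝ) : ℝ := √(2 * (potential f w + E))

theorem hasDerivAt_potential {f : ℝ → ℝ} (hf : Continuous f) (w : ℝ) :
    HasDerivAt (potential f) (f w) w :=
  integral_hasDerivAt_right (hf.intervalIntegrable _ _) (hf.stronglyMeasurableAtFilter _ _)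
    hf.continuousAt

theorem continuous_speed {f : ℝ → ℝ} (hf : Continuous f) (E : ℝ) : Continuous (speed f E) :=
  have hF : Continuous (potential f) :=
    continuous_iff_continuousAt.2 fun w => (hasDerivAt_potential hf w).continuousAt
  Real.continuous_sqrt.comp (continuous_const.mul (hF.add continuous_const))

theorem energy_eq_of_mem_Ioo {f : ℝ → ℝ} (hf : Continuous f) {η η' : ℝ → ℝ} {a b : ℝ}
    (hη : ∀ x ∈ Ioo a b, HasDerivAt η (η' x) x)
    (hη' : ∀ x ∈ Ioo a b, HasDerivAt η' (f (η x)) x) {x y : ℝ}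
    (hx : x ∈ Ioo a b) (hy : y ∈ Ioo a b) :
    energy f η η' x = energy f η η' y := by
  have hE : ∀ z ∈ Ioo a b, HasDerivAt (energy f η η') 0 z := by
    intro z hz
    have hkin : HasDerivAt (fun x => η' x ^ 2 / 2) (2 * η' z ^ 1 * f (η z) / 2) z :=
      ((hη' z hz).pow 2).div_const 2
    refine (hkin.sub ((hasDerivAt_potential hf (η z)).comp z (hη z hz))).congr_deriv ?_
    ring
  exact isOpen_Ioo.is_const_of_deriv_eq_zero isPreconnected_Ioo
    (fun z hz => (hE z hz).differentiableAt.differentiableWithinAt)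
    (fun z hz => (hE z hz).deriv) hx hy

theorem apply_two_mul_sub_eq_of_deriv_eq_zero {f : ℝ → ℝ} {K : NNReal} (hf : LipschitzWith K f)
    {η η' : ℝ → ℝ} {a b c : ℝ}
    (hη : ∀ x ∈ Ioo a b, HasDerivAt η (η' x) x)
    (hη' : ∀ x ∈ Ioo a b, HasDerivAt η' (f (η x)) x)
    (hc : c ∈ Ioo a b) (hc0 : η' c = 0) {t : ℝ} (ht : t ∈ Ioo a b)
    (ht' : 2 * c - t ∈ Ioo a b) :
    η (2 * c - t) = η t := by
  have hwindow : ∀ s ∈ Ioo (max a (2 * c - b)) (min b (2 * c - a)),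
      s ∈ Ioo a b ∧ 2 * c - s ∈ Ioo a b := by
    intro s ⟨hs1, hs2⟩
    simp only [max_lt_iff, lt_min_iff] at hs1 hs2
    exact ⟨⟨hs1.1, hs2.1⟩, by constructor <;> linarith⟩
  have hv : LipschitzWith (max 1 (K * 1)) (fun p : ℝ × ℝ => (p.2, f p.1)) :=
    LipschitzWith.prod_snd.prodMk (hf.comp LipschitzWith.prod_fst)
  have hreflect : EqOn (fun s => (η (2 * c - s), -η' (2 * c - s))) (fun s => (η s, η' s))
      (Ioo (max a (2 * c - b)) (min b (2 * c - a))) := by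
    refine ODE_solution_unique_of_mem_Ioo (v := fun _ p => (p.2, f p.1))
      (s := fun _ => univ) (fun _ _ => hv.lipschitzOnWith) (t₀ := c) ?_ ?_ ?_ ?_
    · constructor <;> simp only [max_lt_iff, lt_min_iff] <;> constructor <;> linarith [hc.1, hc.2]
    · intro s hs
      have hrev : HasDerivAt (fun x : ℝ => 2 * c - x) (-1) s := by
        simpa using (hasDerivAt_id s).const_sub (2 * c)
      exact ⟨(((hη _ (hwindow s hs).2).comp s hrev).prodMk
        ((hη' _ (hwindow s hs).2).comp s hrev).neg).congr_deriv (by simp), trivial⟩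
    · exact fun s hs => ⟨(hη s (hwindow s hs).1).prodMk (hη' s (hwindow s hs).1), trivial⟩
    · simp [hc0, show 2 * c - c = c by ring]
  refine congrArg Prod.fst (hreflect ⟨?_, ?_⟩) <;>
    simp only [max_lt_iff, lt_min_iff] <;> constructor <;> linarith [ht.1, ht.2, ht'.1, ht'.2]

theorem integral_inv_eq_sub_of_deriv_eq_comp {η η' g : ℝ → ℝ} {a b : ℝ}
    (hη : ∀ x ∈ uIcc a b, HasDerivAt η (η' x) x) (hη' : ContinuousOn η' (uIcc a b))
    (hg : ContinuousOn g (η '' uIcc a b)) (hg0 : ∀ x ∈ uIcc a b, g (η x) ≠ 0)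
    (heq : ∀ x ∈ uIcc a b, η' x = g (η x)) :
    ∫ w in η a..η b, (g w)⁻¹ = b - a := by
  have hginv : ContinuousOn (fun w => (g w)⁻¹) (η '' uIcc a b) :=
    hg.inv₀ (by rintro _ ⟨x, hx, rfl⟩; exact hg0 x hx)
  rw [← integral_comp_mul_deriv' hη hη' hginv, integral_congr (g := fun _ => (1 : ℝ))]
  · simp
  · intro x hx
    simp [heq x hx, hg0 x hx]

structure PinchedSolution (f : ℝ → ℝ) (η0 η1 : ℝ) (η η' : ℝ → ℝ) : Prop where
  continuousOn : ContinuousOn η (Icc 0 1)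
  hasDerivAt : ∀ x ∈ Ioo (0 : ℝ) 1, HasDerivAt η (η' x) x
  hasDerivAt_deriv : ∀ x ∈ Ioo (0 : ℝ) 1, HasDerivAt η' (f (η x)) x
  apply_zero : η 0 = η0
  apply_one : η 1 = η1
  mapsTo : MapsTo η (Ioo 0 1) (Ioo η0 η1)

namespace PinchedSolution

variable {f : ℝ → ℝ} {K : NNReal} {η0 η1 : ℝ} {η η' : ℝ → ℝ}
  (hs : PinchedSolution f η0 η1 η η')
include hs

theorem lt : η0 < η1 :=
  have h := hs.mapsTo (x := 1 / 2) ⟨by norm_num, by norm_num⟩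
  h.1.trans h.2

theorem surjOn : SurjOn η (Ioo 0 1) (Ioo η0 η1) := by
  rw [← hs.apply_zero, ← hs.apply_one]
  exact intermediate_value_Ioo zero_le_one hs.continuousOn

theorem continuousOn_deriv : ContinuousOn η' (Ioo 0 1) :=
  fun x hx => (hs.hasDerivAt_deriv x hx).continuousAt.continuousWithinAt

theorem eqOn_two_mul_sub (hf : LipschitzWith K f) {c : ℝ} (hc : c ∈ Ioo (0 : ℝ) 1) (hc0 : η' c = 0)
    {p q : ℝ} (hp : 0 ≤ p) (hq : q ≤ 1) (hpq : p < q) (hqc : q ≤ 2 * c) (hpc : 2 * c - 1 ≤ p) :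
    EqOn η (fun t => η (2 * c - t)) (Icc p q) := by
  have hmaps : MapsTo (fun t => 2 * c - t) (Icc p q) (Icc 0 1) :=
    fun t ht => ⟨by linarith [ht.2], by linarith [ht.1]⟩
  refine EqOn.of_subset_closure (s := Ioo p q) ?_ (hs.continuousOn.mono (Icc_subset_Icc hp hq))
    (hs.continuousOn.comp (continuousOn_const.sub continuousOn_id) hmaps) Ioo_subset_Icc_self
    (closure_Ioo hpq.ne).ge
  intro t ht
  exact (apply_two_mul_sub_eq_of_deriv_eq_zero hf hs.hasDerivAt hs.hasDerivAt_deriv hc hc0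
    ⟨by linarith [ht.1], by linarith [ht.2]⟩ ⟨by linarith [ht.2], by linarith [ht.1]⟩).symm

theorem deriv_ne_zero (hf : LipschitzWith K f) {c : ℝ} (hc : c ∈ Ioo (0 : ℝ) 1) : η' c ≠ 0 := by
  intro hc0
  rcases le_or_gt c (1 / 2) with hc2 | hc2
  · have h := hs.eqOn_two_mul_sub hf hc hc0 le_rfl (by linarith) (by linarith [hc.1]) le_rfl
      (by linarith) (left_mem_Icc.2 (by linarith [hc.1]))
    simp only [sub_zero, hs.apply_zero] at h
    rcases hc2.lt_or_eq with hlt | rfl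
    · exact (hs.mapsTo (x := 2 * c) ⟨by linarith [hc.1], by linarith⟩).1.ne h
    · norm_num [hs.apply_one] at h
      exact hs.lt.ne h
  · have h := hs.eqOn_two_mul_sub hf hc hc0 (by linarith) le_rfl (by linarith [hc.2]) (by linarith)
      le_rfl (right_mem_Icc.2 (by linarith [hc.2]))
    rw [hs.apply_one] at h
    exact (hs.mapsTo (x := 2 * c - 1) ⟨by linarith, by linarith [hc.2]⟩).2.ne' h

theorem deriv_pos (hf : LipschitzWith K f) {x : ℝ} (hx : x ∈ Ioo (0 : ℝ) 1) : 0 < η' x := by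
  have hneg : ¬ ∀ x ∈ Ioo (0 : ℝ) 1, η' x < 0 := fun hneg => by
    have h10 : η 1 < η 0 := strictAntiOn_of_deriv_neg (convex_Icc 0 1) hs.continuousOn
      (fun x hx => by rw [interior_Icc] at hx; rw [(hs.hasDerivAt x hx).deriv]; exact hneg x hx)
      (left_mem_Icc.2 zero_le_one) (right_mem_Icc.2 zero_le_one) zero_lt_one
    rw [hs.apply_zero, hs.apply_one] at h10
    exact hs.lt.asymm h10
  push Not at hneg
  obtain ⟨y, hy, hy0⟩ := hneg
  by_contra! hx0
  have hsub : uIcc x y ⊆ Ioo 0 1 := ordConnected_Ioo.uIcc_subset hx hy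
  obtain ⟨c, hc, hc0⟩ := intermediate_value_uIcc (hs.continuousOn_deriv.mono hsub)
    (mem_uIcc.2 (Or.inl ⟨hx0, hy0⟩))
  exact hs.deriv_ne_zero hf (hsub hc) hc0

theorem strictMonoOn (hf : LipschitzWith K f) : StrictMonoOn η (Icc 0 1) :=
  strictMonoOn_of_deriv_pos (convex_Icc 0 1) hs.continuousOn fun x hx => by
    rw [interior_Icc] at hx
    rw [(hs.hasDerivAt x hx).deriv]
    exact hs.deriv_pos hf hx

theorem deriv_eq_speed (hf : LipschitzWith K f) {x y : ℝ} (hx : x ∈ Ioo (0 : ℝ) 1)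
    (hy : y ∈ Ioo (0 : ℝ) 1) :
    η' x = speed f (energy f η η' y) (η x) := by
  rw [← energy_eq_of_mem_Ioo hf.continuous hs.hasDerivAt hs.hasDerivAt_deriv hx hy, speed, energy,
    show 2 * (potential f (η x) + (η' x ^ 2 / 2 - potential f (η x))) = η' x ^ 2 by ring,
    Real.sqrt_sq (hs.deriv_pos hf hx).le]

theorem speed_pos (hf : LipschitzWith K f) {y w : ℝ} (hy : y ∈ Ioo (0 : ℝ) 1)
    (hw : w ∈ Ioo η0 η1) :
    0 < speed f (energy f η η' y) w := by
  obtain ⟨x, hx, rfl⟩ := hs.surjOn hw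
  rw [← hs.deriv_eq_speed hf hx hy]
  exact hs.deriv_pos hf hx

theorem intervalIntegrable_inv_speed (hf : LipschitzWith K f) {y a b : ℝ}
    (hy : y ∈ Ioo (0 : ℝ) 1) (ha : a ∈ Ioo η0 η1) (hb : b ∈ Ioo η0 η1) :
    IntervalIntegrable (fun w => (speed f (energy f η η' y) w)⁻¹) MeasureTheory.volume a b := by
  refine ContinuousOn.intervalIntegrable ((continuous_speed hf.continuous _).continuousOn.inv₀ ?_)
  exact fun w hw => (hs.speed_pos hf hy (ordConnected_Ioo.uIcc_subset ha hb hw)).ne'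

theorem integral_inv_speed (hf : LipschitzWith K f) {y x₁ x₂ : ℝ} (hy : y ∈ Ioo (0 : ℝ) 1)
    (hx₁ : x₁ ∈ Ioo (0 : ℝ) 1) (hx₂ : x₂ ∈ Ioo (0 : ℝ) 1) :
    ∫ w in η x₁..η x₂, (speed f (energy f η η' y) w)⁻¹ = x₂ - x₁ := by
  have hsub : uIcc x₁ x₂ ⊆ Ioo 0 1 := ordConnected_Ioo.uIcc_subset hx₁ hx₂
  exact integral_inv_eq_sub_of_deriv_eq_comp (fun x hx => hs.hasDerivAt x (hsub hx))
    (hs.continuousOn_deriv.mono hsub) (continuous_speed hf.continuous _).continuousOn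
    (fun x hx => (hs.speed_pos hf hy (hs.mapsTo (hsub hx))).ne')
    (fun x hx => hs.deriv_eq_speed hf (hsub hx) hy)

variable {ζ ζ' : ℝ → ℝ} (hz : PinchedSolution f η0 η1 ζ ζ')
include hz

theorem sub_le_sub_of_energy_le (hf : LipschitzWith K f)
    (hE : energy f η η' (1 / 2) ≤ energy f ζ ζ' (1 / 2)) {x₁ x₂ y₁ y₂ : ℝ}
    (hx₁ : x₁ ∈ Ioo (0 : ℝ) 1) (hx₂ : x₂ ∈ Ioo (0 : ℝ) 1) (hy₁ : y₁ ∈ Ioo (0 : ℝ) 1)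
    (hy₂ : y₂ ∈ Ioo (0 : ℝ) 1) (hy : y₁ ≤ y₂) (h₁ : η x₁ = ζ y₁) (h₂ : η x₂ = ζ y₂) :
    y₂ - y₁ ≤ x₂ - x₁ := by
  have half : (1 / 2 : ℝ) ∈ Ioo 0 1 := ⟨by norm_num, by norm_num⟩
  rw [← hs.integral_inv_speed hf half hx₁ hx₂, ← hz.integral_inv_speed hf half hy₁ hy₂, h₁, h₂]
  refine integral_mono_on ((hz.strictMonoOn hf).monotoneOn (Ioo_subset_Icc_self hy₁)
    (Ioo_subset_Icc_self hy₂) hy) (hz.intervalIntegrable_inv_speed hf half (hz.mapsTo hy₁)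
    (hz.mapsTo hy₂)) (hs.intervalIntegrable_inv_speed hf half (hz.mapsTo hy₁)
    (hz.mapsTo hy₂)) fun w hw => ?_
  have hw' : w ∈ Ioo η0 η1 := ordConnected_Ioo.out (hz.mapsTo hy₁) (hz.mapsTo hy₂) hw
  exact inv_anti₀ (hs.speed_pos hf half hw') (Real.sqrt_le_sqrt (by linarith))

theorem eq_of_apply_eq_of_energy_le (hf : LipschitzWith K f)
    (hE : energy f η η' (1 / 2) ≤ energy f ζ ζ' (1 / 2)) {x y : ℝ}
    (hx : x ∈ Ioo (0 : ℝ) 1) (hy : y ∈ Ioo (0 : ℝ) 1) (h : η x = ζ y) : x = y := by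
  have hupper : 1 - x + y ∈ upperBounds (Ioo y 1) := by
    intro y₂ hy₂
    have hy₂' : y₂ ∈ Ioo (0 : ℝ) 1 := ⟨hy.1.trans hy₂.1, hy₂.2⟩
    obtain ⟨x₂, hx₂, h₂⟩ := hs.surjOn (hz.mapsTo hy₂')
    linarith [hs.sub_le_sub_of_energy_le hz hf hE hx hx₂ hy hy₂' hy₂.1.le h h₂, hx₂.2]
  have hlower : y - x ∈ lowerBounds (Ioo 0 y) := by
    intro y₁ hy₁
    have hy₁' : y₁ ∈ Ioo (0 : ℝ) 1 := ⟨hy₁.1, hy₁.2.trans hy.2⟩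
    obtain ⟨x₁, hx₁, h₁⟩ := hs.surjOn (hz.mapsTo hy₁')
    linarith [hs.sub_le_sub_of_energy_le hz hf hE hx₁ hx hy₁' hy hy₁.2.le h₁ h, hx₁.1]
  linarith [(isLUB_Ioo hy.2).2 hupper, (isGLB_Ioo hy.1).2 hlower]

theorem eqOn (hf : LipschitzWith K f) : EqOn η ζ (Icc 0 1) := by
  refine EqOn.of_subset_closure (s := Ioo 0 1) (fun x hx => ?_) hs.continuousOn hz.continuousOn
    Ioo_subset_Icc_self (closure_Ioo zero_ne_one).ge
  obtain ⟨y, hy, hyx⟩ := hz.surjOn (hs.mapsTo hx)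
  have hxy : x = y := by
    rcases le_total (energy f η η' (1 / 2)) (energy f ζ ζ' (1 / 2)) with hE | hE
    · exact hs.eq_of_apply_eq_of_energy_le hz hf hE hx hy hyx.symm
    · exact (hz.eq_of_apply_eq_of_energy_le hs hf hE hy hx hyx).symm
  rw [← hyx, hxy]

end PinchedSolution

theorem stmt_1_general (𝔣 : ℝ → ℝ) (K : NNReal) (hf : LipschitzWith K 𝔣)
    (η0 η1 : ℝ)
    (η η' : ℝ → ℝ)
    (hcont : ContinuousOn η (Set.Icc 0 1))
    (hderiv : ∀ x ∈ Set.Ioo (0:ℝ) 1, HasDerivAt η (η' x) x)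
    (hderiv2 : ∀ x ∈ Set.Ioo (0:ℝ) 1, HasDerivAt η' (𝔣 (η x)) x)
    (hb0 : η 0 = η0) (hb1 : η 1 = η1)
    (hpinch : ∀ x ∈ Set.Ioo (0:ℝ) 1, η0 < η x ∧ η x < η1) :
    StrictMonoOn η (Set.Icc 0 1)
    ∧ ∀ (ζ ζ' : ℝ → ℝ),
        ContinuousOn ζ (Set.Icc 0 1) →
        (∀ x ∈ Set.Ioo (0:ℝ) 1, HasDerivAt ζ (ζ' x) x) →
        (∀ x ∈ Set.Ioo (0:ℝ) 1, HasDerivAt ζ' (𝔣 (ζ x)) x) →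
        ζ 0 = η0 → ζ 1 = η1 →
        (∀ x ∈ Set.Ioo (0:ℝ) 1, η0 < ζ x ∧ ζ x < η1) →
        Set.EqOn η ζ (Set.Icc 0 1) := by
  have hs : PinchedSolution 𝔣 η0 η1 η η' := ⟨hcont, hderiv, hderiv2, hb0, hb1, hpinch⟩
  exact ⟨hs.strictMonoOn hf, fun ζ ζ' hζc hζd hζd2 hζ0 hζ1 hζp =>
    hs.eqOn ⟨hζc, hζd, hζd2, hζ0, hζ1, hζp⟩ hf⟩

/-- If `𝔣` is Lipschitz, `η0 < η1`, and `η ∈ C²(0,1) ∩ C[0,1]` solves `η'' = 𝔣(η)` on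
`(0,1)` with `η(0) = η0`, `η(1) = η1` and `η0 < η < η1` in `(0,1)`, then `η` is strictly
increasing on `[0,1]` and is the unique such solution. -/
theorem stmt_1 (𝔣 : ℝ → ℝ) (K : NNReal) (hf : LipschitzWith K 𝔣)
    (η0 η1 : ℝ) (hη01 : η0 < η1)
    (η η' : ℝ → ℝ)
    (hcont : ContinuousOn η (Set.Icc 0 1))
    (hderiv : ∀ x ∈ Set.Ioo (0:ℝ) 1, HasDerivAt η (η' x) x)
    (hderiv2 : ∀ x ∈ Set.Ioo (0:ℝ) 1, HasDerivAt η' (𝔣 (η x)) x)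
    (hb0 : η 0 = η0) (hb1 : η 1 = η1)
    (hpinch : ∀ x ∈ Set.Ioo (0:ℝ) 1, η0 < η x ∧ η x < η1) :
    StrictMonoOn η (Set.Icc 0 1)
    ∧ ∀ (ζ ζ' : ℝ → ℝ),
        ContinuousOn ζ (Set.Icc 0 1) →
        (∀ x ∈ Set.Ioo (0:ℝ) 1, HasDerivAt ζ (ζ' x) x) →
        (∀ x ∈ Set.Ioo (0:ℝ) 1, HasDerivAt ζ' (𝔣 (ζ x)) x) →
        ζ 0 = η0 → ζ 1 = η1 →
        (∀ x ∈ Set.Ioo (0:ℝ) 1, η0 < ζ x ∧ ζ x < η1) →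
        Set.EqOn η ζ (Set.Icc 0 1) :=
  stmt_1_general 𝔣 K hf η0 η1 η η' hcont hderiv hderiv2 hb0 hb1 hpinch
end

section
/- Let 𝔣 : ℝ → ℝ be C¹, 𝔪 > 0, and let φ : ℝ × [0,1] → ℝ be a bounded C² solution of ∂x2x2 φ = 𝔣(φ) in the strip ℝ × (0,1) with φ(x1, 0) = 0 and φ(x1, 1) = 𝔪 for all x1, satisfying 0 < φ < 𝔪 in the interior. Then φ is independent of x1: there exists a strictly increasing function φ̄ : [0,1] → ℝ such that φ(x1, x2) = φ̄(x2) for all (x1, x2). -/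
/-!
Each slice `u = φ (x₁, ·)` solves the autonomous ODE `u'' = 𝔣 u` on `[0, 1]` with `u 0 = 0`,
`u 1 = 𝔪`, so it suffices to show that such a pinched solution is increasing and unique.
By time reversibility, a solution with `u' t₀ = 0` is symmetric about `t₀`, which the boundary
values and the pinching forbid; hence `u' > 0` inside. Energy conservation
`u'² - 2 ∫₀ᵘ 𝔣 = const` shows that if `u' 0 > v' 0` then `u' > v'` wherever `u = v`, which
is impossible because `u - v` vanishes at both ends. So all slices have the same initial
data and coincide by uniqueness for the ODE, `𝔣` being locally Lipschitz.
-/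

open Set Filter Topology

theorem ODE_solution_unique_of_locallyLipschitz {E : Type*} [NormedAddCommGroup E]
    [NormedSpace ℝ E] {V : E → E} (hV : LocallyLipschitz V) {f g : ℝ → E} {a b : ℝ}
    (hf : ContinuousOn f (Icc a b))
    (hf' : ∀ t ∈ Ico a b, HasDerivWithinAt f (V (f t)) (Ici t) t)
    (hg : ContinuousOn g (Icc a b))
    (hg' : ∀ t ∈ Ico a b, HasDerivWithinAt g (V (g t)) (Ici t) t)
    (ha : f a = g a) : EqOn f g (Icc a b) := by
  obtain ⟨K, hK⟩ := hV.locallyLipschitzOn.exists_lipschitzOnWith_of_compact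
    ((isCompact_Icc.image_of_continuousOn hf).union (isCompact_Icc.image_of_continuousOn hg))
  exact ODE_solution_unique_of_mem_Icc_right (v := fun _ => V) (fun _ _ => hK) hf hf'
    (fun t ht => .inl (mem_image_of_mem f (Ico_subset_Icc_self ht))) hg hg'
    (fun t ht => .inr (mem_image_of_mem g (Ico_subset_Icc_self ht))) ha

section OneSided

variable {f : ℝ → ℝ} {f' a b : ℝ}

theorem IsMinOn.hasDerivWithinAt_Icc_left_nonneg (hab : a < b) (hmin : IsMinOn f (Icc a b) a)
    (hf : HasDerivWithinAt f f' (Icc a b) a) : 0 ≤ f' := by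
  have hcone : b - a ∈ posTangentConeAt (Icc a b) a :=
    sub_mem_posTangentConeAt_of_segment_subset (segment_eq_Icc hab.le ▸ Subset.rfl)
  have := hmin.localize.hasFDerivWithinAt_nonneg hf.hasFDerivWithinAt hcone
  rw [ContinuousLinearMap.toSpanSingleton_apply, smul_eq_mul] at this
  exact nonneg_of_mul_nonneg_right this (sub_pos.2 hab)

theorem IsMinOn.hasDerivWithinAt_Icc_right_nonpos (hab : a < b) (hmin : IsMinOn f (Icc a b) b)
    (hf : HasDerivWithinAt f f' (Icc a b) b) : f' ≤ 0 := by
  have hcone : a - b ∈ posTangentConeAt (Icc a b) b :=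
    sub_mem_posTangentConeAt_of_segment_subset (by rw [segment_symm, segment_eq_Icc hab.le])
  have := hmin.localize.hasFDerivWithinAt_nonneg hf.hasFDerivWithinAt hcone
  rw [ContinuousLinearMap.toSpanSingleton_apply, smul_eq_mul] at this
  exact nonpos_of_mul_nonneg_right this (sub_neg.2 hab)

end OneSided

theorem exists_zero_hasDerivWithinAt_nonpos {w w' : ℝ → ℝ} {a b : ℝ} (hab : a < b)
    (hw : ∀ t ∈ Icc a b, HasDerivWithinAt w (w' t) (Icc a b) t) (ha : w a = 0) (hb : w b = 0) :
    ∃ t ∈ Icc a b, w t = 0 ∧ w' t ≤ 0 := by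
  by_contra! hzero
  have hcont : ContinuousOn w (Icc a b) := fun t ht => (hw t ht).continuousWithinAt
  obtain ⟨p, hp, hwp⟩ : ∃ p ∈ Icc a b, 0 < w p := by
    by_contra! hle
    have hmin : IsMinOn (-w) (Icc a b) a := fun t ht => by simpa [ha] using hle t ht
    have := hmin.hasDerivWithinAt_Icc_left_nonneg hab (hw a (left_mem_Icc.2 hab.le)).neg
    linarith [hzero a (left_mem_Icc.2 hab.le) ha]
  set Z := Icc p b ∩ w ⁻¹' {0}
  have hZ : IsCompact Z := isCompact_Icc.of_isClosed_subset
    ((hcont.mono (Icc_subset_Icc_left hp.1)).preimage_isClosed_of_isClosed isClosed_Icc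
      isClosed_singleton) inter_subset_left
  obtain ⟨t₁, ⟨ht₁, hwt₁ : w t₁ = 0⟩, hfirst⟩ :=
    hZ.exists_isMinOn ⟨b, ⟨right_mem_Icc.2 hp.2, hb⟩⟩ continuousOn_id
  have hpt₁ : p < t₁ := ht₁.1.lt_of_ne (by rintro rfl; simp_all)
  have hpos : ∀ t ∈ Icc p t₁, 0 ≤ w t := by
    intro t ht
    by_contra! hneg
    obtain ⟨z, hz, hwz⟩ := intermediate_value_Icc' ht.1
      (hcont.mono (Icc_subset_Icc hp.1 (ht.2.trans ht₁.2))) ⟨hneg.le, hwp.le⟩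
    have : t₁ ≤ z := hfirst ⟨⟨hz.1, hz.2.trans (ht.2.trans ht₁.2)⟩, hwz⟩
    have : t = t₁ := le_antisymm ht.2 (this.trans hz.2)
    simp_all
  have hmin : IsMinOn w (Icc p t₁) t₁ := fun t ht => hwt₁ ▸ hpos t ht
  have hsub : Icc p t₁ ⊆ Icc a b := Icc_subset_Icc hp.1 ht₁.2
  have ht₁' : t₁ ∈ Icc a b := hsub (right_mem_Icc.2 hpt₁.le)
  have := hmin.hasDerivWithinAt_Icc_right_nonpos hpt₁ ((hw t₁ ht₁').mono hsub)
  linarith [hzero t₁ ht₁' hwt₁]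

/-- `u'' = f u` as the first-order system `(u, u')' = phaseField f (u, u')`. -/
def phaseField (f : ℝ → ℝ) (p : ℝ × ℝ) : ℝ × ℝ := (p.2, f p.1)

theorem ContDiff.locallyLipschitz_phaseField {f : ℝ → ℝ} (hf : ContDiff ℝ 1 f) :
    LocallyLipschitz (phaseField f) :=
  (contDiff_snd.prodMk (hf.comp contDiff_fst)).locallyLipschitz

section SecondOrder

variable {f u : ℝ → ℝ} {a b : ℝ}

theorem hasDerivAt_derivWithin_Icc (hu : DifferentiableOn ℝ u (Icc a b)) {t : ℝ}
    (ht : t ∈ Ioo a b) : HasDerivAt u (derivWithin u (Icc a b) t) t :=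
  (hu t (Ioo_subset_Icc_self ht)).hasDerivWithinAt.hasDerivAt (Icc_mem_nhds ht.1 ht.2)

theorem hasDerivWithinAt_derivWithin_of_deriv_deriv (hab : a < b) (hf : Continuous f)
    (hu : ContDiffOn ℝ 2 u (Icc a b)) (hode : ∀ t ∈ Ioo a b, deriv (deriv u) t = f (u t)) :
    ∀ t ∈ Icc a b, HasDerivWithinAt (derivWithin u (Icc a b)) (f (u t)) (Icc a b) t := by
  have hIcc := uniqueDiffOn_Icc hab
  have hu' : ContDiffOn ℝ 1 (derivWithin u (Icc a b)) (Icc a b) := hu.derivWithin hIcc le_rfl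
  have hinterior : EqOn (derivWithin (derivWithin u (Icc a b)) (Icc a b)) (f ∘ u) (Ioo a b) := by
    intro t ht
    have hnhds : Icc a b ∈ 𝓝 t := Icc_mem_nhds ht.1 ht.2
    rw [derivWithin_of_mem_nhds hnhds, Function.comp_apply, ← hode t ht]
    refine Filter.EventuallyEq.deriv_eq ?_
    filter_upwards [isOpen_Ioo.mem_nhds ht] with s hs
    exact derivWithin_of_mem_nhds (Icc_mem_nhds hs.1 hs.2)
  have hclosure := hinterior.of_subset_closure (hu'.continuousOn_derivWithin hIcc le_rfl)
    (hf.comp_continuousOn hu.continuousOn) Ioo_subset_Icc_self (closure_Ioo hab.ne).ge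
  intro t ht
  rw [← Function.comp_apply (f := f), ← hclosure ht]
  exact (hu'.differentiableOn one_ne_zero t ht).hasDerivWithinAt

theorem hasDerivWithinAt_phaseField (hab : a < b) (hf : Continuous f)
    (hu : ContDiffOn ℝ 2 u (Icc a b)) (hode : ∀ t ∈ Ioo a b, deriv (deriv u) t = f (u t)) :
    ∀ t ∈ Icc a b, HasDerivWithinAt (fun s => (u s, derivWithin u (Icc a b) s))
      (phaseField f (u t, derivWithin u (Icc a b) t)) (Icc a b) t := fun t ht =>
  ((hu.differentiableOn two_ne_zero t ht).hasDerivWithinAt).prodMk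
    (hasDerivWithinAt_derivWithin_of_deriv_deriv hab hf hu hode t ht)

theorem derivWithin_sq_sub_integral_eq (hab : a < b) (hf : Continuous f)
    (hu : ContDiffOn ℝ 2 u (Icc a b)) (hode : ∀ t ∈ Ioo a b, deriv (deriv u) t = f (u t)) :
    ∀ t ∈ Icc a b, derivWithin u (Icc a b) t ^ 2 - 2 * ∫ s in (0:ℝ)..u t, f s
      = derivWithin u (Icc a b) a ^ 2 - 2 * ∫ s in (0:ℝ)..u a, f s := by
  have hE : ∀ t ∈ Icc a b, HasDerivWithinAt
      (fun t => derivWithin u (Icc a b) t ^ 2 - 2 * ∫ s in (0:ℝ)..u t, f s) 0 (Icc a b) t := by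
    intro t ht
    have hu' := (hu.differentiableOn two_ne_zero t ht).hasDerivWithinAt
    have hu'' := hasDerivWithinAt_derivWithin_of_deriv_deriv hab hf hu hode t ht
    have hF := (hf.integral_hasStrictDerivAt 0 (u t)).hasDerivAt.comp_hasDerivWithinAt t hu'
    refine ((hu''.pow 2).sub (hF.const_mul 2)).congr_deriv ?_
    push_cast
    ring
  exact constant_of_has_deriv_right_zero (fun t ht => (hE t ht).continuousWithinAt)
    fun t ht => (hE t (Ico_subset_Icc_self ht)).mono_of_mem_nhdsWithin (Icc_mem_nhdsGE_of_mem ht)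

theorem map_add_eq_map_sub_of_derivWithin_eq_zero (hab : a < b) (hf : ContDiff ℝ 1 f)
    (hu : ContDiffOn ℝ 2 u (Icc a b)) (hode : ∀ t ∈ Ioo a b, deriv (deriv u) t = f (u t))
    {t₀ r : ℝ} (hr : 0 ≤ r) (ha : a ≤ t₀ - r) (hb : t₀ + r ≤ b)
    (hcrit : derivWithin u (Icc a b) t₀ = 0) : u (t₀ + r) = u (t₀ - r) := by
  set u' := derivWithin u (Icc a b)
  have hcont : ContinuousOn u (Icc a b) := hu.continuousOn
  have hcont' : ContinuousOn u' (Icc a b) :=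
    hu.continuousOn_derivWithin (uniqueDiffOn_Icc hab) one_le_two
  have hderiv : ∀ t ∈ Ioo a b, HasDerivAt u (u' t) t ∧ HasDerivAt u' (f (u t)) t :=
    fun t ht => ⟨hasDerivAt_derivWithin_Icc (hu.differentiableOn two_ne_zero) ht,
      (hasDerivWithinAt_derivWithin_of_deriv_deriv hab hf.continuous hu hode t
        (Ioo_subset_Icc_self ht)).hasDerivAt (Icc_mem_nhds ht.1 ht.2)⟩
  have hplus : MapsTo (t₀ + ·) (Icc 0 r) (Icc a b) := fun s hs =>
    ⟨by linarith [hs.1], by linarith [hs.2]⟩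
  have hminus : MapsTo (t₀ - ·) (Icc 0 r) (Icc a b) := fun s hs =>
    ⟨by linarith [hs.2], by linarith [hs.1]⟩
  have hplus' : ∀ s ∈ Ico 0 r, t₀ + s ∈ Ioo a b := fun s hs =>
    ⟨by linarith [hs.1, hs.2], by linarith [hs.2]⟩
  have hminus' : ∀ s ∈ Ico 0 r, t₀ - s ∈ Ioo a b := fun s hs =>
    ⟨by linarith [hs.2], by linarith [hs.1, hs.2]⟩
  have hsymm : EqOn (fun s => (u (t₀ + s), u' (t₀ + s)))
      (fun s => (u (t₀ - s), -u' (t₀ - s))) (Icc 0 r) := by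
    refine ODE_solution_unique_of_locallyLipschitz hf.locallyLipschitz_phaseField
      ((hcont.comp (by fun_prop) hplus).prodMk (hcont'.comp (by fun_prop) hplus)) ?_
      ((hcont.comp (by fun_prop) hminus).prodMk (hcont'.comp (by fun_prop) hminus).neg) ?_
      (by simp [hcrit])
    · intro s hs
      obtain ⟨h1, h2⟩ := hderiv _ (hplus' s hs)
      exact ((h1.comp_const_add t₀ s).prodMk (h2.comp_const_add t₀ s)).hasDerivWithinAt
    · intro s hs
      obtain ⟨h1, h2⟩ := hderiv _ (hminus' s hs)
      refine ((h1.comp_const_sub t₀ s).prodMk (h2.comp_const_sub t₀ s).neg).hasDerivWithinAt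
        |>.congr_deriv ?_
      simp [phaseField]
  exact congrArg Prod.fst (hsymm (right_mem_Icc.2 hr))

theorem eqOn_of_map_eq_of_derivWithin_eq {v : ℝ → ℝ} (hab : a < b) (hf : ContDiff ℝ 1 f)
    (hu : ContDiffOn ℝ 2 u (Icc a b)) (hode_u : ∀ t ∈ Ioo a b, deriv (deriv u) t = f (u t))
    (hv : ContDiffOn ℝ 2 v (Icc a b)) (hode_v : ∀ t ∈ Ioo a b, deriv (deriv v) t = f (v t))
    (h₀ : u a = v a) (h₁ : derivWithin u (Icc a b) a = derivWithin v (Icc a b) a) :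
    EqOn u v (Icc a b) := by
  have hu' := hasDerivWithinAt_phaseField hab hf.continuous hu hode_u
  have hv' := hasDerivWithinAt_phaseField hab hf.continuous hv hode_v
  have hphase := ODE_solution_unique_of_locallyLipschitz hf.locallyLipschitz_phaseField
    (fun t ht => (hu' t ht).continuousWithinAt)
    (fun t ht => (hu' t (Ico_subset_Icc_self ht)).mono_of_mem_nhdsWithin (Icc_mem_nhdsGE_of_mem ht))
    (fun t ht => (hv' t ht).continuousWithinAt)
    (fun t ht => (hv' t (Ico_subset_Icc_self ht)).mono_of_mem_nhdsWithin (Icc_mem_nhdsGE_of_mem ht))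
    (Prod.ext h₀ h₁)
  exact fun t ht => congrArg Prod.fst (hphase ht)

end SecondOrder

structure IsPinchedSolution (f : ℝ → ℝ) (m : ℝ) (u : ℝ → ℝ) : Prop where
  contDiffOn : ContDiffOn ℝ 2 u (Icc 0 1)
  deriv_deriv : ∀ t ∈ Ioo (0:ℝ) 1, deriv (deriv u) t = f (u t)
  map_zero : u 0 = 0
  map_one : u 1 = m
  mem_Ioo : ∀ t ∈ Ioo (0:ℝ) 1, u t ∈ Ioo 0 m

namespace IsPinchedSolution

variable {f u v : ℝ → ℝ} {m t : ℝ}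

theorem pos (hu : IsPinchedSolution f m u) : 0 < m :=
  have h := hu.mem_Ioo 2⁻¹ ⟨by norm_num, by norm_num⟩
  h.1.trans h.2

theorem pos_of_mem_Ioc (hu : IsPinchedSolution f m u) (ht : t ∈ Ioc 0 1) : 0 < u t := by
  rcases ht.2.eq_or_lt with rfl | ht₁
  · exact hu.map_one ▸ hu.pos
  · exact (hu.mem_Ioo t ⟨ht.1, ht₁⟩).1

theorem lt_of_mem_Ico (hu : IsPinchedSolution f m u) (ht : t ∈ Ico 0 1) : u t < m := by
  rcases ht.1.eq_or_lt with rfl | ht₀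
  · rw [hu.map_zero]
    exact hu.pos
  · exact (hu.mem_Ioo t ⟨ht₀, ht.2⟩).2

theorem derivWithin_ne_zero (hf : ContDiff ℝ 1 f) (hu : IsPinchedSolution f m u)
    (ht : t ∈ Ioo 0 1) : derivWithin u (Icc 0 1) t ≠ 0 := by
  intro hcrit
  have hsymm : u (t + min t (1 - t)) = u (t - min t (1 - t)) :=
    map_add_eq_map_sub_of_derivWithin_eq_zero zero_lt_one hf hu.contDiffOn hu.deriv_deriv
      (le_min ht.1.le (by linarith [ht.2])) (by linarith [min_le_left t (1 - t)])
      (by linarith [min_le_right t (1 - t)]) hcrit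
  rcases le_total t (1 - t) with h | h
  · rw [min_eq_left h, sub_self, hu.map_zero] at hsymm
    exact (hu.pos_of_mem_Ioc ⟨by linarith [ht.1], by linarith⟩).ne' hsymm
  · rw [min_eq_right h, add_sub_cancel, hu.map_one] at hsymm
    exact (hu.lt_of_mem_Ico ⟨by linarith, by linarith [ht.2]⟩).ne hsymm.symm

theorem derivWithin_pos (hf : ContDiff ℝ 1 f) (hu : IsPinchedSolution f m u)
    (ht : t ∈ Ioo 0 1) : 0 < derivWithin u (Icc 0 1) t := by
  set u' := derivWithin u (Icc 0 1)
  have hdiff := hu.contDiffOn.differentiableOn two_ne_zero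
  obtain ⟨c, hc, hslope⟩ := exists_hasDerivAt_eq_slope u u' zero_lt_one
    hu.contDiffOn.continuousOn fun s hs => hasDerivAt_derivWithin_Icc hdiff hs
  have hc_pos : 0 < u' c := by
    rw [hslope, hu.map_zero, hu.map_one, sub_zero, sub_zero, div_one]
    exact hu.pos
  by_contra! hneg
  have hconn : IsPreconnected (u' '' Ioo 0 1) := isPreconnected_Ioo.image u'
    ((hu.contDiffOn.continuousOn_derivWithin (uniqueDiffOn_Icc zero_lt_one) one_le_two).mono
      Ioo_subset_Icc_self)
  obtain ⟨z, hz, hz₀⟩ :=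
    hconn.Icc_subset (mem_image_of_mem u' ht) (mem_image_of_mem u' hc) ⟨hneg, hc_pos.le⟩
  exact hu.derivWithin_ne_zero hf hz hz₀

theorem strictMonoOn (hf : ContDiff ℝ 1 f) (hu : IsPinchedSolution f m u) :
    StrictMonoOn u (Icc 0 1) := by
  refine strictMonoOn_of_hasDerivWithinAt_pos (f' := derivWithin u (Icc 0 1)) (convex_Icc 0 1)
    hu.contDiffOn.continuousOn (fun s hs => ?_) (fun s hs => ?_)
  all_goals rw [interior_Icc] at hs
  · exact (hasDerivAt_derivWithin_Icc (hu.contDiffOn.differentiableOn two_ne_zero)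
      hs).hasDerivWithinAt
  · exact hu.derivWithin_pos hf hs

theorem derivWithin_nonneg (hf : ContDiff ℝ 1 f) (hu : IsPinchedSolution f m u)
    (ht : t ∈ Icc 0 1) : 0 ≤ derivWithin u (Icc 0 1) t := by
  have hclosed : IsClosed (Icc 0 1 ∩ derivWithin u (Icc 0 1) ⁻¹' Ici 0) :=
    (hu.contDiffOn.continuousOn_derivWithin (uniqueDiffOn_Icc zero_lt_one) one_le_two)
      |>.preimage_isClosed_of_isClosed isClosed_Icc isClosed_Ici
  have hsub : closure (Ioo (0:ℝ) 1) ⊆ Icc 0 1 ∩ derivWithin u (Icc 0 1) ⁻¹' Ici 0 :=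
    closure_minimal (fun s hs => ⟨Ioo_subset_Icc_self hs, (hu.derivWithin_pos hf hs).le⟩)
      hclosed
  rw [closure_Ioo zero_ne_one] at hsub
  exact (hsub ht).2

theorem derivWithin_zero_le (hf : ContDiff ℝ 1 f) (hu : IsPinchedSolution f m u)
    (hv : IsPinchedSolution f m v) :
    derivWithin u (Icc 0 1) 0 ≤ derivWithin v (Icc 0 1) 0 := by
  by_contra! hlt
  have hdu := hu.contDiffOn.differentiableOn two_ne_zero
  have hdv := hv.contDiffOn.differentiableOn two_ne_zero
  obtain ⟨t, ht, hcross, hle⟩ := exists_zero_hasDerivWithinAt_nonpos (w := u - v)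
    (w' := derivWithin u (Icc 0 1) - derivWithin v (Icc 0 1)) zero_lt_one
    (fun s hs => (hdu s hs).hasDerivWithinAt.sub (hdv s hs).hasDerivWithinAt)
    (by simp [hu.map_zero, hv.map_zero]) (by simp [hu.map_one, hv.map_one])
  have hEu := derivWithin_sq_sub_integral_eq zero_lt_one hf.continuous hu.contDiffOn
    hu.deriv_deriv t ht
  have hEv := derivWithin_sq_sub_integral_eq zero_lt_one hf.continuous hv.contDiffOn
    hv.deriv_deriv t ht
  rw [Pi.sub_apply, sub_eq_zero] at hcross
  rw [Pi.sub_apply, sub_nonpos] at hle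
  rw [hcross, hu.map_zero] at hEu
  rw [hv.map_zero] at hEv
  -- by the energy identities `u'² - v'² = u' 0 ² - v' 0 ² > 0` at `t`, yet `0 ≤ u' ≤ v'`
  nlinarith [hu.derivWithin_nonneg hf ht, hv.derivWithin_nonneg hf (left_mem_Icc.2 zero_le_one)]

theorem eqOn (hf : ContDiff ℝ 1 f) (hu : IsPinchedSolution f m u)
    (hv : IsPinchedSolution f m v) : EqOn u v (Icc 0 1) :=
  eqOn_of_map_eq_of_derivWithin_eq zero_lt_one hf hu.contDiffOn hu.deriv_deriv hv.contDiffOn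
    hv.deriv_deriv (hu.map_zero.trans hv.map_zero.symm)
    ((hu.derivWithin_zero_le hf hv).antisymm (hv.derivWithin_zero_le hf hu))

end IsPinchedSolution

theorem stmt_2_general (𝔣 : ℝ → ℝ) (hf : ContDiff ℝ 1 𝔣) (𝔪 : ℝ)
    (φ : ℝ × ℝ → ℝ)
    (hreg : ContDiffOn ℝ 2 φ (Set.univ ×ˢ Set.Icc (0:ℝ) 1))
    (heq : ∀ x1 : ℝ, ∀ x2 ∈ Set.Ioo (0:ℝ) 1,
      deriv (deriv (fun t => φ (x1, t))) x2 = 𝔣 (φ (x1, x2)))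
    (hb0 : ∀ x1 : ℝ, φ (x1, 0) = 0)
    (hb1 : ∀ x1 : ℝ, φ (x1, 1) = 𝔪)
    (hpinch : ∀ x1 : ℝ, ∀ x2 ∈ Set.Ioo (0:ℝ) 1, 0 < φ (x1, x2) ∧ φ (x1, x2) < 𝔪) :
    ∃ φbar : ℝ → ℝ, StrictMonoOn φbar (Set.Icc 0 1)
      ∧ ∀ x1 : ℝ, ∀ x2 ∈ Set.Icc (0:ℝ) 1, φ (x1, x2) = φbar x2 := by
  have hslice : ∀ x1, IsPinchedSolution 𝔣 𝔪 (fun t => φ (x1, t)) := fun x1 =>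
    ⟨hreg.comp (contDiff_const.prodMk contDiff_id).contDiffOn fun _ ht => ⟨trivial, ht⟩,
      heq x1, hb0 x1, hb1 x1, hpinch x1⟩
  exact ⟨fun t => φ (0, t), (hslice 0).strictMonoOn hf,
    fun x1 _ hx2 => (hslice x1).eqOn hf (hslice 0) hx2⟩

/-- Liouville-type theorem for the degenerate equation `∂_{x2 x2} φ = 𝔣(φ)` in the strip
`ℝ × [0,1]`: a bounded `C²` solution pinched between its boundary values `0` and `𝔪 > 0`
depends only on `x2`, and the resulting profile is strictly increasing. -/
theorem stmt_2 (𝔣 : ℝ → ℝ) (hf : ContDiff ℝ 1 𝔣) (𝔪 : ℝ) (h𝔪 : 0 < 𝔪)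
    (φ : ℝ × ℝ → ℝ)
    (hreg : ContDiffOn ℝ 2 φ (Set.univ ×ˢ Set.Icc (0:ℝ) 1))
    (hbdd : ∃ M : ℝ, ∀ x ∈ Set.univ ×ˢ Set.Icc (0:ℝ) 1, |φ x| ≤ M)
    (heq : ∀ x1 : ℝ, ∀ x2 ∈ Set.Ioo (0:ℝ) 1,
      deriv (deriv (fun t => φ (x1, t))) x2 = 𝔣 (φ (x1, x2)))
    (hb0 : ∀ x1 : ℝ, φ (x1, 0) = 0)
    (hb1 : ∀ x1 : ℝ, φ (x1, 1) = 𝔪)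
    (hpinch : ∀ x1 : ℝ, ∀ x2 ∈ Set.Ioo (0:ℝ) 1, 0 < φ (x1, x2) ∧ φ (x1, x2) < 𝔪) :
    ∃ φbar : ℝ → ℝ, StrictMonoOn φbar (Set.Icc 0 1)
      ∧ ∀ x1 : ℝ, ∀ x2 ∈ Set.Icc (0:ℝ) 1, φ (x1, x2) = φbar x2 :=
  stmt_2_general 𝔣 hf 𝔪 φ hreg heq hb0 hb1 hpinch
end

section
/- Fix constants 𝔠 > 0 and s > 0, and let f̂ : ℝ → ℝ be a bounded Lipschitz function. Then the two-point boundary value problem ρ'' = s² f̂(ρ) on [0,1], ρ(0) = 0, ρ(1) = 𝔠, has a solution ρ ∈ C²([0,1]) satisfying ‖ρ‖_{C²[0,1]} ≤ (13 s²/8) sup|f̂| + 2𝔠, and ρ'' is Lipschitz with constant s² Lip(f̂) ((13 s²/8) sup|f̂| + 2𝔠). -/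
/-!
Shooting method. For a slope `a`, the initial value problem `ρ'' = s² f̂(ρ)`, `ρ(0) = 0`,
`ρ'(0) = a` is the fixed point equation of the Picard operator
`g ↦ a y + s² ∫₀^y (y - t) f̂(g t) dt` on `C([0,1])`, whose `n`-th iterate is
`(s² K)ⁿ / n!`-Lipschitz, hence a contraction for large `n`. The fixed point `ρ_a` depends
continuously on `a`, and `|ρ_a(1) - a| ≤ s² M / 2`, so some `a` gives `ρ_a(1) = 𝔠`.
With `ρ(1) = 𝔠`, the Green's function representation `ρ(y) = 𝔠 y + s² ∫₀¹ G(t, y) f̂(ρ t) dt` and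
`∫₀¹ |G(t, y)| dt = y (1 - y) / 2 ≤ 1/8` give `|ρ| ≤ 𝔠 + s² M / 8`; the same splitting of `ρ'`
gives `|ρ'| ≤ 𝔠 + s² M / 2`, and `|ρ''| ≤ s² M`.
-/

open Set Filter Function MeasureTheory

namespace Shooting

noncomputable section

lemma dist_iterate_iterate_le {α : Type*} [PseudoMetricSpace α] {f g : α → α} {L : NNReal}
    (hf : LipschitzWith L f) {C : ℝ} (hfg : ∀ z, dist (f z) (g z) ≤ C) (n : ℕ) (z : α) :
    dist (f^[n] z) (g^[n] z) ≤ (∑ k ∈ Finset.range n, (L : ℝ) ^ k) * C := by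
  induction n with
  | zero => simp
  | succ n ih =>
    rw [Function.iterate_succ_apply', Function.iterate_succ_apply', geom_sum_succ]
    calc dist (f (f^[n] z)) (g (g^[n] z))
        ≤ dist (f (f^[n] z)) (f (g^[n] z)) + dist (f (g^[n] z)) (g (g^[n] z)) :=
          dist_triangle _ _ _
      _ ≤ L * ((∑ k ∈ Finset.range n, (L : ℝ) ^ k) * C) + C :=
          add_le_add ((hf.dist_le_mul _ _).trans (mul_le_mul_of_nonneg_left ih L.2)) (hfg _)
      _ = _ := by ring

lemma surjective_of_abs_sub_le {φ : ℝ → ℝ} (hφ : Continuous φ) {C : ℝ}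
    (h : ∀ a, |φ a - a| ≤ C) : Function.Surjective φ :=
  hφ.surjective
    (tendsto_atTop_mono (fun a => by dsimp only [id]; linarith [(abs_le.1 (h a)).1])
      (tendsto_atTop_add_const_right _ (-C) tendsto_id))
    (tendsto_atBot_mono (fun a => by dsimp only [id]; linarith [(abs_le.1 (h a)).2])
      (tendsto_atBot_add_const_right _ C tendsto_id))

lemma abs_integral_mul_le {w F : ℝ → ℝ} {a b M : ℝ} (hab : a ≤ b)
    (hw : IntervalIntegrable w volume a b) (hw0 : ∀ t ∈ Icc a b, 0 ≤ w t)
    (hFM : ∀ t ∈ Icc a b, |F t| ≤ M) :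
    |∫ t in a..b, w t * F t| ≤ M * ∫ t in a..b, w t := by
  rw [← intervalIntegral.integral_const_mul, ← Real.norm_eq_abs]
  refine intervalIntegral.norm_integral_le_of_norm_le hab (ae_of_all _ fun t ht => ?_)
    (hw.const_mul M)
  have ht' := Ioc_subset_Icc_self ht
  rw [Real.norm_eq_abs, abs_mul, abs_of_nonneg (hw0 t ht'), mul_comm M]
  exact mul_le_mul_of_nonneg_left (hFM t ht') (hw0 t ht')

/-- Cauchy's formula for the solution of `ρ'' = c F`, `ρ(0) = 0`, `ρ'(0) = a`. -/
def shoot (c a : ℝ) (F : ℝ → ℝ) (y : ℝ) : ℝ :=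
  a * y + c * ∫ t in (0:ℝ)..y, (y - t) * F t

variable {c a M : ℝ} {F : ℝ → ℝ}

lemma shoot_zero : shoot c a F 0 = 0 := by
  simp [shoot]

lemma hasDerivAt_shoot (hF : Continuous F) (y : ℝ) :
    HasDerivAt (shoot c a F) (a + c * ∫ t in (0:ℝ)..y, F t) y := by
  have hsplit : shoot c a F = fun y =>
      a * y + c * (y * (∫ t in (0:ℝ)..y, F t) - ∫ t in (0:ℝ)..y, t * F t) := by
    ext z
    simp only [shoot, sub_mul]
    rw [intervalIntegral.integral_sub (Continuous.intervalIntegrable (by fun_prop) _ _)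
      (Continuous.intervalIntegrable (by fun_prop) _ _), intervalIntegral.integral_const_mul]
  have hI := (hF.integral_hasStrictDerivAt 0 y).hasDerivAt
  have hJ : HasDerivAt (fun u => ∫ t in (0:ℝ)..u, t * F t) (y * F y) y :=
    ((continuous_id.mul hF).integral_hasStrictDerivAt 0 y).hasDerivAt
  rw [hsplit]
  exact (((hasDerivAt_id' y).const_mul a).add
    ((((hasDerivAt_id' y).mul hI).sub hJ).const_mul c)).congr_deriv (by ring)

lemma continuous_shoot (hF : Continuous F) : Continuous (shoot c a F) :=
  continuous_iff_continuousAt.2 fun y => (hasDerivAt_shoot hF y).continuousAt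

lemma abs_shoot_sub_shoot_le {G β : ℝ → ℝ} {y : ℝ} (hc : 0 ≤ c) (hF : Continuous F)
    (hG : Continuous G) (hy : y ∈ Icc (0:ℝ) 1) (hβ : IntervalIntegrable β volume 0 y)
    (hFG : ∀ t ∈ Icc 0 y, |F t - G t| ≤ β t) :
    |shoot c a F y - shoot c a G y| ≤ c * ∫ t in (0:ℝ)..y, β t := by
  have hdiff : shoot c a F y - shoot c a G y = c * ∫ t in (0:ℝ)..y, (y - t) * (F t - G t) := by
    simp only [shoot, mul_sub]
    rw [intervalIntegral.integral_sub (Continuous.intervalIntegrable (by fun_prop) _ _)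
      (Continuous.intervalIntegrable (by fun_prop) _ _)]
    ring
  rw [hdiff, abs_mul, abs_of_nonneg hc]
  gcongr
  rw [← Real.norm_eq_abs]
  refine intervalIntegral.norm_integral_le_of_norm_le hy.1 (ae_of_all _ fun t ht => ?_) hβ
  have hyt : |y - t| ≤ 1 := abs_le.2 ⟨by linarith [ht.2], by linarith [ht.1, hy.2]⟩
  rw [Real.norm_eq_abs, abs_mul]
  calc |y - t| * |F t - G t| ≤ 1 * β t :=
        mul_le_mul hyt (hFG t (Ioc_subset_Icc_self ht)) (abs_nonneg _) zero_le_one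
    _ = β t := one_mul _

variable {y : ℝ}

lemma integral_sub_mul_eq (hF : Continuous F) :
    ∫ t in (0:ℝ)..y, (y - t) * F t
      = y * (∫ t in (0:ℝ)..y, (1 - t) * F t) - (1 - y) * ∫ t in (0:ℝ)..y, t * F t := by
  rw [← intervalIntegral.integral_const_mul, ← intervalIntegral.integral_const_mul,
    ← intervalIntegral.integral_sub (Continuous.intervalIntegrable (by fun_prop) _ _)
      (Continuous.intervalIntegrable (by fun_prop) _ _)]
  exact intervalIntegral.integral_congr fun t _ => by ring

lemma integral_eq_one_sub_mul_add_mul (hF : Continuous F) :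
    ∫ t in (0:ℝ)..y, F t = (∫ t in (0:ℝ)..y, (1 - t) * F t) + ∫ t in (0:ℝ)..y, t * F t := by
  rw [← intervalIntegral.integral_add (Continuous.intervalIntegrable (by fun_prop) _ _)
      (Continuous.intervalIntegrable (by fun_prop) _ _)]
  exact intervalIntegral.integral_congr fun t _ => by ring

lemma shoot_one_eq_add (hF : Continuous F) :
    shoot c a F 1 = a + c * ((∫ t in (0:ℝ)..y, (1 - t) * F t) + ∫ t in y..1, (1 - t) * F t) := by
  rw [intervalIntegral.integral_add_adjacent_intervals
    (Continuous.intervalIntegrable (by fun_prop) _ _)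
    (Continuous.intervalIntegrable (by fun_prop) _ _), shoot, mul_one]

/-- The right-hand side is `c ∫₀¹ G(t, y) F t dt` for the Green's function `G`, split at `t = y`. -/
lemma shoot_sub_mul_shoot_one (hF : Continuous F) :
    shoot c a F y - y * shoot c a F 1
      = -c * ((1 - y) * (∫ t in (0:ℝ)..y, t * F t) + y * ∫ t in y..1, (1 - t) * F t) := by
  rw [shoot_one_eq_add (y := y) hF, shoot, integral_sub_mul_eq hF]
  ring

lemma deriv_shoot_sub_shoot_one (hF : Continuous F) :
    a + c * (∫ t in (0:ℝ)..y, F t) - shoot c a F 1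
      = c * ((∫ t in (0:ℝ)..y, t * F t) - ∫ t in y..1, (1 - t) * F t) := by
  rw [shoot_one_eq_add (y := y) hF, integral_eq_one_sub_mul_add_mul hF]
  ring

section

variable (hFM : ∀ t ∈ Icc (0:ℝ) 1, |F t| ≤ M) (hy : y ∈ Icc (0:ℝ) 1)
include hFM hy

lemma abs_integral_id_mul_le : |∫ t in (0:ℝ)..y, t * F t| ≤ M * (y ^ 2 / 2) := by
  have h := abs_integral_mul_le (w := id) hy.1 (continuous_id.intervalIntegrable _ _)
    (fun t ht => ht.1) (fun t ht => hFM t ⟨ht.1, ht.2.trans hy.2⟩)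
  simpa [integral_id] using h

lemma abs_integral_one_sub_mul_le :
    |∫ t in y..1, (1 - t) * F t| ≤ M * ((1 - y) ^ 2 / 2) := by
  have h := abs_integral_mul_le (w := fun t => 1 - t) hy.2
    (Continuous.intervalIntegrable (by fun_prop) _ _)
    (fun t ht => sub_nonneg.2 ht.2) (fun t ht => hFM t ⟨hy.1.trans ht.1, ht.2⟩)
  rw [intervalIntegral.integral_sub (f := fun _ => 1) (g := fun t => t) intervalIntegrable_const
    (continuous_id.intervalIntegrable _ _), integral_id, intervalIntegral.integral_const] at h
  convert h using 2
  simp only [smul_eq_mul]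
  ring

lemma abs_shoot_sub_mul_shoot_one_le (hc : 0 ≤ c) (hF : Continuous F) :
    |shoot c a F y - y * shoot c a F 1| ≤ c * M / 8 := by
  have hM : 0 ≤ M := (abs_nonneg _).trans (hFM 0 ⟨le_rfl, zero_le_one⟩)
  have h1y : 0 ≤ 1 - y := sub_nonneg.2 hy.2
  rw [shoot_sub_mul_shoot_one hF, abs_mul, abs_neg, abs_of_nonneg hc]
  have hG : |(1 - y) * (∫ t in (0:ℝ)..y, t * F t) + y * ∫ t in y..1, (1 - t) * F t|
      ≤ (1 - y) * (M * (y ^ 2 / 2)) + y * (M * ((1 - y) ^ 2 / 2)) := by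
    refine (abs_add_le _ _).trans (add_le_add ?_ ?_)
    · rw [abs_mul, abs_of_nonneg h1y]
      exact mul_le_mul_of_nonneg_left (abs_integral_id_mul_le hFM hy) h1y
    · rw [abs_mul, abs_of_nonneg hy.1]
      exact mul_le_mul_of_nonneg_left (abs_integral_one_sub_mul_le hFM hy) hy.1
  have hpoly : (1 - y) * (M * (y ^ 2 / 2)) + y * (M * ((1 - y) ^ 2 / 2)) ≤ M / 8 := by
    nlinarith [mul_nonneg hM (sq_nonneg (2 * y - 1))]
  calc c * |_| ≤ c * (M / 8) := mul_le_mul_of_nonneg_left (hG.trans hpoly) hc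
    _ = c * M / 8 := by ring

lemma abs_deriv_shoot_sub_shoot_one_le (hc : 0 ≤ c) (hF : Continuous F) :
    |a + c * (∫ t in (0:ℝ)..y, F t) - shoot c a F 1| ≤ c * M / 2 := by
  have hM : 0 ≤ M := (abs_nonneg _).trans (hFM 0 ⟨le_rfl, zero_le_one⟩)
  rw [deriv_shoot_sub_shoot_one hF, abs_mul, abs_of_nonneg hc]
  have hG := (abs_sub _ _).trans
    (add_le_add (abs_integral_id_mul_le hFM hy) (abs_integral_one_sub_mul_le hFM hy))
  have hpoly : M * (y ^ 2 / 2) + M * ((1 - y) ^ 2 / 2) ≤ M / 2 := by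
    nlinarith [mul_nonneg hM (mul_nonneg hy.1 (sub_nonneg.2 hy.2))]
  calc c * |_| ≤ c * (M / 2) := mul_le_mul_of_nonneg_left (hG.trans hpoly) hc
    _ = c * M / 2 := by ring

lemma abs_shoot_le (hc : 0 ≤ c) (hF : Continuous F) :
    |shoot c a F y| ≤ |shoot c a F 1| + c * M / 8 := by
  have hy1 : |y * shoot c a F 1| ≤ |shoot c a F 1| := by
    rw [abs_mul, abs_of_nonneg hy.1]
    exact mul_le_of_le_one_left (abs_nonneg _) hy.2
  have := abs_shoot_sub_mul_shoot_one_le hFM hy hc hF (a := a)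
  have := abs_sub_abs_le_abs_sub (shoot c a F y) (y * shoot c a F 1)
  linarith

lemma abs_deriv_shoot_le (hc : 0 ≤ c) (hF : Continuous F) :
    |a + c * ∫ t in (0:ℝ)..y, F t| ≤ |shoot c a F 1| + c * M / 2 := by
  have := abs_deriv_shoot_sub_shoot_one_le hFM hy hc hF (a := a)
  have := abs_sub_abs_le_abs_sub (a + c * ∫ t in (0:ℝ)..y, F t) (shoot c a F 1)
  linarith

lemma abs_shoot_add_abs_deriv_add_abs_le (hc : 0 ≤ c) (hF : Continuous F) :
    |shoot c a F y| + |a + c * ∫ t in (0:ℝ)..y, F t| + |c * F y|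
      ≤ 13 * c / 8 * M + 2 * |shoot c a F 1| := by
  have h0 := abs_shoot_le hFM hy hc hF (a := a)
  have h1 := abs_deriv_shoot_le hFM hy hc hF (a := a)
  have h2 : |c * F y| ≤ c * M := by
    rw [abs_mul, abs_of_nonneg hc]
    exact mul_le_mul_of_nonneg_left (hFM y hy) hc
  linarith

end

lemma abs_shoot_one_sub_le (hFM : ∀ t ∈ Icc (0:ℝ) 1, |F t| ≤ M) (hc : 0 ≤ c)
    (hF : Continuous F) : |shoot c a F 1 - a| ≤ c * M / 2 := by
  simpa [abs_sub_comm] using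
    abs_deriv_shoot_sub_shoot_one_le hFM ⟨le_rfl, zero_le_one⟩ hc hF (a := a)

lemma abs_shoot_sub_shoot_le_mul (hFM : ∀ t ∈ Icc (0:ℝ) 1, |F t| ≤ M) (hc : 0 ≤ c)
    (hF : Continuous F) {y y' : ℝ} (hy : y ∈ Icc (0:ℝ) 1) (hy' : y' ∈ Icc (0:ℝ) 1) :
    |shoot c a F y - shoot c a F y'| ≤ (|shoot c a F 1| + c * M / 2) * |y - y'| := by
  simpa only [Real.norm_eq_abs] using
    (convex_Icc (0:ℝ) 1).norm_image_sub_le_of_norm_hasDerivWithin_le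
    (fun z _ => (hasDerivAt_shoot hF z).hasDerivWithinAt)
    (fun z hz => (Real.norm_eq_abs _).trans_le (abs_deriv_shoot_le hFM hz hc hF)) hy' hy

lemma abs_mul_sub_mul_le_of_eq_comp_shoot (hFM : ∀ t ∈ Icc (0:ℝ) 1, |F t| ≤ M) (hc : 0 ≤ c)
    (hF : Continuous F) {f : ℝ → ℝ} {K : ℝ} (hK : 0 ≤ K)
    (hf : ∀ t t', |f t - f t'| ≤ K * |t - t'|) (hFf : ∀ y ∈ Icc (0:ℝ) 1, F y = f (shoot c a F y))
    {y y' : ℝ} (hy : y ∈ Icc (0:ℝ) 1) (hy' : y' ∈ Icc (0:ℝ) 1) :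
    |c * F y - c * F y'| ≤ c * K * (|shoot c a F 1| + c * M / 2) * |y - y'| := by
  rw [← mul_sub, abs_mul, abs_of_nonneg hc, hFf y hy, hFf y' hy', mul_assoc, mul_assoc]
  gcongr
  exact (hf _ _).trans (mul_le_mul_of_nonneg_left (abs_shoot_sub_shoot_le_mul hFM hc hF hy hy') hK)

variable (c : ℝ) (f : C(ℝ, ℝ))

def picard (a : ℝ) (g : C(Icc (0:ℝ) 1, ℝ)) : C(Icc (0:ℝ) 1, ℝ) :=
  ⟨fun y => shoot c a (f ∘ IccExtend zero_le_one g) y,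
    (continuous_shoot (f.continuous.comp g.continuous.Icc_extend')).comp continuous_subtype_val⟩

variable {c f} {K : NNReal}

lemma picard_apply (g : C(Icc (0:ℝ) 1, ℝ)) (y : Icc (0:ℝ) 1) :
    picard c f a g y = shoot c a (f ∘ IccExtend zero_le_one g) y :=
  rfl

lemma IccExtend_eq_shoot_of_isFixedPt {g : C(Icc (0:ℝ) 1, ℝ)} (hg : IsFixedPt (picard c f a) g)
    {y : ℝ} (hy : y ∈ Icc (0:ℝ) 1) :
    IccExtend zero_le_one g y = shoot c a (f ∘ IccExtend zero_le_one g) y :=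
  (IccExtend_of_mem _ _ hy).trans (DFunLike.congr_fun hg ⟨y, hy⟩).symm

lemma dist_picard_picard_le (b : ℝ) (g : C(Icc (0:ℝ) 1, ℝ)) :
    dist (picard c f a g) (picard c f b g) ≤ |a - b| := by
  refine (ContinuousMap.dist_le (abs_nonneg _)).2 fun y => ?_
  rw [Real.dist_eq, picard_apply, picard_apply, shoot, shoot, add_sub_add_right_eq_sub,
    ← sub_mul, abs_mul, abs_of_nonneg y.2.1]
  exact mul_le_of_le_one_right (abs_nonneg _) y.2.2

lemma abs_picard_iterate_sub_le (hc : 0 ≤ c) (hf : LipschitzWith K f) (n : ℕ)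
    (g h : C(Icc (0:ℝ) 1, ℝ)) (y : Icc (0:ℝ) 1) :
    |(picard c f a)^[n] g y - (picard c f a)^[n] h y|
      ≤ (c * K) ^ n * (y : ℝ) ^ n / n.factorial * dist g h := by
  induction n generalizing y with
  | zero => simpa [← Real.dist_eq] using ContinuousMap.dist_apply_le_dist y
  | succ n ih =>
    set u := (picard c f a)^[n] g
    set v := (picard c f a)^[n] h
    set B := K * ((c * K) ^ n / n.factorial * dist g h)
    have hFG : ∀ t ∈ Icc 0 (y : ℝ), |f (IccExtend zero_le_one u t) - f (IccExtend zero_le_one v t)|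
        ≤ B * t ^ n := fun t ht => by
      have ht' : t ∈ Icc (0:ℝ) 1 := ⟨ht.1, ht.2.trans y.2.2⟩
      calc _ ≤ K * |IccExtend zero_le_one u t - IccExtend zero_le_one v t| := by
            simpa only [← Real.dist_eq] using hf.dist_le_mul _ _
        _ ≤ K * ((c * K) ^ n * t ^ n / n.factorial * dist g h) := by
            rw [IccExtend_of_mem _ _ ht', IccExtend_of_mem _ _ ht']
            exact mul_le_mul_of_nonneg_left (ih ⟨t, ht'⟩) K.2
        _ = B * t ^ n := by ring
    rw [Function.iterate_succ_apply', Function.iterate_succ_apply', picard_apply, picard_apply]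
    refine (abs_shoot_sub_shoot_le hc (f.continuous.comp u.continuous.Icc_extend')
      (f.continuous.comp v.continuous.Icc_extend') y.2
      (Continuous.intervalIntegrable (by fun_prop) _ _) hFG).trans_eq ?_
    rw [intervalIntegral.integral_const_mul, integral_pow, Nat.factorial_succ]
    simp only [B]
    push_cast
    field_simp
    ring

lemma dist_picard_iterate_le (hc : 0 ≤ c) (hf : LipschitzWith K f) (n : ℕ)
    (g h : C(Icc (0:ℝ) 1, ℝ)) :
    dist ((picard c f a)^[n] g) ((picard c f a)^[n] h) ≤ (c * K) ^ n / n.factorial * dist g h := by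
  refine (ContinuousMap.dist_le (by positivity)).2 fun y => ?_
  rw [Real.dist_eq]
  refine (abs_picard_iterate_sub_le hc hf n g h y).trans ?_
  rw [mul_div_right_comm]
  gcongr
  exact mul_le_of_le_one_right (by positivity) (pow_le_one₀ y.2.1 y.2.2)

lemma lipschitzWith_picard (hc : 0 ≤ c) (hf : LipschitzWith K f) :
    LipschitzWith (c * K).toNNReal (picard c f a) :=
  LipschitzWith.of_dist_le' fun g h => by
    simpa using dist_picard_iterate_le hc hf 1 g h (a := a)

lemma exists_continuous_isFixedPt_picard (hc : 0 ≤ c) (hf : LipschitzWith K f) :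
    ∃ x : ℝ → C(Icc (0:ℝ) 1, ℝ), Continuous x ∧ ∀ a, IsFixedPt (picard c f a) (x a) := by
  obtain ⟨n, hn⟩ : ∃ n : ℕ, (c * K) ^ n / n.factorial < 1 :=
    ((FloorSemiring.tendsto_pow_div_factorial_atTop _).eventually_lt_const one_pos).exists
  have hT : ∀ a, ContractingWith ((c * K) ^ n / n.factorial).toNNReal (picard c f a)^[n] :=
    fun a => ⟨Real.toNNReal_lt_one.2 hn,
      LipschitzWith.of_dist_le' (dist_picard_iterate_le hc hf n)⟩
  refine ⟨fun a => ContractingWith.fixedPoint _ (hT a), ?_,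
    fun a => (hT a).isFixedPt_fixedPoint_iterate⟩
  set S := ∑ k ∈ Finset.range n, ((c * K).toNNReal : ℝ) ^ k
  refine (LipschitzWith.of_dist_le' (K := S / (1 - ((c * K) ^ n / n.factorial).toNNReal))
    fun a b => ?_).continuous
  rw [Real.dist_eq, div_mul_eq_mul_div]
  exact (hT a).dist_fixedPoint_fixedPoint_of_dist_le' _ (hT a).fixedPoint_isFixedPt
    (hT b).fixedPoint_isFixedPt
    (dist_iterate_iterate_le (lipschitzWith_picard hc hf) (dist_picard_picard_le b) n)

lemma exists_isFixedPt_picard_shoot_one_eq (hc : 0 ≤ c) (hf : LipschitzWith K f)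
    (hfM : ∀ t, |f t| ≤ M) (b : ℝ) :
    ∃ a g, IsFixedPt (picard c f a) g ∧ shoot c a (f ∘ IccExtend zero_le_one g) 1 = b := by
  obtain ⟨x, hxc, hx⟩ := exists_continuous_isFixedPt_picard hc hf
  let one : Icc (0:ℝ) 1 := ⟨1, right_mem_Icc.2 zero_le_one⟩
  have hφ : ∀ a, x a one = shoot c a (f ∘ IccExtend zero_le_one (x a)) 1 :=
    fun a => (DFunLike.congr_fun (hx a) one).symm
  obtain ⟨a, ha⟩ := surjective_of_abs_sub_le ((continuous_eval_const one).comp hxc)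
    (fun a => (hφ a).symm ▸ abs_shoot_one_sub_le (fun t _ => hfM _) hc
      (f.continuous.comp (x a).continuous.Icc_extend')) b
  exact ⟨a, x a, hx a, (hφ a).symm.trans ha⟩

end

end Shooting

open Shooting

theorem stmt_4_general (𝔠 s : ℝ) (h𝔠 : 0 < 𝔠)
    (fhat : ℝ → ℝ) (K M : ℝ) (hK : 0 ≤ K)
    (hlip : ∀ t t' : ℝ, |fhat t - fhat t'| ≤ K * |t - t'|)
    (hMbd : ∀ t : ℝ, |fhat t| ≤ M) :
    ∃ ρ ρ' ρ'' : ℝ → ℝ,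
      (∀ y ∈ Set.Icc (0:ℝ) 1, HasDerivAt ρ (ρ' y) y)
      ∧ (∀ y ∈ Set.Icc (0:ℝ) 1, HasDerivAt ρ' (ρ'' y) y)
      ∧ ContinuousOn ρ'' (Set.Icc 0 1)
      ∧ (∀ y ∈ Set.Icc (0:ℝ) 1, ρ'' y = s ^ 2 * fhat (ρ y))
      ∧ ρ 0 = 0 ∧ ρ 1 = 𝔠
      ∧ (∀ y ∈ Set.Icc (0:ℝ) 1,
          |ρ y| + |ρ' y| + |ρ'' y| ≤ 13 * s ^ 2 / 8 * M + 2 * 𝔠)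
      ∧ (∀ y ∈ Set.Icc (0:ℝ) 1, ∀ y' ∈ Set.Icc (0:ℝ) 1,
          |ρ'' y - ρ'' y'| ≤ s ^ 2 * K * (13 * s ^ 2 / 8 * M + 2 * 𝔠) * |y - y'|) := by
  have hM : 0 ≤ M := (abs_nonneg _).trans (hMbd 0)
  have hc : 0 ≤ s ^ 2 := sq_nonneg s
  have hf : LipschitzWith K.toNNReal fhat := LipschitzWith.of_dist_le' hlip
  obtain ⟨a, g, hg, hρ1 : shoot (s ^ 2) a (fhat ∘ IccExtend zero_le_one g) 1 = 𝔠⟩ :=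
    exists_isFixedPt_picard_shoot_one_eq (f := ⟨fhat, hf.continuous⟩) hc hf hMbd 𝔠
  set F : ℝ → ℝ := fhat ∘ IccExtend zero_le_one g
  have hF : Continuous F := hf.continuous.comp g.continuous.Icc_extend'
  have hFM : ∀ t ∈ Icc (0:ℝ) 1, |F t| ≤ M := fun t _ => hMbd _
  have hFρ : ∀ y ∈ Icc (0:ℝ) 1, F y = fhat (shoot (s ^ 2) a F y) :=
    fun y hy => congrArg fhat (IccExtend_eq_shoot_of_isFixedPt hg hy)
  have hρ1_abs : |shoot (s ^ 2) a F 1| = 𝔠 := by rw [hρ1, abs_of_pos h𝔠]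
  refine ⟨shoot (s ^ 2) a F, fun y => a + s ^ 2 * ∫ t in (0:ℝ)..y, F t, fun y => s ^ 2 * F y,
    fun y _ => hasDerivAt_shoot hF y,
    fun y _ => ((hF.integral_hasStrictDerivAt 0 y).hasDerivAt.const_mul _).const_add a,
    (continuous_const.mul hF).continuousOn, fun y hy => congrArg (s ^ 2 * ·) (hFρ y hy),
    shoot_zero, hρ1, fun y hy => ?_, fun y hy y' hy' => ?_⟩
  · simpa only [hρ1_abs, mul_comm 2] using abs_shoot_add_abs_deriv_add_abs_le hFM hy hc hF (a := a)
  · refine (abs_mul_sub_mul_le_of_eq_comp_shoot hFM hc hF hK hlip hFρ hy hy').trans ?_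
    rw [hρ1_abs]
    gcongr s ^ 2 * K * ?_ * _
    linarith [mul_nonneg hc hM]

/-- Existence of a `C²` solution to the two-point boundary value problem
`ρ'' = s² f̂(ρ)`, `ρ(0) = 0`, `ρ(1) = 𝔠`, with the `C²` bound
`‖ρ‖_{C²} ≤ (13 s²/8) sup|f̂| + 2𝔠` and Lipschitz continuity of `ρ''` with
constant `s² Lip(f̂) ((13 s²/8) sup|f̂| + 2𝔠)`. -/
theorem stmt_4 (𝔠 s : ℝ) (h𝔠 : 0 < 𝔠) (hs : 0 < s)
    (fhat : ℝ → ℝ) (K M : ℝ) (hK : 0 ≤ K)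
    (hlip : ∀ t t' : ℝ, |fhat t - fhat t'| ≤ K * |t - t'|)
    (hMbd : ∀ t : ℝ, |fhat t| ≤ M) :
    ∃ ρ ρ' ρ'' : ℝ → ℝ,
      (∀ y ∈ Set.Icc (0:ℝ) 1, HasDerivAt ρ (ρ' y) y)
      ∧ (∀ y ∈ Set.Icc (0:ℝ) 1, HasDerivAt ρ' (ρ'' y) y)
      ∧ ContinuousOn ρ'' (Set.Icc 0 1)
      ∧ (∀ y ∈ Set.Icc (0:ℝ) 1, ρ'' y = s ^ 2 * fhat (ρ y))
      ∧ ρ 0 = 0 ∧ ρ 1 = 𝔠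
      ∧ (∀ y ∈ Set.Icc (0:ℝ) 1,
          |ρ y| + |ρ' y| + |ρ'' y| ≤ 13 * s ^ 2 / 8 * M + 2 * 𝔠)
      ∧ (∀ y ∈ Set.Icc (0:ℝ) 1, ∀ y' ∈ Set.Icc (0:ℝ) 1,
          |ρ'' y - ρ'' y'| ≤ s ^ 2 * K * (13 * s ^ 2 / 8 * M + 2 * 𝔠) * |y - y'|) :=
  stmt_4_general 𝔠 s h𝔠 fhat K M hK hlip hMbd
end

section
/- Let f̂ : ℝ → ℝ be bounded Lipschitz and s > 0. The map T on C²([0,1]) defined by (Tρ)(y) = ∫₀¹ s² G(ξ, y) f̂(ρ(ξ)) dξ + 𝔠 y (with G the Green kernel of the interval) is Lipschitz with ‖Tρ - Tϱ‖_{C²[0,1]} ≤ (13 s² Lip(f̂)/8) ‖ρ - ϱ‖_{C²[0,1]}. -/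
open Set intervalIntegral

/-!
Splitting the Green integral at `ξ = y` writes the potential of `h = f̂ ∘ ρ` as
`(y - 1) ∫₀^y ξ h + y ∫_y^1 (ξ - 1) h`, whose derivative is `∫₀^y ξ h + ∫_y^1 (ξ - 1) h` and
whose second derivative is `h` on `(0, 1)`. Since `T` is affine in `h`, `Tρ - Tϱ` is `s²` times
the potential of `f̂ ∘ ρ - f̂ ∘ ϱ`, which is bounded by `Lip(f̂) ‖ρ - ϱ‖`. The three kernels have
`L¹` norms `y (1 - y) / 2 ≤ 1/8`, `(y² + (1 - y)²) / 2 ≤ 1/2` and `1`, and `1/8 + 1/2 + 1 = 13/8`.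
-/
theorem deriv_eq_zero_of_eqOn_const {𝕜 F : Type*} [NontriviallyNormedField 𝕜]
    [NormedAddCommGroup F] [NormedSpace 𝕜 F] {f : 𝕜 → F} {s : Set 𝕜} {x : 𝕜} {c : F}
    (hs : UniqueDiffWithinAt 𝕜 s x) (hx : x ∈ s) (hf : EqOn f (fun _ => c) s) :
    deriv f x = 0 := by
  by_cases hd : DifferentiableAt 𝕜 f x
  · rw [← hd.derivWithin hs, derivWithin_congr hf (hf hx)]
    exact congrFun (derivWithin_const s c) x
  · exact deriv_zero_of_not_differentiableAt hd

theorem continuous_of_abs_sub_le_mul {f : ℝ → ℝ} {K : ℝ} (hK : 0 ≤ K)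
    (hf : ∀ t t', |f t - f t'| ≤ K * |t - t'|) : Continuous f :=
  (LipschitzWith.of_dist_le_mul (K := K.toNNReal) fun t t' => by
    simpa only [Real.dist_eq, Real.coe_toNNReal K hK] using hf t t').continuous

theorem intervalIntegrable_mul_of_mem_Icc {k h : ℝ → ℝ} (hk : Continuous k)
    (hh : ContinuousOn h (Icc 0 1)) {a b : ℝ} (ha : a ∈ Icc (0 : ℝ) 1) (hb : b ∈ Icc (0 : ℝ) 1) :
    IntervalIntegrable (fun ξ => k ξ * h ξ) MeasureTheory.volume a b :=
  (hk.continuousOn.mul (hh.mono (uIcc_subset_Icc ha hb))).intervalIntegrable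

theorem abs_integral_id_mul_le {h : ℝ → ℝ} {B y : ℝ} (hy : 0 ≤ y)
    (hB : ∀ ξ ∈ Icc 0 y, |h ξ| ≤ B) : |∫ ξ in (0 : ℝ)..y, ξ * h ξ| ≤ B * (y ^ 2 / 2) := by
  have hbound : ∀ ξ ∈ Ioc 0 y, ‖ξ * h ξ‖ ≤ B * ξ := fun ξ hξ => by
    rw [Real.norm_eq_abs, abs_mul, abs_of_pos hξ.1, mul_comm]
    exact mul_le_mul_of_nonneg_right (hB ξ (Ioc_subset_Icc_self hξ)) hξ.1.le
  calc |∫ ξ in (0 : ℝ)..y, ξ * h ξ| ≤ ∫ ξ in (0 : ℝ)..y, B * ξ :=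
        norm_integral_le_of_norm_le hy (.of_forall hbound)
          ((by fun_prop : Continuous fun ξ : ℝ => B * ξ).intervalIntegrable _ _)
    _ = B * (y ^ 2 / 2) := by rw [integral_const_mul, integral_id]; ring

theorem abs_integral_sub_one_mul_le {h : ℝ → ℝ} {B y : ℝ} (hy : y ≤ 1)
    (hB : ∀ ξ ∈ Icc y 1, |h ξ| ≤ B) :
    |∫ ξ in y..(1 : ℝ), (ξ - 1) * h ξ| ≤ B * ((1 - y) ^ 2 / 2) := by
  have hbound : ∀ ξ ∈ Ioc y 1, ‖(ξ - 1) * h ξ‖ ≤ B * (1 - ξ) := fun ξ hξ => by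
    rw [Real.norm_eq_abs, abs_mul, abs_of_nonpos (by linarith [hξ.2]), neg_sub, mul_comm]
    exact mul_le_mul_of_nonneg_right (hB ξ (Ioc_subset_Icc_self hξ)) (by linarith [hξ.2])
  calc |∫ ξ in y..(1 : ℝ), (ξ - 1) * h ξ| ≤ ∫ ξ in y..(1 : ℝ), B * (1 - ξ) :=
        norm_integral_le_of_norm_le hy (.of_forall hbound)
          ((by fun_prop : Continuous fun ξ : ℝ => B * (1 - ξ)).intervalIntegrable _ _)
    _ = B * ((1 - y) ^ 2 / 2) := by
      rw [integral_const_mul, integral_sub intervalIntegrable_const intervalIntegrable_id,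
        integral_const, integral_id, smul_eq_mul]
      ring

noncomputable def green (ξ y : ℝ) : ℝ := if ξ ≤ y then ξ * (y - 1) else y * (ξ - 1)

theorem green_of_le {ξ y : ℝ} (h : ξ ≤ y) : green ξ y = ξ * (y - 1) := if_pos h

theorem green_of_ge {ξ y : ℝ} (h : y ≤ ξ) : green ξ y = y * (ξ - 1) := by
  rcases h.eq_or_lt with rfl | h
  · exact green_of_le le_rfl
  · exact if_neg h.not_ge

theorem continuous_green_left (y : ℝ) : Continuous fun ξ => green ξ y :=
  Continuous.if_le (by fun_prop) (by fun_prop) continuous_id continuous_const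
    fun ξ h => by rw [h]

noncomputable def greenPot (h : ℝ → ℝ) (y : ℝ) : ℝ := ∫ ξ in (0 : ℝ)..1, green ξ y * h ξ

noncomputable def greenSlope (h : ℝ → ℝ) (y : ℝ) : ℝ :=
  (∫ ξ in (0 : ℝ)..y, ξ * h ξ) + ∫ ξ in y..(1 : ℝ), (ξ - 1) * h ξ

section GreenPotential

variable {h : ℝ → ℝ} {y : ℝ}

theorem greenPot_eq_of_nonpos (hy : y ≤ 0) : greenPot h y = y * greenSlope h 0 := by
  rw [greenPot, greenSlope, integral_same, zero_add, ← integral_const_mul]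
  refine integral_congr fun ξ hξ => ?_
  rw [uIcc_of_le zero_le_one] at hξ
  rw [green_of_ge (hy.trans hξ.1), mul_assoc]

theorem greenPot_eq_of_one_le (hy : 1 ≤ y) : greenPot h y = (y - 1) * greenSlope h 1 := by
  rw [greenPot, greenSlope, integral_same, add_zero, ← integral_const_mul]
  refine integral_congr fun ξ hξ => ?_
  rw [uIcc_of_le zero_le_one] at hξ
  rw [green_of_le (hξ.2.trans hy)]
  ring

theorem greenPot_eq_of_mem_Icc (hh : ContinuousOn h (Icc 0 1)) (hy : y ∈ Icc (0 : ℝ) 1) :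
    greenPot h y
      = (y - 1) * (∫ ξ in (0 : ℝ)..y, ξ * h ξ) + y * ∫ ξ in y..(1 : ℝ), (ξ - 1) * h ξ := by
  have h0 : (0 : ℝ) ∈ Icc (0 : ℝ) 1 := left_mem_Icc.2 zero_le_one
  have h1 : (1 : ℝ) ∈ Icc (0 : ℝ) 1 := right_mem_Icc.2 zero_le_one
  have hG := continuous_green_left y
  rw [greenPot, ← integral_add_adjacent_intervals (intervalIntegrable_mul_of_mem_Icc hG hh h0 hy)
    (intervalIntegrable_mul_of_mem_Icc hG hh hy h1), ← integral_const_mul, ← integral_const_mul]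
  congr 1
  · refine integral_congr fun ξ hξ => ?_
    rw [uIcc_of_le hy.1] at hξ
    rw [green_of_le hξ.2]
    ring
  · refine integral_congr fun ξ hξ => ?_
    rw [uIcc_of_le hy.2] at hξ
    rw [green_of_ge hξ.1]
    ring

theorem hasDerivWithinAt_greenPot_Icc (hh : ContinuousOn h (Icc 0 1)) (hy : y ∈ Icc (0 : ℝ) 1) :
    HasDerivWithinAt (greenPot h) (greenSlope h y) (Icc 0 1) y := by
  -- needed by the `FTCFilter` instance for `𝓝[Icc 0 1] y`
  have : Fact (y ∈ Icc (0 : ℝ) 1) := ⟨hy⟩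
  have hc₁ : ContinuousOn (fun ξ => ξ * h ξ) (Icc 0 1) := continuousOn_id.mul hh
  have hc₂ : ContinuousOn (fun ξ => (ξ - 1) * h ξ) (Icc 0 1) :=
    (continuousOn_id.sub continuousOn_const).mul hh
  have hA : HasDerivWithinAt (fun u => ∫ ξ in (0 : ℝ)..u, ξ * h ξ) (y * h y) (Icc 0 1) y :=
    integral_hasDerivWithinAt_right
      (intervalIntegrable_mul_of_mem_Icc continuous_id hh (left_mem_Icc.2 zero_le_one) hy)
      (hc₁.stronglyMeasurableAtFilter_nhdsWithin measurableSet_Icc y) (hc₁ y hy)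
  have hB : HasDerivWithinAt (fun u => ∫ ξ in u..(1 : ℝ), (ξ - 1) * h ξ) (-((y - 1) * h y))
      (Icc 0 1) y :=
    integral_hasDerivWithinAt_left
      (intervalIntegrable_mul_of_mem_Icc (by fun_prop) hh hy (right_mem_Icc.2 zero_le_one))
      (hc₂.stronglyMeasurableAtFilter_nhdsWithin measurableSet_Icc y) (hc₂ y hy)
  have hid : HasDerivWithinAt (fun u : ℝ => u) 1 (Icc 0 1) y := (hasDerivAt_id y).hasDerivWithinAt
  refine ((((hid.sub_const 1).mul hA).add (hid.mul hB)).congr_deriv ?_).congr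
    (fun x hx => greenPot_eq_of_mem_Icc hh hx) (greenPot_eq_of_mem_Icc hh hy)
  rw [greenSlope]
  ring

theorem hasDerivAt_greenPot_of_mem_Icc (hh : ContinuousOn h (Icc 0 1)) (hy : y ∈ Icc (0 : ℝ) 1) :
    HasDerivAt (greenPot h) (greenSlope h y) y := by
  have hIcc := hasDerivWithinAt_greenPot_Icc hh hy
  rcases hy.1.eq_or_lt with rfl | h₀
  · have hIic : HasDerivWithinAt (greenPot h) (greenSlope h 0) (Iic 0) 0 :=
      (hasDerivAt_mul_const _).hasDerivWithinAt.congr (fun _ hx => greenPot_eq_of_nonpos hx)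
        (greenPot_eq_of_nonpos le_rfl)
    refine (hIic.union hIcc).hasDerivAt ?_
    rw [Iic_union_Icc_eq_Iic zero_le_one]
    exact Iic_mem_nhds one_pos
  rcases hy.2.eq_or_lt with rfl | h₁
  · have hIci : HasDerivWithinAt (greenPot h) (greenSlope h 1) (Ici 1) 1 := by
      have hlin : HasDerivAt (fun x => (x - 1) * greenSlope h 1) (greenSlope h 1) 1 := by
        simpa using ((hasDerivAt_id (1 : ℝ)).sub_const 1).mul_const (greenSlope h 1)
      exact hlin.hasDerivWithinAt.congr (fun _ hx => greenPot_eq_of_one_le hx)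
        (greenPot_eq_of_one_le le_rfl)
    refine (hIcc.union hIci).hasDerivAt ?_
    rw [Icc_union_Ici_eq_Ici zero_le_one]
    exact Ici_mem_nhds one_pos
  exact hIcc.hasDerivAt (Icc_mem_nhds h₀ h₁)

theorem hasDerivAt_greenPot_of_neg (hy : y < 0) : HasDerivAt (greenPot h) (greenSlope h 0) y :=
  (hasDerivAt_mul_const _).congr_of_eventuallyEq <|
    Filter.eventually_of_mem (Iio_mem_nhds hy) fun _ hx => greenPot_eq_of_nonpos (le_of_lt hx)

theorem hasDerivAt_greenPot_of_one_lt (hy : 1 < y) :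
    HasDerivAt (greenPot h) (greenSlope h 1) y := by
  have hlin : HasDerivAt (fun x => (x - 1) * greenSlope h 1) (greenSlope h 1) y := by
    simpa using ((hasDerivAt_id y).sub_const 1).mul_const (greenSlope h 1)
  exact hlin.congr_of_eventuallyEq <|
    Filter.eventually_of_mem (Ioi_mem_nhds hy) fun _ hx => greenPot_eq_of_one_le (le_of_lt hx)

theorem differentiable_greenPot (hh : ContinuousOn h (Icc 0 1)) : Differentiable ℝ (greenPot h) :=
  fun y => by
    rcases lt_or_ge y 0 with hy | hy₀
    · exact (hasDerivAt_greenPot_of_neg hy).differentiableAt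
    rcases le_or_gt y 1 with hy₁ | hy
    · exact (hasDerivAt_greenPot_of_mem_Icc hh ⟨hy₀, hy₁⟩).differentiableAt
    · exact (hasDerivAt_greenPot_of_one_lt hy).differentiableAt

theorem hasDerivAt_greenSlope (hh : ContinuousOn h (Icc 0 1)) (hy : y ∈ Ioo (0 : ℝ) 1) :
    HasDerivAt (greenSlope h) (h y) y := by
  have hyI : y ∈ Icc (0 : ℝ) 1 := Ioo_subset_Icc_self hy
  have hhy : ContinuousAt h y := hh.continuousAt (Icc_mem_nhds hy.1 hy.2)
  have hc₁ : ContinuousOn (fun ξ => ξ * h ξ) (Ioo 0 1) :=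
    (continuousOn_id.mul hh).mono Ioo_subset_Icc_self
  have hc₂ : ContinuousOn (fun ξ => (ξ - 1) * h ξ) (Ioo 0 1) :=
    ((continuousOn_id.sub continuousOn_const).mul hh).mono Ioo_subset_Icc_self
  have hA : HasDerivAt (fun u => ∫ ξ in (0 : ℝ)..u, ξ * h ξ) (y * h y) y :=
    integral_hasDerivAt_right
      (intervalIntegrable_mul_of_mem_Icc continuous_id hh (left_mem_Icc.2 zero_le_one) hyI)
      (hc₁.stronglyMeasurableAtFilter isOpen_Ioo y hy) (continuousAt_id.mul hhy)
  have hB : HasDerivAt (fun u => ∫ ξ in u..(1 : ℝ), (ξ - 1) * h ξ) (-((y - 1) * h y)) y :=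
    integral_hasDerivAt_left
      (intervalIntegrable_mul_of_mem_Icc (by fun_prop) hh hyI (right_mem_Icc.2 zero_le_one))
      (hc₂.stronglyMeasurableAtFilter isOpen_Ioo y hy)
      ((continuousAt_id.sub continuousAt_const).mul hhy)
  exact (hA.add hB).congr_deriv (by ring)

/-- At `y = 0` and `y = 1` the first derivative is constant on one side, so `deriv` returns `0`
there whether or not the second derivative exists. -/
theorem deriv_deriv_greenPot (hh : ContinuousOn h (Icc 0 1)) (hy : y ∈ Icc (0 : ℝ) 1) :
    deriv (deriv (greenPot h)) y = (Ioo 0 1).indicator h y := by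
  by_cases hyo : y ∈ Ioo (0 : ℝ) 1
  · rw [indicator_of_mem hyo]
    have hslope : deriv (greenPot h) =ᶠ[nhds y] greenSlope h :=
      Filter.eventually_of_mem (isOpen_Ioo.mem_nhds hyo) fun z hz =>
        (hasDerivAt_greenPot_of_mem_Icc hh (Ioo_subset_Icc_self hz)).deriv
    rw [hslope.deriv_eq, (hasDerivAt_greenSlope hh hyo).deriv]
  rw [indicator_of_notMem hyo]
  rcases hy.1.eq_or_lt with rfl | h₀
  · refine deriv_eq_zero_of_eqOn_const (c := greenSlope h 0) (uniqueDiffWithinAt_Iic 0)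
      self_mem_Iic fun x hx => ?_
    rcases (mem_Iic.1 hx).eq_or_lt with rfl | hx
    · exact (hasDerivAt_greenPot_of_mem_Icc hh (left_mem_Icc.2 zero_le_one)).deriv
    · exact (hasDerivAt_greenPot_of_neg hx).deriv
  · have h₁ : y = 1 := by_contra fun h₁ => hyo ⟨h₀, lt_of_le_of_ne hy.2 h₁⟩
    subst h₁
    refine deriv_eq_zero_of_eqOn_const (c := greenSlope h 1) (uniqueDiffWithinAt_Ici 1)
      self_mem_Ici fun x hx => ?_
    rcases (mem_Ici.1 hx).eq_or_lt with rfl | hx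
    · exact (hasDerivAt_greenPot_of_mem_Icc hh (right_mem_Icc.2 zero_le_one)).deriv
    · exact (hasDerivAt_greenPot_of_one_lt hx).deriv

theorem abs_greenPot_le (hh : ContinuousOn h (Icc 0 1)) {B : ℝ}
    (hB : ∀ ξ ∈ Icc (0 : ℝ) 1, |h ξ| ≤ B) (hy : y ∈ Icc (0 : ℝ) 1) : |greenPot h y| ≤ B / 8 := by
  have hA := abs_integral_id_mul_le hy.1 fun ξ hξ => hB ξ ⟨hξ.1, hξ.2.trans hy.2⟩
  have hC := abs_integral_sub_one_mul_le hy.2 fun ξ hξ => hB ξ ⟨hy.1.trans hξ.1, hξ.2⟩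
  have hB₀ : 0 ≤ B := (abs_nonneg _).trans (hB 0 (left_mem_Icc.2 zero_le_one))
  rw [greenPot_eq_of_mem_Icc hh hy]
  calc _ ≤ (1 - y) * (B * (y ^ 2 / 2)) + y * (B * ((1 - y) ^ 2 / 2)) := by
        refine (abs_add_le _ _).trans (add_le_add ?_ ?_)
        · rw [abs_mul, abs_of_nonpos (by linarith [hy.2]), neg_sub]
          exact mul_le_mul_of_nonneg_left hA (by linarith [hy.2])
        · rw [abs_mul, abs_of_nonneg hy.1]
          exact mul_le_mul_of_nonneg_left hC hy.1
    _ = B * (y * (1 - y)) / 2 := by ring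
    _ ≤ B / 8 := by nlinarith [mul_nonneg hB₀ (sq_nonneg (2 * y - 1))]

theorem abs_greenSlope_le {B : ℝ} (hB : ∀ ξ ∈ Icc (0 : ℝ) 1, |h ξ| ≤ B)
    (hy : y ∈ Icc (0 : ℝ) 1) : |greenSlope h y| ≤ B / 2 := by
  have hA := abs_integral_id_mul_le hy.1 fun ξ hξ => hB ξ ⟨hξ.1, hξ.2.trans hy.2⟩
  have hC := abs_integral_sub_one_mul_le hy.2 fun ξ hξ => hB ξ ⟨hy.1.trans hξ.1, hξ.2⟩
  have hB₀ : 0 ≤ B := (abs_nonneg _).trans (hB 0 (left_mem_Icc.2 zero_le_one))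
  calc |greenSlope h y| ≤ B * (y ^ 2 / 2) + B * ((1 - y) ^ 2 / 2) :=
        (abs_add_le _ _).trans (add_le_add hA hC)
    _ ≤ B / 2 := by nlinarith [mul_nonneg hB₀ (mul_nonneg hy.1 (sub_nonneg.2 hy.2))]

theorem greenPot_c2_le (hh : ContinuousOn h (Icc 0 1)) {B : ℝ}
    (hB : ∀ ξ ∈ Icc (0 : ℝ) 1, |h ξ| ≤ B) (hy : y ∈ Icc (0 : ℝ) 1) :
    |greenPot h y| + |deriv (greenPot h) y| + |deriv (deriv (greenPot h)) y| ≤ 13 / 8 * B := by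
  have hB₀ : 0 ≤ B := (abs_nonneg _).trans (hB 0 (left_mem_Icc.2 zero_le_one))
  have h₂ : |(Ioo 0 1).indicator h y| ≤ B := by
    by_cases hyo : y ∈ Ioo (0 : ℝ) 1
    · rw [indicator_of_mem hyo]; exact hB y hy
    · rw [indicator_of_notMem hyo, abs_zero]; exact hB₀
  rw [(hasDerivAt_greenPot_of_mem_Icc hh hy).deriv, deriv_deriv_greenPot hh hy]
  linarith [abs_greenPot_le hh hB hy, abs_greenSlope_le hB hy]

end GreenPotential

section GreenMap

variable {f g h : ℝ → ℝ} {a c y : ℝ}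

theorem greenPot_sub (hf : ContinuousOn f (Icc 0 1)) (hg : ContinuousOn g (Icc 0 1)) :
    greenPot (f - g) = greenPot f - greenPot g := by
  have h₀ : (0 : ℝ) ∈ Icc (0 : ℝ) 1 := left_mem_Icc.2 zero_le_one
  have h₁ : (1 : ℝ) ∈ Icc (0 : ℝ) 1 := right_mem_Icc.2 zero_le_one
  funext y
  rw [Pi.sub_apply, greenPot, greenPot, greenPot, ← integral_sub
    (intervalIntegrable_mul_of_mem_Icc (continuous_green_left y) hf h₀ h₁)
    (intervalIntegrable_mul_of_mem_Icc (continuous_green_left y) hg h₀ h₁)]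
  simp only [Pi.sub_apply, mul_sub]

noncomputable def greenMap (a c : ℝ) (h : ℝ → ℝ) (y : ℝ) : ℝ := a * greenPot h y + c * y

theorem deriv_greenMap (hh : ContinuousOn h (Icc 0 1)) :
    deriv (greenMap a c h) = fun y => a * deriv (greenPot h) y + c := by
  funext y
  exact (((differentiable_greenPot hh y).hasDerivAt.const_mul a).add
    (((hasDerivAt_id y).const_mul c).congr_deriv (mul_one c))).deriv

theorem deriv_deriv_greenMap (hh : ContinuousOn h (Icc 0 1)) :
    deriv (deriv (greenMap a c h)) = fun y => a * deriv (deriv (greenPot h)) y := by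
  rw [deriv_greenMap hh]
  funext y
  rw [deriv_add_const, deriv_const_mul_field']

theorem greenMap_c2_dist_le (hf : ContinuousOn f (Icc 0 1)) (hg : ContinuousOn g (Icc 0 1))
    {B : ℝ} (hB : ∀ ξ ∈ Icc (0 : ℝ) 1, |f ξ - g ξ| ≤ B) (hy : y ∈ Icc (0 : ℝ) 1) :
    |greenMap a c f y - greenMap a c g y| + |deriv (greenMap a c f) y - deriv (greenMap a c g) y|
      + |deriv (deriv (greenMap a c f)) y - deriv (deriv (greenMap a c g)) y|
      ≤ |a| * (13 / 8 * B) := by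
  have hfg := hf.sub hg
  have e₀ : greenMap a c f y - greenMap a c g y = a * greenPot (f - g) y := by
    rw [greenPot_sub hf hg, greenMap, greenMap, Pi.sub_apply]
    ring
  have e₁ : deriv (greenMap a c f) y - deriv (greenMap a c g) y
      = a * deriv (greenPot (f - g)) y := by
    rw [deriv_greenMap hf, deriv_greenMap hg, greenPot_sub hf hg,
      deriv_sub (differentiable_greenPot hf y) (differentiable_greenPot hg y)]
    ring
  have e₂ : deriv (deriv (greenMap a c f)) y - deriv (deriv (greenMap a c g)) y
      = a * deriv (deriv (greenPot (f - g))) y := by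
    rw [deriv_deriv_greenMap hf, deriv_deriv_greenMap hg]
    dsimp only
    rw [deriv_deriv_greenPot hfg hy, deriv_deriv_greenPot hf hy, deriv_deriv_greenPot hg hy,
      indicator_sub', Pi.sub_apply]
    ring
  rw [e₀, e₁, e₂, abs_mul, abs_mul, abs_mul, ← mul_add, ← mul_add]
  exact mul_le_mul_of_nonneg_left (greenPot_c2_le hfg hB hy) (abs_nonneg a)

end GreenMap

theorem stmt_6_general (𝔠 s : ℝ) (fhat : ℝ → ℝ) (K : ℝ) (hK : 0 ≤ K)
    (hlip : ∀ t t' : ℝ, |fhat t - fhat t'| ≤ K * |t - t'|)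
    (G : ℝ → ℝ → ℝ)
    (hG : ∀ ξ y : ℝ, G ξ y = if ξ ≤ y then ξ * (y - 1) else y * (ξ - 1))
    (T : (ℝ → ℝ) → (ℝ → ℝ))
    (hT : ∀ (ρ : ℝ → ℝ) (y : ℝ),
      T ρ y = (∫ ξ in (0:ℝ)..1, s ^ 2 * G ξ y * fhat (ρ ξ)) + 𝔠 * y)
    (ρ ϱ ρ' ρ'' ϱ' ϱ'' : ℝ → ℝ)
    (hρ1 : ∀ y ∈ Set.Icc (0:ℝ) 1, HasDerivAt ρ (ρ' y) y)
    (hϱ1 : ∀ y ∈ Set.Icc (0:ℝ) 1, HasDerivAt ϱ (ϱ' y) y)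
    (N : ℝ)
    (hN : ∀ y ∈ Set.Icc (0:ℝ) 1,
      |ρ y - ϱ y| + |ρ' y - ϱ' y| + |ρ'' y - ϱ'' y| ≤ N) :
    ∀ y ∈ Set.Icc (0:ℝ) 1,
      |T ρ y - T ϱ y| + |deriv (T ρ) y - deriv (T ϱ) y|
        + |deriv (deriv (T ρ)) y - deriv (deriv (T ϱ)) y|
      ≤ 13 * s ^ 2 * K / 8 * N := by
  have hT' : ∀ φ, T φ = greenMap (s ^ 2) 𝔠 (fhat ∘ φ) := fun φ => funext fun y => by
    simp only [hT, hG, greenMap, greenPot, green, ← integral_const_mul, mul_assoc, Function.comp]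
  have hfhat := continuous_of_abs_sub_le_mul hK hlip
  have hcont : ∀ φ φ' : ℝ → ℝ, (∀ y ∈ Icc (0 : ℝ) 1, HasDerivAt φ (φ' y) y) →
      ContinuousOn (fhat ∘ φ) (Icc 0 1) := fun φ φ' hφ =>
    hfhat.comp_continuousOn fun y hy => (hφ y hy).continuousAt.continuousWithinAt
  have hdist : ∀ ξ ∈ Icc (0 : ℝ) 1, |fhat (ρ ξ) - fhat (ϱ ξ)| ≤ K * N := fun ξ hξ =>
    (hlip _ _).trans <| mul_le_mul_of_nonneg_left (by
      linarith [hN ξ hξ, abs_nonneg (ρ' ξ - ϱ' ξ), abs_nonneg (ρ'' ξ - ϱ'' ξ)]) hK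
  intro y hy
  rw [hT', hT']
  calc _ ≤ |s ^ 2| * (13 / 8 * (K * N)) :=
        greenMap_c2_dist_le (hcont ρ ρ' hρ1) (hcont ϱ ϱ' hϱ1) hdist hy
    _ = 13 * s ^ 2 * K / 8 * N := by rw [abs_of_nonneg (sq_nonneg s)]; ring

/-- The fixed-point map `T` defined via the Green kernel of the interval,
`(Tρ)(y) = ∫₀¹ s² G(ξ,y) f̂(ρ(ξ)) dξ + 𝔠 y`, is Lipschitz on `C²([0,1])` with
constant `13 s² Lip(f̂) / 8`. -/
theorem stmt_6 (𝔠 s : ℝ) (hs : 0 < s) (fhat : ℝ → ℝ) (K : ℝ) (hK : 0 ≤ K)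
    (hlip : ∀ t t' : ℝ, |fhat t - fhat t'| ≤ K * |t - t'|)
    (hbdd : ∃ M : ℝ, ∀ t : ℝ, |fhat t| ≤ M)
    (G : ℝ → ℝ → ℝ)
    (hG : ∀ ξ y : ℝ, G ξ y = if ξ ≤ y then ξ * (y - 1) else y * (ξ - 1))
    (T : (ℝ → ℝ) → (ℝ → ℝ))
    (hT : ∀ (ρ : ℝ → ℝ) (y : ℝ),
      T ρ y = (∫ ξ in (0:ℝ)..1, s ^ 2 * G ξ y * fhat (ρ ξ)) + 𝔠 * y)
    (ρ ϱ ρ' ρ'' ϱ' ϱ'' : ℝ → ℝ)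
    (hρ1 : ∀ y ∈ Set.Icc (0:ℝ) 1, HasDerivAt ρ (ρ' y) y)
    (hρ2 : ∀ y ∈ Set.Icc (0:ℝ) 1, HasDerivAt ρ' (ρ'' y) y)
    (hρc : ContinuousOn ρ'' (Set.Icc 0 1))
    (hϱ1 : ∀ y ∈ Set.Icc (0:ℝ) 1, HasDerivAt ϱ (ϱ' y) y)
    (hϱ2 : ∀ y ∈ Set.Icc (0:ℝ) 1, HasDerivAt ϱ' (ϱ'' y) y)
    (hϱc : ContinuousOn ϱ'' (Set.Icc 0 1))
    (N : ℝ)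
    (hN : ∀ y ∈ Set.Icc (0:ℝ) 1,
      |ρ y - ϱ y| + |ρ' y - ϱ' y| + |ρ'' y - ϱ'' y| ≤ N) :
    ∀ y ∈ Set.Icc (0:ℝ) 1,
      |T ρ y - T ϱ y| + |deriv (T ρ) y - deriv (T ϱ) y|
        + |deriv (deriv (T ρ)) y - deriv (deriv (T ϱ)) y|
      ≤ 13 * s ^ 2 * K / 8 * N :=
  stmt_6_general 𝔠 s fhat K hK hlip G hG T hT ρ ϱ ρ' ρ'' ϱ' ϱ'' hρ1 hϱ1 N hN
end

section
/- Let f : [0, 𝔠] → ℝ be Lipschitz with f(0) ≤ 0 ≤ f(𝔠), let s > 0, and let f̂ denote the extension of f to ℝ with constant values f(0) on (-∞, 0] and f(𝔠) on [𝔠, ∞). If ρ ∈ C²([0,1]) solves ρ'' = s² f̂(ρ), ρ(0) = 0, ρ(1) = 𝔠, then 0 < ρ(y) < 𝔠 for all y ∈ (0,1). -/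
/-!
If `ρ y ≥ 𝔠` somewhere in `(0,1)`, then, the boundary values being at most `𝔠`, `ρ` has
an interior maximum `y₀` with `ρ y₀ ≥ 𝔠`. There `ρ' y₀ = 0` and
`ρ'' y₀ = s² f(𝔠) ≥ 0`, while the second derivative test forces `ρ'' y₀ ≤ 0`. Hence
`(ρ, ρ')` sits at an equilibrium of the Lipschitz first-order system
`(ρ, ρ')' = (ρ', s² f̂(ρ))`, so by uniqueness `ρ` is constant, contradicting `ρ 0 = 0`.
Interior minima with `ρ y₀ ≤ 0` are excluded symmetrically.
-/

open Set Filter Topology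

theorem IsLocalMax.deriv_deriv_nonpos {f : ℝ → ℝ} {x₀ : ℝ} (h : IsLocalMax f x₀)
    (hc : ContinuousAt f x₀) : deriv (deriv f) x₀ ≤ 0 := by
  by_contra! hpos
  have hconst : f =ᶠ[𝓝 x₀] fun _ => f x₀ :=
    (h.and (isLocalMin_of_deriv_deriv_pos hpos h.deriv_eq_zero hc)).mono
      fun _ hx => le_antisymm hx.1 hx.2
  have hderiv : deriv f =ᶠ[𝓝 x₀] fun _ => 0 :=
    hconst.eventuallyEq_nhds.mono fun _ hx => by rw [hx.deriv_eq, deriv_const]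
  simp [hderiv.deriv_eq] at hpos

theorem IsLocalMin.deriv_deriv_nonneg {f : ℝ → ℝ} {x₀ : ℝ} (h : IsLocalMin f x₀)
    (hc : ContinuousAt f x₀) : 0 ≤ deriv (deriv f) x₀ := by
  simpa [deriv.neg'] using h.neg.deriv_deriv_nonpos hc.neg

theorem ContinuousOn.exists_isMaxOn_mem_Ioo {f : ℝ → ℝ} {a b y : ℝ}
    (hf : ContinuousOn f (Icc a b)) (hy : y ∈ Ioo a b) (ha : f a ≤ f y) (hb : f b ≤ f y) :
    ∃ z ∈ Ioo a b, IsMaxOn f (Icc a b) z ∧ f y ≤ f z := by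
  obtain ⟨z, hz, hmax⟩ := isCompact_Icc.exists_isMaxOn (nonempty_Icc.2 (hy.1.trans hy.2).le) hf
  by_cases hz' : z ∈ Ioo a b
  · exact ⟨z, hz', hmax, hmax (Ioo_subset_Icc_self hy)⟩
  · have hfz : f z ≤ f y := by
      rcases (Icc_sdiff_Ioo_same (hy.1.trans hy.2).le ▸ ⟨hz, hz'⟩ : z ∈ ({a, b} : Set ℝ))
        with rfl | rfl <;> assumption
    exact ⟨y, hy, fun t ht => (hmax ht).trans hfz, le_rfl⟩

theorem ContinuousOn.exists_isMinOn_mem_Ioo {f : ℝ → ℝ} {a b y : ℝ}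
    (hf : ContinuousOn f (Icc a b)) (hy : y ∈ Ioo a b) (ha : f y ≤ f a) (hb : f y ≤ f b) :
    ∃ z ∈ Ioo a b, IsMinOn f (Icc a b) z ∧ f z ≤ f y := by
  obtain ⟨z, hz, hmax, hyz⟩ := hf.neg.exists_isMaxOn_mem_Ioo hy (neg_le_neg ha) (neg_le_neg hb)
  exact ⟨z, hz, isMinOn_iff.2 fun t ht => neg_le_neg_iff.1 (hmax ht), neg_le_neg_iff.1 hyz⟩

theorem ODE_solution_eqOn_const_of_apply_eq_zero {E : Type*} [NormedAddCommGroup E]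
    [NormedSpace ℝ E] {V : E → E} {L : NNReal} (hV : LipschitzWith L V) {g : ℝ → E}
    {a b t₀ : ℝ} (ht₀ : t₀ ∈ Ioo a b) (hg : ∀ t ∈ Icc a b, HasDerivAt g (V (g t)) t)
    (hV₀ : V (g t₀) = 0) : EqOn g (fun _ => g t₀) (Icc a b) :=
  ODE_solution_unique_of_mem_Icc (v := fun _ => V) (s := fun _ => univ)
    (fun _ _ => hV.lipschitzOnWith) ht₀
    (fun t ht => (hg t ht).continuousAt.continuousWithinAt)
    (fun t ht => hg t (Ioo_subset_Icc_self ht)) (fun _ _ => mem_univ _)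
    continuousOn_const (fun t _ => hV₀ ▸ hasDerivAt_const t (g t₀)) (fun _ _ => mem_univ _) rfl

section SecondOrder

variable {F : ℝ → ℝ} {L : NNReal} {ρ ρ' : ℝ → ℝ} {a b y₀ : ℝ}

theorem deriv_deriv_eq_of_hasDerivAt (hρ : ∀ y ∈ Icc a b, HasDerivAt ρ (ρ' y) y)
    (hρ' : ∀ y ∈ Icc a b, HasDerivAt ρ' (F (ρ y)) y) (hy₀ : y₀ ∈ Ioo a b) :
    deriv (deriv ρ) y₀ = F (ρ y₀) := by
  have hderiv : deriv ρ =ᶠ[𝓝 y₀] ρ' :=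
    eventually_of_mem (Icc_mem_nhds hy₀.1 hy₀.2) fun y hy => (hρ y hy).deriv
  rw [hderiv.deriv_eq, (hρ' y₀ (Ioo_subset_Icc_self hy₀)).deriv]

theorem eqOn_const_of_deriv_eq_zero_of_apply_eq_zero (hF : LipschitzWith L F)
    (hρ : ∀ y ∈ Icc a b, HasDerivAt ρ (ρ' y) y)
    (hρ' : ∀ y ∈ Icc a b, HasDerivAt ρ' (F (ρ y)) y) (hy₀ : y₀ ∈ Ioo a b)
    (hd : ρ' y₀ = 0) (hF₀ : F (ρ y₀) = 0) : EqOn ρ (fun _ => ρ y₀) (Icc a b) := by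
  have hV : LipschitzWith (max 1 (L * 1)) fun q : ℝ × ℝ => (q.2, F q.1) :=
    LipschitzWith.prod_snd.prodMk (hF.comp LipschitzWith.prod_fst)
  have hsol := ODE_solution_eqOn_const_of_apply_eq_zero hV hy₀
    (g := fun y => (ρ y, ρ' y)) (fun y hy => (hρ y hy).prodMk (hρ' y hy)) (by simp [hd, hF₀])
  exact fun y hy => congrArg Prod.fst (hsol hy)

theorem eqOn_const_of_isMaxOn (hF : LipschitzWith L F)
    (hρ : ∀ y ∈ Icc a b, HasDerivAt ρ (ρ' y) y)
    (hρ' : ∀ y ∈ Icc a b, HasDerivAt ρ' (F (ρ y)) y) (hy₀ : y₀ ∈ Ioo a b)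
    (hmax : IsMaxOn ρ (Icc a b) y₀) (hF₀ : 0 ≤ F (ρ y₀)) :
    EqOn ρ (fun _ => ρ y₀) (Icc a b) := by
  have hρy₀ := hρ y₀ (Ioo_subset_Icc_self hy₀)
  have hloc : IsLocalMax ρ y₀ := hmax.isLocalMax (Icc_mem_nhds hy₀.1 hy₀.2)
  have hF₀' : F (ρ y₀) ≤ 0 :=
    deriv_deriv_eq_of_hasDerivAt hρ hρ' hy₀ ▸ hloc.deriv_deriv_nonpos hρy₀.continuousAt
  exact eqOn_const_of_deriv_eq_zero_of_apply_eq_zero hF hρ hρ' hy₀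
    (hloc.hasDerivAt_eq_zero hρy₀) (le_antisymm hF₀' hF₀)

theorem eqOn_const_of_isMinOn (hF : LipschitzWith L F)
    (hρ : ∀ y ∈ Icc a b, HasDerivAt ρ (ρ' y) y)
    (hρ' : ∀ y ∈ Icc a b, HasDerivAt ρ' (F (ρ y)) y) (hy₀ : y₀ ∈ Ioo a b)
    (hmin : IsMinOn ρ (Icc a b) y₀) (hF₀ : F (ρ y₀) ≤ 0) :
    EqOn ρ (fun _ => ρ y₀) (Icc a b) := by
  have hρy₀ := hρ y₀ (Ioo_subset_Icc_self hy₀)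
  have hloc : IsLocalMin ρ y₀ := hmin.isLocalMin (Icc_mem_nhds hy₀.1 hy₀.2)
  have hF₀' : 0 ≤ F (ρ y₀) :=
    deriv_deriv_eq_of_hasDerivAt hρ hρ' hy₀ ▸ hloc.deriv_deriv_nonneg hρy₀.continuousAt
  exact eqOn_const_of_deriv_eq_zero_of_apply_eq_zero hF hρ hρ' hy₀
    (hloc.hasDerivAt_eq_zero hρy₀) (le_antisymm hF₀ hF₀')

end SecondOrder

theorem LipschitzOnWith.lipschitzWith_constExtend {f : ℝ → ℝ} {K : NNReal} {a b : ℝ}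
    (hf : LipschitzOnWith K f (Icc a b)) (hab : a ≤ b) :
    LipschitzWith K fun t => if t ≤ a then f a else if t < b then f t else f b := by
  have hext : (fun t => if t ≤ a then f a else if t < b then f t else f b) =
      IccExtend hab ((Icc a b).domRestrict f) := by
    ext t
    rcases le_or_gt t a with hta | hta
    · simp [hta, IccExtend_of_le_left _ _ hta, domRestrict_apply]
    rcases lt_or_ge t b with htb | htb
    · simp [hta.not_ge, htb, IccExtend_of_mem _ _ ⟨hta.le, htb.le⟩, domRestrict_apply]
    · simp [hta.not_ge, htb.not_gt, IccExtend_of_right_le _ _ htb, domRestrict_apply]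
  rw [hext]
  exact mul_one K ▸ hf.to_restrict.comp (LipschitzWith.projIcc hab)

theorem stmt_7_general (𝔠 s : ℝ) (h𝔠 : 0 < 𝔠)
    (f : ℝ → ℝ) (K : NNReal) (hf : LipschitzOnWith K f (Set.Icc 0 𝔠))
    (hsign : f 0 ≤ 0 ∧ 0 ≤ f 𝔠)
    (fhat : ℝ → ℝ)
    (hfhat : ∀ t : ℝ, fhat t =
      if t ≤ 0 then f 0 else if t < 𝔠 then f t else f 𝔠)
    (ρ ρ' ρ'' : ℝ → ℝ)
    (hρ1 : ∀ y ∈ Set.Icc (0:ℝ) 1, HasDerivAt ρ (ρ' y) y)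
    (hρ2 : ∀ y ∈ Set.Icc (0:ℝ) 1, HasDerivAt ρ' (ρ'' y) y)
    (heq : ∀ y ∈ Set.Icc (0:ℝ) 1, ρ'' y = s ^ 2 * fhat (ρ y))
    (hb0 : ρ 0 = 0) (hb1 : ρ 1 = 𝔠) :
    ∀ y ∈ Set.Ioo (0:ℝ) 1, 0 < ρ y ∧ ρ y < 𝔠 := by
  have hF : LipschitzWith (‖s ^ 2‖₊ * K) fun x => s ^ 2 * fhat x :=
    (lipschitzWith_smul (s ^ 2)).comp (funext hfhat ▸ hf.lipschitzWith_constExtend h𝔠.le)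
  have hρ' : ∀ y ∈ Icc (0:ℝ) 1, HasDerivAt ρ' (s ^ 2 * fhat (ρ y)) y :=
    fun y hy => heq y hy ▸ hρ2 y hy
  have hcont : ContinuousOn ρ (Icc 0 1) :=
    fun y hy => (hρ1 y hy).continuousAt.continuousWithinAt
  have h0 : (0:ℝ) ∈ Icc (0:ℝ) 1 := left_mem_Icc.2 zero_le_one
  have h1 : (1:ℝ) ∈ Icc (0:ℝ) 1 := right_mem_Icc.2 zero_le_one
  intro y hy
  constructor
  · by_contra! hle
    obtain ⟨z, hz, hmin, hzy⟩ := hcont.exists_isMinOn_mem_Ioo hy (by linarith) (by linarith)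
    have hfz : fhat (ρ z) = f 0 := by rw [hfhat, if_pos (by linarith)]
    have hconst := eqOn_const_of_isMinOn hF hρ1 hρ' hz hmin
      (by rw [hfz]; exact mul_nonpos_of_nonneg_of_nonpos (sq_nonneg s) hsign.1)
    have hρ1z : ρ 1 = ρ z := hconst h1
    linarith
  · by_contra! hge
    obtain ⟨z, hz, hmax, hyz⟩ := hcont.exists_isMaxOn_mem_Ioo hy (by linarith) (by linarith)
    have hfz : fhat (ρ z) = f 𝔠 := by rw [hfhat, if_neg (by linarith), if_neg (by linarith)]
    have hconst := eqOn_const_of_isMaxOn hF hρ1 hρ' hz hmax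
      (by rw [hfz]; exact mul_nonneg (sq_nonneg s) hsign.2)
    have hρ0z : ρ 0 = ρ z := hconst h0
    linarith

/-- If `f` is Lipschitz on `[0,𝔠]` with `f(0) ≤ 0 ≤ f(𝔠)`, `f̂` is its constant
extension to `ℝ`, and `ρ ∈ C²([0,1])` solves `ρ'' = s² f̂(ρ)`, `ρ(0) = 0`, `ρ(1) = 𝔠`,
then `0 < ρ < 𝔠` on `(0,1)`. -/
theorem stmt_7 (𝔠 s : ℝ) (h𝔠 : 0 < 𝔠) (hs : 0 < s)
    (f : ℝ → ℝ) (K : NNReal) (hf : LipschitzOnWith K f (Set.Icc 0 𝔠))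
    (hsign : f 0 ≤ 0 ∧ 0 ≤ f 𝔠)
    (fhat : ℝ → ℝ)
    (hfhat : ∀ t : ℝ, fhat t =
      if t ≤ 0 then f 0 else if t < 𝔠 then f t else f 𝔠)
    (ρ ρ' ρ'' : ℝ → ℝ)
    (hρ1 : ∀ y ∈ Set.Icc (0:ℝ) 1, HasDerivAt ρ (ρ' y) y)
    (hρ2 : ∀ y ∈ Set.Icc (0:ℝ) 1, HasDerivAt ρ' (ρ'' y) y)
    (hρc : ContinuousOn ρ'' (Set.Icc 0 1))
    (heq : ∀ y ∈ Set.Icc (0:ℝ) 1, ρ'' y = s ^ 2 * fhat (ρ y))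
    (hb0 : ρ 0 = 0) (hb1 : ρ 1 = 𝔠) :
    ∀ y ∈ Set.Ioo (0:ℝ) 1, 0 < ρ y ∧ ρ y < 𝔠 :=
  stmt_7_general 𝔠 s h𝔠 f K hf hsign fhat hfhat ρ ρ' ρ'' hρ1 hρ2 heq hb0 hb1
end

section
/- Let s : ℝ → (0, ∞) be continuous with d̲ ≤ s(y1) ≤ d̄ for positive constants d̲, d̄, s(y1) → 1 as y1 → -∞ and s(y1) → σ > 0 as y1 → +∞, and let f be Lipschitz with f(0) ≤ 0 ≤ f(𝔠). For each y1 let φ^{y1} be the unique solution of (φ^{y1})'' = s(y1)² f(φ^{y1}), φ^{y1}(0) = 0, φ^{y1}(1) = 𝔠, 0 < φ^{y1} < 𝔠. Then there exists γ > 0 with liminf_{y1 → ±∞} min_{[0,1]} (φ^{y1})' ≥ γ. -/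
open Set Filter Topology

/-!
The lower bound holds uniformly in `y1`. Write `u = φ^{y1}` and `F = s(y1)² f`, whose Lipschitz
constant is at most `l²` for an `l` independent of `y1`. Since `F(0) ≤ 0` we get `u'' ≤ l² u`, and
the minimum principle puts `u` above the barrier `𝔠 sinh(l t) / sinh l`; in particular
`u'(0) ≥ 𝔠 l / sinh l`. As `|u''|` is bounded, `u'` stays above half of this near `0`. Away from
`0`, `u'(t₀)` cannot be small: `t ↦ u(2t₀ - t)` solves the same equation with the same value at
`t₀` and opposite slope, so by Gronwall it stays close to `u` when `u'(t₀) ≈ 0`, contradicting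
`u(2t₀) ≥ barrier > 0 = u(0)`. Continuity of `u'` and `u'(0) > 0` turn the bound on `|u'|` over
`[0, 1/2]` into a bound on `u'`, and the reflection `t ↦ 𝔠 - u(1 - t)`, a solution for the
nonlinearity `x ↦ -F(𝔠 - x)` (here `F(𝔠) ≥ 0` enters), covers `[1/2, 1]`.
-/

theorem IsLocalMin.nonneg_of_hasDerivAt_deriv {h h' : ℝ → ℝ} {τ d : ℝ} (hmin : IsLocalMin h τ)
    (hd1 : ∀ᶠ t in 𝓝 τ, HasDerivAt h (h' t) t) (hd2 : HasDerivAt h' d τ) : 0 ≤ d := by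
  by_contra! hneg
  have hderiv : deriv h =ᶠ[𝓝 τ] h' := hd1.mono fun t ht => ht.deriv
  have hmax : IsLocalMax h τ := by
    refine isLocalMax_of_deriv_deriv_neg ?_ ?_ hd1.self_of_nhds.continuousAt
    · rwa [(hd2.congr_of_eventuallyEq hderiv).deriv]
    · rw [hd1.self_of_nhds.deriv]
      exact hmin.hasDerivAt_eq_zero hd1.self_of_nhds
  have hconst : h =ᶠ[𝓝 τ] fun _ => h τ := by
    filter_upwards [hmin, hmax] with t h1 h2 using le_antisymm h2 h1
  have hflat : h' =ᶠ[𝓝 τ] fun _ => 0 := by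
    filter_upwards [hconst.eventuallyEq_nhds, hd1] with t hc hd
    exact hd.unique ((hasDerivAt_const t (h τ)).congr_of_eventuallyEq hc)
  exact hneg.ne (hd2.unique ((hasDerivAt_const τ 0).congr_of_eventuallyEq hflat))

theorem nonneg_of_deriv2_neg_of_neg {h h' h'' : ℝ → ℝ} {a b : ℝ}
    (hd1 : ∀ t ∈ Icc a b, HasDerivAt h (h' t) t) (hd2 : ∀ t ∈ Icc a b, HasDerivAt h' (h'' t) t)
    (ha : 0 ≤ h a) (hb : 0 ≤ h b) (hneg : ∀ t ∈ Icc a b, h t < 0 → h'' t < 0) :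
    ∀ t ∈ Icc a b, 0 ≤ h t := by
  by_contra! ⟨t₀, ht₀, hneg₀⟩
  obtain ⟨τ, hτ, hmin⟩ := isCompact_Icc.exists_isMinOn ⟨t₀, ht₀⟩
    fun t ht => (hd1 t ht).continuousAt.continuousWithinAt
  have hτneg : h τ < 0 := (hmin ht₀).trans_lt hneg₀
  have hτint : Icc a b ∈ 𝓝 τ := Icc_mem_nhds
    (hτ.1.lt_of_ne fun e => (e ▸ ha).not_gt hτneg) (hτ.2.lt_of_ne fun e => (e ▸ hb).not_gt hτneg)
  exact (hneg τ hτ hτneg).not_ge <| (hmin.isLocalMin hτint).nonneg_of_hasDerivAt_deriv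
    (eventually_of_mem hτint hd1) (hd2 τ hτ)

theorem HasDerivAt.nonneg_of_nonneg_Ioo {h : ℝ → ℝ} {a b d : ℝ} (hd : HasDerivAt h d a)
    (hab : a < b) (ha : h a = 0) (hpos : ∀ t ∈ Ioo a b, 0 ≤ h t) : 0 ≤ d := by
  refine ge_of_tendsto ((hasDerivAt_iff_tendsto_slope.1 hd).mono_left
    (nhdsGT_le_nhdsNE a)) ?_
  filter_upwards [Ioo_mem_nhdsGT hab] with t ht
  rw [slope_def_field, ha, sub_zero]
  exact div_nonneg (hpos t ht) (sub_nonneg.2 ht.1.le)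

theorem le_of_le_abs_of_continuousOn {g : ℝ → ℝ} {a b γ : ℝ} (hg : ContinuousOn g (Icc a b))
    (hγ : 0 < γ) (habs : ∀ t ∈ Icc a b, γ ≤ |g t|) (ha : 0 < g a) :
    ∀ t ∈ Icc a b, γ ≤ g t := by
  intro t ht
  by_contra! hlt
  have hgt : g t < 0 := by cases abs_cases (g t) <;> linarith [habs t ht]
  obtain ⟨ξ, hξ, hξ0⟩ := intermediate_value_Icc' ht.1 (hg.mono (Icc_subset_Icc_right ht.2))
    ⟨hgt.le, ha.le⟩
  have := habs ξ ⟨hξ.1, hξ.2.trans ht.2⟩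
  rw [hξ0, abs_zero] at this
  exact this.not_gt hγ

theorem LipschitzWith.reflect {F : ℝ → ℝ} {K : NNReal} (hF : LipschitzWith K F) (𝔠 : ℝ) :
    LipschitzWith K fun x => -F (𝔠 - x) :=
  LipschitzWith.of_dist_le_mul fun a b => by
    simpa only [dist_neg_neg, dist_sub_left] using hF.dist_le_mul (𝔠 - a) (𝔠 - b)

theorem LipschitzWith.abs_le_add_mul {f : ℝ → ℝ} {K : NNReal} (hf : LipschitzWith K f) {𝔠 x : ℝ}
    (hx : x ∈ Icc 0 𝔠) : |f x| ≤ |f 0| + K * 𝔠 := by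
  have := hf.dist_le_mul x 0
  rw [Real.dist_eq, Real.dist_0_eq_abs, abs_of_nonneg hx.1] at this
  linarith [abs_sub_abs_le_abs_sub (f x) (f 0), mul_le_mul_of_nonneg_left hx.2 K.coe_nonneg]

theorem le_liminf_sInf_image {α : Type*} {l : Filter α} [l.NeBot] {g : α → ℝ → ℝ} {S : Set ℝ}
    {γ B : ℝ} (hlow : ∀ a, ∀ t ∈ S, γ ≤ g a t) (hup : ∀ a, ∃ t ∈ S, g a t ≤ B) :
    γ ≤ liminf (fun a => sInf (g a '' S)) l := by
  have hbdd (a : α) : BddBelow (g a '' S) := ⟨γ, forall_mem_image.2 (hlow a)⟩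
  refine le_liminf_of_le (isCoboundedUnder_ge_of_le l (x := B) fun a => ?_)
    (Eventually.of_forall fun a => ?_)
  · obtain ⟨t, ht, hle⟩ := hup a
    exact (csInf_le (hbdd a) (mem_image_of_mem _ ht)).trans hle
  · obtain ⟨t, ht, -⟩ := hup a
    exact le_csInf ⟨_, mem_image_of_mem _ ht⟩ (forall_mem_image.2 (hlow a))

/-- The first term controls `u'` near the endpoint, through `u'(0)` and `|u''| ≤ M`; the second
controls it away from the endpoint, through the Gronwall estimate. -/
noncomputable def derivLowerBound (𝔠 l M : ℝ) : ℝ :=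
  min (𝔠 * l / Real.sinh l / 2)
    (𝔠 * l ^ 2 * (𝔠 * l / Real.sinh l / (2 * M)) / (Real.sinh l * Real.exp l))

theorem derivLowerBound_pos {𝔠 l M : ℝ} (h𝔠 : 0 < 𝔠) (hl : 0 < l) (hM : 0 < M) :
    0 < derivLowerBound 𝔠 l M := by
  have := Real.sinh_pos_iff.2 hl
  unfold derivLowerBound
  positivity

structure IsDirichletSolution (𝔠 : ℝ) (F u u' u'' : ℝ → ℝ) : Prop where
  hasDerivAt : ∀ t ∈ Icc (0 : ℝ) 1, HasDerivAt u (u' t) t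
  hasDerivAt_deriv : ∀ t ∈ Icc (0 : ℝ) 1, HasDerivAt u' (u'' t) t
  ode : ∀ t ∈ Icc (0 : ℝ) 1, u'' t = F (u t)
  zero : u 0 = 0
  one : u 1 = 𝔠
  mem_Icc : ∀ t ∈ Icc (0 : ℝ) 1, u t ∈ Icc 0 𝔠

namespace IsDirichletSolution

variable {𝔠 l M : ℝ} {F u u' u'' : ℝ → ℝ} {K : NNReal}

theorem reflect (hu : IsDirichletSolution 𝔠 F u u' u'') :
    IsDirichletSolution 𝔠 (fun x => -F (𝔠 - x)) (fun t => 𝔠 - u (1 - t)) (fun t => u' (1 - t))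
      (fun t => -u'' (1 - t)) := by
  have hmem : ∀ t ∈ Icc (0 : ℝ) 1, 1 - t ∈ Icc (0 : ℝ) 1 :=
    fun t ht => ⟨sub_nonneg.2 ht.2, sub_le_self _ ht.1⟩
  have hrev (t : ℝ) : HasDerivAt (fun x : ℝ => 1 - x) (-1) t := by
    simpa using (hasDerivAt_id t).const_sub 1
  refine ⟨fun t ht => ?_, fun t ht => ?_, fun t ht => ?_, ?_, ?_, fun t ht => ?_⟩
  · simpa using ((hu.hasDerivAt _ (hmem t ht)).comp t (hrev t)).const_sub 𝔠
  · simpa [Function.comp_def] using (hu.hasDerivAt_deriv _ (hmem t ht)).comp t (hrev t)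
  · simp [hu.ode _ (hmem t ht)]
  · simp [hu.one]
  · simp [hu.zero]
  · obtain ⟨h0, h1⟩ := hu.mem_Icc _ (hmem t ht)
    exact ⟨sub_nonneg.2 h1, sub_le_self _ h0⟩

theorem continuousOn_deriv (hu : IsDirichletSolution 𝔠 F u u' u'') :
    ContinuousOn u' (Icc 0 1) :=
  fun t ht => (hu.hasDerivAt_deriv t ht).continuousAt.continuousWithinAt

theorem exists_deriv_eq (hu : IsDirichletSolution 𝔠 F u u' u'') :
    ∃ ξ ∈ Ioo (0 : ℝ) 1, u' ξ = 𝔠 := by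
  obtain ⟨ξ, hξ, hslope⟩ := exists_hasDerivAt_eq_slope u u' zero_lt_one
    (fun t ht => (hu.hasDerivAt t ht).continuousAt.continuousWithinAt)
    (fun t ht => hu.hasDerivAt t (Ioo_subset_Icc_self ht))
  exact ⟨ξ, hξ, by simpa [hu.zero, hu.one] using hslope⟩

theorem abs_deriv_sub_le (hu : IsDirichletSolution 𝔠 F u u' u'')
    (hM : ∀ x ∈ Icc 0 𝔠, |F x| ≤ M) {s t : ℝ} (hs : s ∈ Icc (0 : ℝ) 1) (ht : t ∈ Icc (0 : ℝ) 1) :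
    |u' t - u' s| ≤ M * |t - s| := by
  simpa only [Real.norm_eq_abs] using
    (convex_Icc (0 : ℝ) 1).norm_image_sub_le_of_norm_hasDerivWithin_le
      (fun x hx => (hu.hasDerivAt_deriv x hx).hasDerivWithinAt)
      (fun x hx => by rw [Real.norm_eq_abs, hu.ode x hx]; exact hM _ (hu.mem_Icc x hx)) hs ht

theorem le_mul_of_lipschitzWith (hu : IsDirichletSolution 𝔠 F u u' u'') (hF : LipschitzWith K F)
    (hF0 : F 0 ≤ 0) {t : ℝ} (ht : t ∈ Icc (0 : ℝ) 1) : u'' t ≤ K * u t := by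
  have := hF.le_add_mul (u t) 0
  rw [Real.dist_0_eq_abs, abs_of_nonneg (hu.mem_Icc t ht).1] at this
  rw [hu.ode t ht]
  linarith

theorem mul_sinh_div_sinh_le (hu : IsDirichletSolution 𝔠 F u u' u'') (hF : LipschitzWith K F)
    (hF0 : F 0 ≤ 0) (hl : 0 < l) (hK : (K : ℝ) ≤ l ^ 2) :
    ∀ t ∈ Icc (0 : ℝ) 1, 𝔠 * Real.sinh (l * t) / Real.sinh l ≤ u t := by
  have hlt (t : ℝ) : HasDerivAt (fun x => l * x) l t := by simpa using (hasDerivAt_id t).const_mul l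
  have hw (t : ℝ) : HasDerivAt (fun x => 𝔠 * Real.sinh (l * x) / Real.sinh l)
      (𝔠 * l * Real.cosh (l * t) / Real.sinh l) t :=
    ((((Real.hasDerivAt_sinh _).comp t (hlt t)).const_mul 𝔠).div_const _).congr_deriv (by ring)
  have hw' (t : ℝ) : HasDerivAt (fun x => 𝔠 * l * Real.cosh (l * x) / Real.sinh l)
      (l ^ 2 * (𝔠 * Real.sinh (l * t) / Real.sinh l)) t :=
    ((((Real.hasDerivAt_cosh _).comp t (hlt t)).const_mul (𝔠 * l)).div_const _).congr_deriv
      (by ring)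
  have hsinh : Real.sinh l ≠ 0 := (Real.sinh_pos_iff.2 hl).ne'
  intro t ht
  refine sub_nonneg.1 (nonneg_of_deriv2_neg_of_neg (fun t ht => (hu.hasDerivAt t ht).sub (hw t))
    (fun t ht => (hu.hasDerivAt_deriv t ht).sub (hw' t)) ?_ ?_ ?_ t ht)
  · simp [hu.zero]
  · simp [hu.one, hsinh]
  · intro t ht hneg
    simp only [Pi.sub_apply, sub_neg] at hneg ⊢
    calc u'' t ≤ K * u t := hu.le_mul_of_lipschitzWith hF hF0 ht
      _ ≤ l ^ 2 * u t := mul_le_mul_of_nonneg_right hK (hu.mem_Icc t ht).1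
      _ < l ^ 2 * (𝔠 * Real.sinh (l * t) / Real.sinh l) := by gcongr

theorem mul_div_sinh_le_deriv_zero (hu : IsDirichletSolution 𝔠 F u u' u'')
    (hF : LipschitzWith K F) (hF0 : F 0 ≤ 0) (hl : 0 < l) (hK : (K : ℝ) ≤ l ^ 2) :
    𝔠 * l / Real.sinh l ≤ u' 0 := by
  have hw : HasDerivAt (fun x => 𝔠 * Real.sinh (l * x) / Real.sinh l) (𝔠 * l / Real.sinh l) 0 :=
    ((((Real.hasDerivAt_sinh _).comp 0 ((hasDerivAt_id 0).const_mul l)).const_mul 𝔠).div_const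
      _).congr_deriv (by simp)
  refine sub_nonneg.1 (HasDerivAt.nonneg_of_nonneg_Ioo ((hu.hasDerivAt 0 (by norm_num)).sub hw)
    zero_lt_one (by simp [hu.zero]) fun t ht => ?_)
  exact sub_nonneg.2 (hu.mul_sinh_div_sinh_le hF hF0 hl hK t (Ioo_subset_Icc_self ht))

theorem mul_le_two_abs_deriv_mul_exp (hu : IsDirichletSolution 𝔠 F u u' u'')
    (hF : LipschitzWith K F) (hl : 0 ≤ l) (hK : (K : ℝ) ≤ l ^ 2) {t₀ : ℝ} (ht₀ : 0 ≤ t₀)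
    (ht₀' : 2 * t₀ ≤ 1) : l * u (2 * t₀) ≤ 2 * |u' t₀| * Real.exp (l * t₀) := by
  have hmem : ∀ t ∈ Icc t₀ (2 * t₀), t ∈ Icc (0 : ℝ) 1 :=
    fun t ht => ⟨ht₀.trans ht.1, ht.2.trans ht₀'⟩
  have hmem' : ∀ t ∈ Icc t₀ (2 * t₀), 2 * t₀ - t ∈ Icc (0 : ℝ) 1 :=
    fun t ht => ⟨by linarith [ht.2], by linarith [ht.1]⟩
  -- `Z` compares `u` with its reflection about `t₀`; the weight `l` makes `‖Z'‖ ≤ l ‖Z‖`.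
  set Z : ℝ → ℝ × ℝ := fun t => (l * (u t - u (2 * t₀ - t)), u' t + u' (2 * t₀ - t))
  set Z' : ℝ → ℝ × ℝ := fun t => (l * (u' t + u' (2 * t₀ - t)), u'' t - u'' (2 * t₀ - t))
  have hrefl (t : ℝ) : HasDerivAt (fun x : ℝ => 2 * t₀ - x) (-1) t := by
    simpa using (hasDerivAt_id t).const_sub (2 * t₀)
  have hZ : ∀ t ∈ Icc t₀ (2 * t₀), HasDerivAt Z (Z' t) t := by
    intro t ht
    have h1 := (hu.hasDerivAt t (hmem t ht)).sub ((hu.hasDerivAt _ (hmem' t ht)).comp t (hrefl t))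
    have h2 := (hu.hasDerivAt_deriv t (hmem t ht)).add
      ((hu.hasDerivAt_deriv _ (hmem' t ht)).comp t (hrefl t))
    exact ((h1.const_mul l).congr_deriv (by ring)).prodMk (h2.congr_deriv (by ring))
  have hZ' : ∀ t ∈ Ico t₀ (2 * t₀), ‖Z' t‖ ≤ l * ‖Z t‖ + 0 := by
    intro t ht
    have ht := Ico_subset_Icc_self ht
    simp only [Z, Z', add_zero, Prod.norm_def, Real.norm_eq_abs]
    rw [mul_max_of_nonneg _ _ hl]
    refine max_le (le_max_of_le_right ?_) (le_max_of_le_left ?_)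
    · rw [abs_mul, abs_of_nonneg hl]
    · rw [hu.ode t (hmem t ht), hu.ode _ (hmem' t ht), ← Real.dist_eq]
      calc dist (F (u t)) (F (u (2 * t₀ - t))) ≤ K * |u t - u (2 * t₀ - t)| := hF.dist_le_mul _ _
        _ ≤ l ^ 2 * |u t - u (2 * t₀ - t)| := by gcongr
        _ = l * |l * (u t - u (2 * t₀ - t))| := by rw [abs_mul, abs_of_nonneg hl]; ring
  have hZ₀ : ‖Z t₀‖ ≤ 2 * |u' t₀| := by
    have : 2 * t₀ - t₀ = t₀ := by ring
    simp [Z, this, Prod.norm_def, ← two_mul]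
  have hgron := norm_le_gronwallBound_of_norm_deriv_right_le
    (fun t ht => (hZ t ht).continuousAt.continuousWithinAt)
    (fun t ht => (hZ t (Ico_subset_Icc_self ht)).hasDerivWithinAt) hZ₀ hZ' (2 * t₀)
    ⟨by linarith, le_rfl⟩
  rw [gronwallBound_ε0, show 2 * t₀ - t₀ = t₀ by ring] at hgron
  refine le_trans ?_ hgron
  simp only [Z, sub_self, hu.zero, sub_zero, Prod.norm_def, Real.norm_eq_abs]
  exact le_max_of_le_left (le_abs_self _)

theorem boundary_nonneg (hu : IsDirichletSolution 𝔠 F u u' u'') : 0 ≤ 𝔠 :=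
  hu.one ▸ (hu.mem_Icc 1 ⟨zero_le_one, le_rfl⟩).1

theorem mul_sq_mul_div_le_abs_deriv (hu : IsDirichletSolution 𝔠 F u u' u'')
    (hF : LipschitzWith K F) (hF0 : F 0 ≤ 0) (hl : 0 < l) (hK : (K : ℝ) ≤ l ^ 2) {t₀ : ℝ}
    (ht₀ : 0 ≤ t₀) (ht₀' : 2 * t₀ ≤ 1) :
    𝔠 * l ^ 2 * t₀ / (Real.sinh l * Real.exp l) ≤ |u' t₀| := by
  have hsinh : 0 < Real.sinh l := Real.sinh_pos_iff.2 hl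
  have hbarrier : 𝔠 * (l * (2 * t₀)) / Real.sinh l ≤ u (2 * t₀) :=
    le_trans (by gcongr; exacts [hu.boundary_nonneg, Real.self_le_sinh_iff.2 (by positivity)])
      (hu.mul_sinh_div_sinh_le hF hF0 hl hK (2 * t₀) ⟨by linarith, ht₀'⟩)
  have hexp : Real.exp (l * t₀) ≤ Real.exp l := Real.exp_le_exp.2 (by nlinarith)
  rw [div_le_iff₀ (by positivity)]
  calc 𝔠 * l ^ 2 * t₀ = l * (𝔠 * (l * (2 * t₀)) / Real.sinh l) / 2 * Real.sinh l := by
        field_simp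
    _ ≤ l * u (2 * t₀) / 2 * Real.sinh l := by gcongr
    _ ≤ 2 * |u' t₀| * Real.exp (l * t₀) / 2 * Real.sinh l := by
        gcongr ?_ / 2 * _
        exact hu.mul_le_two_abs_deriv_mul_exp hF hl.le hK ht₀ ht₀'
    _ = |u' t₀| * (Real.sinh l * Real.exp (l * t₀)) := by ring
    _ ≤ |u' t₀| * (Real.sinh l * Real.exp l) := by gcongr

theorem derivLowerBound_le_deriv_of_le_half (hu : IsDirichletSolution 𝔠 F u u' u'')
    (h𝔠 : 0 < 𝔠) (hF : LipschitzWith K F) (hF0 : F 0 ≤ 0) (hl : 0 < l) (hK : (K : ℝ) ≤ l ^ 2)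
    (hM : 0 < M) (hFM : ∀ x ∈ Icc 0 𝔠, |F x| ≤ M) :
    ∀ t ∈ Icc (0 : ℝ) (1 / 2), derivLowerBound 𝔠 l M ≤ u' t := by
  set A := 𝔠 * l / Real.sinh l
  have hA : A ≤ u' 0 := hu.mul_div_sinh_le_deriv_zero hF hF0 hl hK
  have hsub : Icc (0 : ℝ) (1 / 2) ⊆ Icc 0 1 := Icc_subset_Icc_right (by norm_num)
  have hA0 : 0 < A := by have := Real.sinh_pos_iff.2 hl; positivity
  refine le_of_le_abs_of_continuousOn (hu.continuousOn_deriv.mono hsub)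
    (derivLowerBound_pos h𝔠 hl hM) (fun t ht => ?_) (hA0.trans_le hA)
  rcases le_or_gt t (A / (2 * M)) with hnear | hfar
  · have hlip := hu.abs_deriv_sub_le hFM ⟨le_rfl, zero_le_one⟩ (hsub ht)
    rw [sub_zero, abs_of_nonneg ht.1] at hlip
    have hMt : M * t ≤ A / 2 := by
      calc M * t ≤ M * (A / (2 * M)) := by gcongr
        _ = A / 2 := by field_simp
    calc derivLowerBound 𝔠 l M ≤ A / 2 := min_le_left _ _
      _ ≤ u' t := by linarith [(abs_le.1 hlip).1]
      _ ≤ |u' t| := le_abs_self _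
  · calc derivLowerBound 𝔠 l M ≤ 𝔠 * l ^ 2 * t / (Real.sinh l * Real.exp l) :=
          (min_le_right _ _).trans (by gcongr)
      _ ≤ |u' t| := hu.mul_sq_mul_div_le_abs_deriv hF hF0 hl hK ht.1 (by linarith [ht.2])

theorem derivLowerBound_le_deriv (hu : IsDirichletSolution 𝔠 F u u' u'') (h𝔠 : 0 < 𝔠)
    (hF : LipschitzWith K F) (hF0 : F 0 ≤ 0) (hF𝔠 : 0 ≤ F 𝔠) (hl : 0 < l)
    (hK : (K : ℝ) ≤ l ^ 2) (hM : 0 < M) (hFM : ∀ x ∈ Icc 0 𝔠, |F x| ≤ M) :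
    ∀ t ∈ Icc (0 : ℝ) 1, derivLowerBound 𝔠 l M ≤ u' t := by
  intro t ht
  rcases le_or_gt t (1 / 2) with hleft | hright
  · exact hu.derivLowerBound_le_deriv_of_le_half h𝔠 hF hF0 hl hK hM hFM t ⟨ht.1, hleft⟩
  · have := hu.reflect.derivLowerBound_le_deriv_of_le_half h𝔠 (hF.reflect 𝔠) (by simpa using hF𝔠)
      hl hK hM (fun x hx => by simpa using hFM (𝔠 - x) ⟨sub_nonneg.2 hx.2, sub_le_self _ hx.1⟩)
      (1 - t) ⟨sub_nonneg.2 ht.2, by linarith⟩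
    simpa using this

theorem derivLowerBound_le_deriv_of_mul {c C : ℝ} {f : ℝ → ℝ}
    (hu : IsDirichletSolution 𝔠 (fun x => c * f x) u u' u'') (h𝔠 : 0 < 𝔠)
    (hf : LipschitzWith K f) (hf0 : f 0 ≤ 0) (hf𝔠 : 0 ≤ f 𝔠) (hc : 0 ≤ c) (hcC : c ≤ C) :
    ∀ t ∈ Icc (0 : ℝ) 1, derivLowerBound 𝔠 (C * K + 1) (C * (|f 0| + K * 𝔠) + 1) ≤ u' t := by
  have hC : 0 ≤ C := hc.trans hcC
  refine hu.derivLowerBound_le_deriv h𝔠 ((lipschitzWith_smul c).comp hf)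
    (mul_nonpos_of_nonneg_of_nonpos hc hf0) (mul_nonneg hc hf𝔠) (by positivity) ?_
    (by positivity) fun x hx => ?_
  · rw [NNReal.coe_mul, coe_nnnorm, Real.norm_eq_abs, abs_of_nonneg hc]
    nlinarith [K.coe_nonneg, mul_le_mul_of_nonneg_right hcC K.coe_nonneg]
  · rw [abs_mul, abs_of_nonneg hc]
    have := mul_le_mul hcC (hf.abs_le_add_mul hx) (abs_nonneg _) hC
    linarith

end IsDirichletSolution

theorem stmt_10_general (𝔠 dlo dhi : ℝ) (h𝔠 : 0 < 𝔠)
    (s : ℝ → ℝ)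
    (hsbd : ∀ y1, s y1 ∈ Set.Icc dlo dhi)
    (f : ℝ → ℝ) (K : NNReal) (hf : LipschitzWith K f)
    (hsign : f 0 ≤ 0 ∧ 0 ≤ f 𝔠)
    (φ φ' φ'' : ℝ → ℝ → ℝ)
    (hφ1 : ∀ y1, ∀ y2 ∈ Set.Icc (0:ℝ) 1, HasDerivAt (φ y1) (φ' y1 y2) y2)
    (hφ2 : ∀ y1, ∀ y2 ∈ Set.Icc (0:ℝ) 1, HasDerivAt (φ' y1) (φ'' y1 y2) y2)
    (heq : ∀ y1, ∀ y2 ∈ Set.Icc (0:ℝ) 1, φ'' y1 y2 = (s y1) ^ 2 * f (φ y1 y2))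
    (hb0 : ∀ y1, φ y1 0 = 0) (hb1 : ∀ y1, φ y1 1 = 𝔠)
    (hpinch : ∀ y1, ∀ y2 ∈ Set.Ioo (0:ℝ) 1, 0 < φ y1 y2 ∧ φ y1 y2 < 𝔠) :
    ∃ γ : ℝ, 0 < γ
      ∧ γ ≤ Filter.liminf (fun y1 => sInf ((φ' y1) '' Set.Icc 0 1)) atTop
      ∧ γ ≤ Filter.liminf (fun y1 => sInf ((φ' y1) '' Set.Icc 0 1)) atBot := by
  set C := max |dlo| |dhi| ^ 2
  have hs2 (y1 : ℝ) : s y1 ^ 2 ≤ C := by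
    rw [← sq_abs]
    exact pow_le_pow_left₀ (abs_nonneg _) (abs_le_max_abs_abs (hsbd y1).1 (hsbd y1).2) 2
  have hsol (y1 : ℝ) :
      IsDirichletSolution 𝔠 (fun x => s y1 ^ 2 * f x) (φ y1) (φ' y1) (φ'' y1) := by
    refine ⟨hφ1 y1, hφ2 y1, heq y1, hb0 y1, hb1 y1, fun t ht => ?_⟩
    rcases eq_endpoints_or_mem_Ioo_of_mem_Icc ht with rfl | rfl | ht
    · simp [hb0, h𝔠.le]
    · simp [hb1, h𝔠.le]
    · exact Ioo_subset_Icc_self (hpinch y1 t ht)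
  set γ := derivLowerBound 𝔠 (C * K + 1) (C * (|f 0| + K * 𝔠) + 1)
  have hlow (y1 : ℝ) : ∀ t ∈ Icc (0 : ℝ) 1, γ ≤ φ' y1 t :=
    (hsol y1).derivLowerBound_le_deriv_of_mul h𝔠 hf hsign.1 hsign.2 (sq_nonneg _) (hs2 y1)
  refine ⟨γ, derivLowerBound_pos h𝔠 (by positivity) (by positivity), ?_, ?_⟩ <;>
  · refine le_liminf_sInf_image (B := 𝔠) hlow fun y1 => ?_
    obtain ⟨ξ, hξ, hξ𝔠⟩ := (hsol y1).exists_deriv_eq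
    exact ⟨ξ, Ioo_subset_Icc_self hξ, hξ𝔠.le⟩

/-- Non-degeneracy of the vertical derivative at far fields: with `s` continuous,
pinched in `[d̲, d̄] ⊂ (0,∞)`, tending to `1` at `-∞` and to `σ > 0` at `+∞`, and `f`
Lipschitz with `f(0) ≤ 0 ≤ f(𝔠)`, the solutions `φ^{y1}` of
`(φ^{y1})'' = s(y1)² f(φ^{y1})`, `φ^{y1}(0) = 0`, `φ^{y1}(1) = 𝔠`, `0 < φ^{y1} < 𝔠`
satisfy `liminf_{y1 → ±∞} min_{[0,1]} (φ^{y1})' ≥ γ` for some `γ > 0`. -/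
theorem stmt_10 (𝔠 dlo dhi σ : ℝ) (h𝔠 : 0 < 𝔠) (hdlo : 0 < dlo) (hd : dlo ≤ dhi)
    (hσ : 0 < σ)
    (s : ℝ → ℝ) (hscont : Continuous s)
    (hsbd : ∀ y1, s y1 ∈ Set.Icc dlo dhi)
    (hsbot : Tendsto s atBot (nhds 1)) (hstop : Tendsto s atTop (nhds σ))
    (f : ℝ → ℝ) (K : NNReal) (hf : LipschitzWith K f)
    (hsign : f 0 ≤ 0 ∧ 0 ≤ f 𝔠)
    (φ φ' φ'' : ℝ → ℝ → ℝ)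
    (hφ1 : ∀ y1, ∀ y2 ∈ Set.Icc (0:ℝ) 1, HasDerivAt (φ y1) (φ' y1 y2) y2)
    (hφ2 : ∀ y1, ∀ y2 ∈ Set.Icc (0:ℝ) 1, HasDerivAt (φ' y1) (φ'' y1 y2) y2)
    (hφc : ∀ y1, ContinuousOn (φ'' y1) (Set.Icc 0 1))
    (heq : ∀ y1, ∀ y2 ∈ Set.Icc (0:ℝ) 1, φ'' y1 y2 = (s y1) ^ 2 * f (φ y1 y2))
    (hb0 : ∀ y1, φ y1 0 = 0) (hb1 : ∀ y1, φ y1 1 = 𝔠)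
    (hpinch : ∀ y1, ∀ y2 ∈ Set.Ioo (0:ℝ) 1, 0 < φ y1 y2 ∧ φ y1 y2 < 𝔠) :
    ∃ γ : ℝ, 0 < γ
      ∧ γ ≤ Filter.liminf (fun y1 => sInf ((φ' y1) '' Set.Icc 0 1)) atTop
      ∧ γ ≤ Filter.liminf (fun y1 => sInf ((φ' y1) '' Set.Icc 0 1)) atBot :=
  stmt_10_general 𝔠 dlo dhi h𝔠 s hsbd f K hf hsign φ φ' φ'' hφ1 hφ2 heq hb0 hb1 hpinch
end

section
/- Fix 𝔠 > 0 and a continuous f : [0, 𝔠] → ℝ, and define 𝒢(α1, α2) = ∫₀^{𝔠} (2 α1 ∫₀^{ζ} f(ζ̃) dζ̃ + α2)^{-1/2} dζ on the set of (α1, α2) where the integrand's radicand is strictly positive on [0, 𝔠]. Then 𝒢 is C¹ there with ∂𝒢/∂α2 < 0, and consequently for each α1 there is at most one α2 with 𝒢(α1, α2) = 1, and the solution α2 = β̄(α1) of 𝒢(α1, α2) = 1 depends C¹ on α1 wherever it exists. -/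
/-!
With `Φ ζ = ∫₀^ζ f`, the integrand `(2 α₁ Φ ζ + α₂)^(-1/2)` is smooth in `(α₁, α₂)` as long as the
radicand stays positive on the compact interval `[0, 𝔠]`, and its derivative is jointly continuous
in the parameter and in `ζ`; differentiating under the integral sign on compact neighbourhoods makes
`𝒢` of class `C¹` on the (open) positivity region. Its `α₂`-derivative is the integral of the
negative function `-(1/2)(2 α₁ Φ ζ + α₂)^(-3/2)`. As the `α₂`-slices of the region are half-lines,
`𝒢(α₁, ·)` is strictly decreasing on them, which gives uniqueness of `α₂`. Finally, the implicit
function theorem yields a `C¹` local solution near each point of a solution branch `β̄`, and by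
uniqueness `β̄` agrees with it, so `β̄` is `C¹` without any a priori continuity.
-/

open Set intervalIntegral MeasureTheory Filter Topology
open scoped Interval

section ParametricIntervalIntegral

variable {E : Type*} [NormedAddCommGroup E] [NormedSpace ℝ E] {a b : ℝ}

theorem exists_mem_nhds_forall_norm_le_of_continuousOn {X F : Type*} [TopologicalSpace X]
    [LocallyCompactSpace X] [NormedAddCommGroup F] {f : X → ℝ → F} {S : Set X} {x₀ : X}
    (hS : IsOpen S) (hf : ContinuousOn f.uncurry (S ×ˢ [[a, b]])) (hx₀ : x₀ ∈ S) :
    ∃ K ∈ 𝓝 x₀, K ⊆ S ∧ ∃ M, ∀ x ∈ K, ∀ t ∈ [[a, b]], ‖f x t‖ ≤ M := by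
  obtain ⟨K, hK, hx₀K, hKS⟩ := exists_compact_subset hS hx₀
  obtain ⟨M, hM⟩ := (hK.prod isCompact_uIcc).exists_bound_of_continuousOn
    (hf.mono (prod_mono hKS subset_rfl))
  exact ⟨K, mem_interior_iff_mem_nhds.1 hx₀K, hKS, M, fun x hx t ht => hM (x, t) ⟨hx, ht⟩⟩

theorem continuousOn_intervalIntegral_of_continuousOn {X : Type*} [TopologicalSpace X]
    [LocallyCompactSpace X] [FirstCountableTopology X] {f : X → ℝ → E} {S : Set X}
    (hS : IsOpen S) (hf : ContinuousOn f.uncurry (S ×ˢ [[a, b]])) :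
    ContinuousOn (fun x => ∫ t in a..b, f x t) S := by
  intro x₀ hx₀
  obtain ⟨K, hK, hKS, M, hM⟩ := exists_mem_nhds_forall_norm_le_of_continuousOn hS hf hx₀
  refine (continuousAt_of_dominated_interval (bound := fun _ => M) ?_ ?_
    intervalIntegrable_const ?_).continuousWithinAt
  · filter_upwards [hK] with x hx
    exact ((hf.uncurry_left x (hKS hx)).mono uIoc_subset_uIcc).aestronglyMeasurable
      measurableSet_uIoc
  · filter_upwards [hK] with x hx
    exact ae_of_all _ fun t ht => hM x hx t (uIoc_subset_uIcc ht)
  · exact ae_of_all _ fun t ht =>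
      (hf.uncurry_right t (uIoc_subset_uIcc ht)).continuousAt (hS.mem_nhds hx₀)

variable {H : Type*} [NormedAddCommGroup H] [NormedSpace ℝ H] [LocallyCompactSpace H]
  {f : H → ℝ → E} {f' : H → ℝ → H →L[ℝ] E} {S : Set H}

theorem hasFDerivAt_intervalIntegral_of_continuousOn (hS : IsOpen S)
    (hf : ContinuousOn f.uncurry (S ×ˢ [[a, b]])) (hf' : ContinuousOn f'.uncurry (S ×ˢ [[a, b]]))
    (hdiff : ∀ x ∈ S, ∀ t ∈ [[a, b]], HasFDerivAt (f · t) (f' x t) x) {x₀ : H} (hx₀ : x₀ ∈ S) :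
    HasFDerivAt (fun x => ∫ t in a..b, f x t) (∫ t in a..b, f' x₀ t) x₀ := by
  obtain ⟨K, hK, hKS, M, hM⟩ := exists_mem_nhds_forall_norm_le_of_continuousOn hS hf' hx₀
  refine hasFDerivAt_integral_of_dominated_of_fderiv_le (bound := fun _ => M) hK ?_
    (hf.uncurry_left x₀ hx₀).intervalIntegrable
    (((hf'.uncurry_left x₀ hx₀).mono uIoc_subset_uIcc).aestronglyMeasurable measurableSet_uIoc)
    ?_ intervalIntegrable_const ?_
  · filter_upwards [hS.mem_nhds hx₀] with x hx
    exact ((hf.uncurry_left x hx).mono uIoc_subset_uIcc).aestronglyMeasurable measurableSet_uIoc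
  · exact ae_of_all _ fun t ht x hx => hM x hx t (uIoc_subset_uIcc ht)
  · exact ae_of_all _ fun t ht x hx => hdiff x (hKS hx) t (uIoc_subset_uIcc ht)

theorem contDiffOn_intervalIntegral_of_continuousOn (hS : IsOpen S)
    (hf : ContinuousOn f.uncurry (S ×ˢ [[a, b]])) (hf' : ContinuousOn f'.uncurry (S ×ˢ [[a, b]]))
    (hdiff : ∀ x ∈ S, ∀ t ∈ [[a, b]], HasFDerivAt (f · t) (f' x t) x) :
    ContDiffOn ℝ 1 (fun x => ∫ t in a..b, f x t) S := by
  have hderiv := fun x (hx : x ∈ S) =>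
    hasFDerivAt_intervalIntegral_of_continuousOn hS hf hf' hdiff hx
  rw [show (1 : WithTop ℕ∞) = 0 + 1 from rfl, contDiffOn_succ_iff_fderiv_of_isOpen hS,
    contDiffOn_zero]
  refine ⟨fun x hx => (hderiv x hx).differentiableAt.differentiableWithinAt, by simp, ?_⟩
  exact (continuousOn_intervalIntegral_of_continuousOn hS hf').congr fun x hx =>
    (hderiv x hx).fderiv

end ParametricIntervalIntegral

theorem ContinuousLinearMap.isInvertible_of_apply_one_ne_zero {𝕜 : Type*} [Field 𝕜]
    [TopologicalSpace 𝕜] [IsTopologicalRing 𝕜] {L : 𝕜 →L[𝕜] 𝕜} (h : L 1 ≠ 0) :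
    L.IsInvertible :=
  ⟨ContinuousLinearEquiv.unitsEquivAut 𝕜 (Units.mk0 _ h), ContinuousLinearMap.ext_ring (by simp)⟩

theorem contDiffOn_of_forall_apply_eq_of_deriv_ne_zero {E : Type*} [NormedAddCommGroup E]
    [NormedSpace ℝ E] [CompleteSpace E] {G : E × ℝ → ℝ} {S : Set (E × ℝ)} {n : WithTop ℕ∞}
    {c : ℝ} (hS : IsOpen S) (hG : ContDiffOn ℝ n G S) (hn : n ≠ 0)
    (hG₂ : ∀ p ∈ S, deriv (fun y => G (p.1, y)) p.2 ≠ 0)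
    (hinj : ∀ x, InjOn (fun y => G (x, y)) {y | (x, y) ∈ S})
    {U : Set E} {β : E → ℝ} (hU : IsOpen U) (hβ : ∀ x ∈ U, (x, β x) ∈ S ∧ G (x, β x) = c) :
    ContDiffOn ℝ n β U := by
  intro x₀ hx₀
  obtain ⟨hu, hGu⟩ := hβ x₀ hx₀
  have hGC : ContDiffAt ℝ n G (x₀, β x₀) := hG.contDiffAt (hS.mem_nhds hu)
  have hsection : deriv (fun y => G (x₀, y)) (β x₀)
      = (fderiv ℝ G (x₀, β x₀) ∘L .inr ℝ E ℝ) 1 :=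
    ((hGC.differentiableAt hn).hasFDerivAt.comp_hasDerivAt _
      ((hasDerivAt_const _ x₀).prodMk (hasDerivAt_id _))).deriv
  have hinv := ContinuousLinearMap.isInvertible_of_apply_one_ne_zero (hsection ▸ hG₂ _ hu)
  set ψ := hGC.implicitFunction hn hinv
  have hψ : ContDiffAt ℝ n ψ x₀ := hGC.contDiffAt_implicitFunction hn hinv
  have hψS : ∀ᶠ x in 𝓝 x₀, (x, ψ x) ∈ S := by
    refine (continuousAt_id.prodMk hψ.continuousAt).preimage_mem_nhds ?_
    simpa [ψ, hGC.implicitFunction_apply_self] using hS.mem_nhds hu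
  have hβψ : β =ᶠ[𝓝 x₀] ψ := by
    filter_upwards [hψS, hGC.eventually_apply_implicitFunction hn hinv, hU.mem_nhds hx₀]
      with x hxS hx hxU
    exact hinj x (hβ x hxU).1 hxS ((hβ x hxU).2.trans (hx.trans hGu).symm)
  exact (hψ.congr_of_eventuallyEq hβψ).contDiffWithinAt

section NormalizationIntegral

def radicand (Φ : ℝ → ℝ) (p : ℝ × ℝ) (ζ : ℝ) : ℝ := 2 * p.1 * Φ ζ + p.2

def radicandPosSet (Φ : ℝ → ℝ) (c : ℝ) : Set (ℝ × ℝ) := {p | ∀ ζ ∈ Icc 0 c, 0 < radicand Φ p ζ}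

/-- The paper's `𝒢` is `normalizationIntegral (fun ζ => ∫ t in 0..ζ, f t) 𝔠 (-1/2)`. -/
noncomputable def normalizationIntegral (Φ : ℝ → ℝ) (c r : ℝ) (p : ℝ × ℝ) : ℝ :=
  ∫ ζ in 0..c, radicand Φ p ζ ^ r

noncomputable def radicandRpowFDeriv (Φ : ℝ → ℝ) (r : ℝ) (p : ℝ × ℝ) (ζ : ℝ) :
    ℝ × ℝ →L[ℝ] ℝ :=
  (r * radicand Φ p ζ ^ (r - 1)) •
    ((2 * Φ ζ) • ContinuousLinearMap.fst ℝ ℝ ℝ + ContinuousLinearMap.snd ℝ ℝ ℝ)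

variable {Φ : ℝ → ℝ} {c r : ℝ}

theorem hasFDerivAt_radicand (Φ : ℝ → ℝ) (p : ℝ × ℝ) (ζ : ℝ) :
    HasFDerivAt (radicand Φ · ζ)
      ((2 * Φ ζ) • ContinuousLinearMap.fst ℝ ℝ ℝ + ContinuousLinearMap.snd ℝ ℝ ℝ) p := by
  convert ContinuousLinearMap.hasFDerivAt _ using 1
  ext q
  simp [radicand]
  ring

theorem hasFDerivAt_radicand_rpow {p : ℝ × ℝ} {ζ : ℝ} (hp : 0 < radicand Φ p ζ) (r : ℝ) :
    HasFDerivAt (radicand Φ · ζ ^ r) (radicandRpowFDeriv Φ r p ζ) p :=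
  (hasFDerivAt_radicand Φ p ζ).rpow_const (Or.inl hp.ne')

theorem continuousOn_radicand (hΦ : ContinuousOn Φ (Icc 0 c)) (S : Set (ℝ × ℝ)) :
    ContinuousOn (radicand Φ).uncurry (S ×ˢ Icc 0 c) := by
  have hΦ' : ContinuousOn (fun z : (ℝ × ℝ) × ℝ => Φ z.2) (S ×ˢ Icc 0 c) :=
    hΦ.comp continuousOn_snd fun _ hz => hz.2
  exact ((continuousOn_const.mul (continuous_fst.comp continuous_fst).continuousOn).mul hΦ').add
    (continuous_snd.comp continuous_fst).continuousOn

theorem continuousOn_radicand_rpow (hΦ : ContinuousOn Φ (Icc 0 c)) (r : ℝ) :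
    ContinuousOn (fun p ζ => radicand Φ p ζ ^ r).uncurry (radicandPosSet Φ c ×ˢ Icc 0 c) :=
  (continuousOn_radicand hΦ _).rpow_const fun z hz => Or.inl (hz.1 z.2 hz.2).ne'

theorem continuousOn_radicandRpowFDeriv (hΦ : ContinuousOn Φ (Icc 0 c)) (r : ℝ) :
    ContinuousOn (radicandRpowFDeriv Φ r).uncurry (radicandPosSet Φ c ×ˢ Icc 0 c) := by
  have hΦ' : ContinuousOn (fun z : (ℝ × ℝ) × ℝ => Φ z.2) (radicandPosSet Φ c ×ˢ Icc 0 c) :=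
    hΦ.comp continuousOn_snd fun _ hz => hz.2
  exact (continuousOn_const.mul (continuousOn_radicand_rpow hΦ (r - 1))).smul
    (((continuousOn_const.mul hΦ').smul continuousOn_const).add continuousOn_const)

theorem isOpen_radicandPosSet (hΦ : ContinuousOn Φ (Icc 0 c)) :
    IsOpen (radicandPosSet Φ c) := by
  have hcont : Continuous fun z : (ℝ × ℝ) × Icc 0 c => radicand Φ z.1 z.2 := by
    have hΦ' : Continuous fun ζ : Icc 0 c => Φ ζ := hΦ.domRestrict
    exact ((continuous_const.mul (continuous_fst.comp continuous_fst)).mul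
      (hΦ'.comp continuous_snd)).add (continuous_snd.comp continuous_fst)
  refine isOpen_iff_mem_nhds.2 fun p₀ hp₀ => ?_
  have htube := isCompact_univ.eventually_forall_of_forall_eventually
    (P := fun p (ζ : Icc 0 c) => 0 < radicand Φ p ζ) fun ζ _ =>
      (hcont.continuousAt (x := (p₀, ζ))).eventually (lt_mem_nhds (hp₀ ζ ζ.2))
  exact htube.mono fun p hp ζ hζ => hp ⟨ζ, hζ⟩ trivial

theorem hasFDerivAt_normalizationIntegral (hc : 0 ≤ c) (hΦ : ContinuousOn Φ (Icc 0 c)) (r : ℝ)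
    {p : ℝ × ℝ} (hp : p ∈ radicandPosSet Φ c) :
    HasFDerivAt (normalizationIntegral Φ c r) (∫ ζ in 0..c, radicandRpowFDeriv Φ r p ζ) p := by
  refine hasFDerivAt_intervalIntegral_of_continuousOn (isOpen_radicandPosSet hΦ) ?_ ?_ ?_ hp <;>
    rw [uIcc_of_le hc]
  exacts [continuousOn_radicand_rpow hΦ r, continuousOn_radicandRpowFDeriv hΦ r,
    fun p hp ζ hζ => hasFDerivAt_radicand_rpow (hp ζ hζ) r]

theorem contDiffOn_normalizationIntegral (hc : 0 ≤ c) (hΦ : ContinuousOn Φ (Icc 0 c)) (r : ℝ) :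
    ContDiffOn ℝ 1 (normalizationIntegral Φ c r) (radicandPosSet Φ c) := by
  refine contDiffOn_intervalIntegral_of_continuousOn (f' := radicandRpowFDeriv Φ r)
    (isOpen_radicandPosSet hΦ) ?_ ?_ ?_ <;> rw [uIcc_of_le hc]
  exacts [continuousOn_radicand_rpow hΦ r, continuousOn_radicandRpowFDeriv hΦ r,
    fun p hp ζ hζ => hasFDerivAt_radicand_rpow (hp ζ hζ) r]

theorem hasDerivAt_normalizationIntegral_snd (hc : 0 ≤ c) (hΦ : ContinuousOn Φ (Icc 0 c))
    (r : ℝ) {p : ℝ × ℝ} (hp : p ∈ radicandPosSet Φ c) :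
    HasDerivAt (fun y => normalizationIntegral Φ c r (p.1, y))
      (∫ ζ in 0..c, r * radicand Φ p ζ ^ (r - 1)) p.2 := by
  have hint : IntervalIntegrable (radicandRpowFDeriv Φ r p) volume 0 c := by
    refine ContinuousOn.intervalIntegrable ?_
    rw [uIcc_of_le hc]
    exact (continuousOn_radicandRpowFDeriv hΦ r).uncurry_left p hp
  have hval : ∀ ζ, radicandRpowFDeriv Φ r p ζ (0, 1) = r * radicand Φ p ζ ^ (r - 1) := by
    simp [radicandRpowFDeriv]
  have h := (hasFDerivAt_normalizationIntegral hc hΦ r hp).comp_hasDerivAt p.2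
    ((hasDerivAt_const p.2 p.1).prodMk (hasDerivAt_id p.2))
  rw [ContinuousLinearMap.intervalIntegral_apply hint] at h
  simp only [hval] at h
  exact h

theorem deriv_normalizationIntegral_snd_neg (hc : 0 < c) (hΦ : ContinuousOn Φ (Icc 0 c))
    (hr : r < 0) {p : ℝ × ℝ} (hp : p ∈ radicandPosSet Φ c) :
    deriv (fun y => normalizationIntegral Φ c r (p.1, y)) p.2 < 0 := by
  rw [(hasDerivAt_normalizationIntegral_snd hc.le hΦ r hp).deriv, ← neg_pos,
    ← intervalIntegral.integral_neg]
  refine intervalIntegral_pos_of_pos_on ?_ (fun ζ hζ => ?_) hc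
  · refine ContinuousOn.intervalIntegrable ?_
    rw [uIcc_of_le hc.le]
    exact (continuousOn_const.mul
      ((continuousOn_radicand_rpow hΦ (r - 1)).uncurry_left p hp)).neg
  · exact neg_pos.2 (mul_neg_of_neg_of_pos hr
      (Real.rpow_pos_of_pos (hp ζ (Ioo_subset_Icc_self hζ)) _))

theorem strictAntiOn_normalizationIntegral_snd (hc : 0 < c) (hΦ : ContinuousOn Φ (Icc 0 c))
    (hr : r < 0) (x : ℝ) :
    StrictAntiOn (fun y => normalizationIntegral Φ c r (x, y))
      {y | (x, y) ∈ radicandPosSet Φ c} := by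
  have hslice : Continuous fun y : ℝ => (x, y) := continuous_const.prodMk continuous_id
  have hopen : IsOpen {y | (x, y) ∈ radicandPosSet Φ c} :=
    (isOpen_radicandPosSet hΦ).preimage hslice
  have hupper : IsUpperSet {y | (x, y) ∈ radicandPosSet Φ c} := fun a b hab ha ζ hζ =>
    (ha ζ hζ).trans_le (by simp only [radicand]; linarith)
  refine strictAntiOn_of_deriv_neg hupper.ordConnected.convex
    ((contDiffOn_normalizationIntegral hc.le hΦ r).continuousOn.comp hslice.continuousOn
      fun _ hy => hy) ?_
  rw [hopen.interior_eq]
  exact fun y hy => deriv_normalizationIntegral_snd_neg hc hΦ hr hy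

end NormalizationIntegral

/-- Properties of the normalization function
`𝒢(α1,α2) = ∫₀^𝔠 (2 α1 ∫₀^ζ f + α2)^{-1/2} dζ` on the open region where the radicand
is strictly positive on `[0,𝔠]`: `𝒢` is `C¹` there, `∂𝒢/∂α2 < 0`, for each `α1` there
is at most one `α2` with `𝒢 = 1`, and any solution branch `β̄` of `𝒢(α1, β̄(α1)) = 1`
defined on an open set is `C¹`. -/
theorem stmt_12 (𝔠 : ℝ) (h𝔠 : 0 < 𝔠)
    (f : ℝ → ℝ) (hf : ContinuousOn f (Set.Icc 0 𝔠))
    (S : Set (ℝ × ℝ))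
    (hS : S = {p : ℝ × ℝ | ∀ ζ ∈ Set.Icc (0:ℝ) 𝔠,
      0 < 2 * p.1 * (∫ t in (0:ℝ)..ζ, f t) + p.2})
    (𝒢 : ℝ × ℝ → ℝ)
    (h𝒢 : ∀ p : ℝ × ℝ, 𝒢 p =
      ∫ ζ in (0:ℝ)..𝔠, (2 * p.1 * (∫ t in (0:ℝ)..ζ, f t) + p.2) ^ (-(1:ℝ)/2)) :
    ContDiffOn ℝ 1 𝒢 S
    ∧ (∀ p ∈ S, deriv (fun a2 => 𝒢 (p.1, a2)) p.2 < 0)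
    ∧ (∀ α1 a b : ℝ, (α1, a) ∈ S → (α1, b) ∈ S →
        𝒢 (α1, a) = 1 → 𝒢 (α1, b) = 1 → a = b)
    ∧ (∀ (U : Set ℝ) (βbar : ℝ → ℝ), IsOpen U →
        (∀ α1 ∈ U, (α1, βbar α1) ∈ S ∧ 𝒢 (α1, βbar α1) = 1) →
        ContDiffOn ℝ 1 βbar U) := by
  have hΦ : ContinuousOn (fun ζ => ∫ t in (0:ℝ)..ζ, f t) (Icc 0 𝔠) := by
    simpa only [uIcc_of_le h𝔠.le] using
      continuousOn_primitive_interval' (hf.intervalIntegrable_of_Icc h𝔠.le) left_mem_uIcc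
  obtain rfl : 𝒢 = normalizationIntegral (fun ζ => ∫ t in (0:ℝ)..ζ, f t) 𝔠 (-(1:ℝ)/2) :=
    funext h𝒢
  subst hS
  have hr : -(1:ℝ)/2 < 0 := by norm_num
  have hC1 := contDiffOn_normalizationIntegral h𝔠.le hΦ (-(1:ℝ)/2)
  have hderiv := fun p (hp : p ∈ radicandPosSet _ 𝔠) =>
    deriv_normalizationIntegral_snd_neg h𝔠 hΦ hr hp
  have hinj := fun x => (strictAntiOn_normalizationIntegral_snd h𝔠 hΦ hr x).injOn
  exact ⟨hC1, hderiv, fun α1 a b ha hb hGa hGb => hinj α1 ha hb (hGa.trans hGb.symm),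
    fun U β hU hβ => contDiffOn_of_forall_apply_eq_of_deriv_ne_zero (isOpen_radicandPosSet hΦ)
      hC1 one_ne_zero (fun p hp => (hderiv p hp).ne) hinj hU hβ⟩
end

section
/- Let Ω ⊂ ℝ² be open, f : ℝ → ℝ be C¹ with primitive F, and let φ ∈ C²(Ω) satisfy ∂x2x2 φ = f(φ) in Ω. Define v1 = ∂x2 φ, v2 = -∂x1 φ, and p = -(∂x2 φ)²/2 + F(φ). Then (v1, v2, p) is a classical solution of the steady hydrostatic Euler equations: v1 ∂x1 v1 + v2 ∂x2 v1 = -∂x1 p, ∂x2 p = 0, and ∂x1 v1 + ∂x2 v2 = 0 in Ω. -/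
/-!
For `v = (∂₂φ, -∂₁φ)` incompressibility is the symmetry `∂₁∂₂φ = ∂₂∂₁φ` of the mixed partials.
By the chain rule `∂ᵢp = -∂₂φ ∂ᵢ∂₂φ + f(φ) ∂ᵢφ`: for `i = 2` the equation `∂₂∂₂φ = f(φ)` makes
the two terms cancel, and for `i = 1` this is exactly the horizontal momentum equation.
-/

section Partial

variable {𝕜 : Type*} [NontriviallyNormedField 𝕜] {E : Type*} [NormedAddCommGroup E]
  [NormedSpace 𝕜 E] {g : 𝕜 × 𝕜 → E} {g' : 𝕜 × 𝕜 →L[𝕜] E} {z : 𝕜 × 𝕜}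

noncomputable def partialFst (g : 𝕜 × 𝕜 → E) (z : 𝕜 × 𝕜) : E := deriv (fun t => g (t, z.2)) z.1

noncomputable def partialSnd (g : 𝕜 × 𝕜 → E) (z : 𝕜 × 𝕜) : E := deriv (fun t => g (z.1, t)) z.2

theorem HasFDerivAt.hasDerivAt_fst_slice (h : HasFDerivAt g g' z) :
    HasDerivAt (fun t => g (t, z.2)) (g' (1, 0)) z.1 :=
  h.comp_hasDerivAt_of_eq z.1 ((hasDerivAt_id z.1).prodMk (hasDerivAt_const z.1 z.2)) rfl

theorem HasFDerivAt.hasDerivAt_snd_slice (h : HasFDerivAt g g' z) :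
    HasDerivAt (fun t => g (z.1, t)) (g' (0, 1)) z.2 :=
  h.comp_hasDerivAt_of_eq z.2 ((hasDerivAt_const z.2 z.1).prodMk (hasDerivAt_id z.2)) rfl

theorem HasFDerivAt.partialFst_eq (h : HasFDerivAt g g' z) : partialFst g z = g' (1, 0) :=
  h.hasDerivAt_fst_slice.deriv

theorem HasFDerivAt.partialSnd_eq (h : HasFDerivAt g g' z) : partialSnd g z = g' (0, 1) :=
  h.hasDerivAt_snd_slice.deriv

theorem DifferentiableAt.hasDerivAt_fst_slice (h : DifferentiableAt 𝕜 g z) :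
    HasDerivAt (fun t => g (t, z.2)) (partialFst g z) z.1 :=
  h.hasFDerivAt.hasDerivAt_fst_slice.differentiableAt.hasDerivAt

theorem DifferentiableAt.hasDerivAt_snd_slice (h : DifferentiableAt 𝕜 g z) :
    HasDerivAt (fun t => g (z.1, t)) (partialSnd g z) z.2 :=
  h.hasFDerivAt.hasDerivAt_snd_slice.differentiableAt.hasDerivAt

theorem ContDiffAt.hasFDerivAt_fderiv_apply (hg : ContDiffAt 𝕜 2 g z) (v : 𝕜 × 𝕜) :
    HasFDerivAt (fun y => fderiv 𝕜 g y v)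
      ((ContinuousLinearMap.apply 𝕜 E v).comp (fderiv 𝕜 (fderiv 𝕜 g) z)) z := by
  have hB : DifferentiableAt 𝕜 (fderiv 𝕜 g) z :=
    (hg.fderiv_right (m := 1) le_rfl).differentiableAt one_ne_zero
  exact (ContinuousLinearMap.apply 𝕜 E v).hasFDerivAt.comp z hB.hasFDerivAt

theorem ContDiffAt.hasFDerivAt_partialFst (hg : ContDiffAt 𝕜 2 g z) :
    HasFDerivAt (partialFst g)
      ((ContinuousLinearMap.apply 𝕜 E (1, 0)).comp (fderiv 𝕜 (fderiv 𝕜 g) z)) z := by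
  refine (hg.hasFDerivAt_fderiv_apply (1, 0)).congr_of_eventuallyEq ?_
  filter_upwards [hg.eventually (by simp)] with y hy
  exact (hy.differentiableAt two_ne_zero).hasFDerivAt.partialFst_eq

theorem ContDiffAt.hasFDerivAt_partialSnd (hg : ContDiffAt 𝕜 2 g z) :
    HasFDerivAt (partialSnd g)
      ((ContinuousLinearMap.apply 𝕜 E (0, 1)).comp (fderiv 𝕜 (fderiv 𝕜 g) z)) z := by
  refine (hg.hasFDerivAt_fderiv_apply (0, 1)).congr_of_eventuallyEq ?_
  filter_upwards [hg.eventually (by simp)] with y hy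
  exact (hy.differentiableAt two_ne_zero).hasFDerivAt.partialSnd_eq

end Partial

theorem ContDiffAt.partialFst_partialSnd {𝕜 : Type*} [RCLike 𝕜] {E : Type*}
    [NormedAddCommGroup E] [NormedSpace 𝕜 E] {g : 𝕜 × 𝕜 → E} {z : 𝕜 × 𝕜}
    (hg : ContDiffAt 𝕜 2 g z) :
    partialFst (partialSnd g) z = partialSnd (partialFst g) z := by
  rw [hg.hasFDerivAt_partialSnd.partialFst_eq, hg.hasFDerivAt_partialFst.partialSnd_eq]
  exact (hg.isSymmSndFDerivAt (by simp)).eq _ _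

theorem HasDerivAt.bernoulli_pressure {F : ℝ → ℝ} {u w : ℝ → ℝ} {c u' w' t : ℝ}
    (hF : HasDerivAt F c (w t)) (hu : HasDerivAt u u' t) (hw : HasDerivAt w w' t) :
    HasDerivAt (fun s => -(u s) ^ 2 / 2 + F (w s)) (-(u t * u') + c * w') t := by
  refine (((hu.pow 2).neg.div_const 2).add (hF.comp t hw)).congr_deriv ?_
  norm_num
  ring

theorem stmt_15_general (Ω : Set (ℝ × ℝ)) (hΩ : IsOpen Ω)
    (f F : ℝ → ℝ)
    (hF : ∀ t : ℝ, HasDerivAt F (f t) t)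
    (φ : ℝ × ℝ → ℝ) (hφ : ContDiffOn ℝ 2 φ Ω)
    (heq : ∀ x ∈ Ω, deriv (deriv (fun t => φ (x.1, t))) x.2 = f (φ x))
    (v1 v2 p : ℝ × ℝ → ℝ)
    (hv1 : ∀ x : ℝ × ℝ, v1 x = deriv (fun t => φ (x.1, t)) x.2)
    (hv2 : ∀ x : ℝ × ℝ, v2 x = - deriv (fun t => φ (t, x.2)) x.1)
    (hp : ∀ x : ℝ × ℝ, p x = - (v1 x) ^ 2 / 2 + F (φ x)) :
    ∀ x ∈ Ω,
      v1 x * deriv (fun t => v1 (t, x.2)) x.1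
        + v2 x * deriv (fun t => v1 (x.1, t)) x.2
        = - deriv (fun t => p (t, x.2)) x.1
      ∧ deriv (fun t => p (x.1, t)) x.2 = 0
      ∧ deriv (fun t => v1 (t, x.2)) x.1 + deriv (fun t => v2 (x.1, t)) x.2 = 0 := by
  intro x hx
  obtain rfl : v1 = partialSnd φ := funext hv1
  obtain rfl : v2 = fun z => -partialFst φ z := funext hv2
  obtain rfl : p = fun z => -(partialSnd φ z) ^ 2 / 2 + F (φ z) := funext hp
  have hφx : ContDiffAt ℝ 2 φ x := hφ.contDiffAt (hΩ.mem_nhds hx)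
  have hφd : DifferentiableAt ℝ φ x := hφx.differentiableAt two_ne_zero
  have hv1d : DifferentiableAt ℝ (partialSnd φ) x := hφx.hasFDerivAt_partialSnd.differentiableAt
  have hv2d : DifferentiableAt ℝ (partialFst φ) x := hφx.hasFDerivAt_partialFst.differentiableAt
  have hφ22 : partialSnd (partialSnd φ) x = f (φ x) := heq x hx
  have hp1 := (hF (φ x)).bernoulli_pressure hv1d.hasDerivAt_fst_slice hφd.hasDerivAt_fst_slice
  have hp2 := (hF (φ x)).bernoulli_pressure hv1d.hasDerivAt_snd_slice hφd.hasDerivAt_snd_slice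
  simp only [Prod.mk.eta] at hp1 hp2
  beta_reduce
  rw [hp1.deriv, hp2.deriv, hv1d.hasDerivAt_fst_slice.deriv, hv1d.hasDerivAt_snd_slice.deriv,
    deriv.fun_neg, hv2d.hasDerivAt_snd_slice.deriv, hφ22, hφx.partialFst_partialSnd]
  exact ⟨by ring, by ring, by ring⟩

/-- Reconstruction of a hydrostatic Euler flow from a stream function: if `φ ∈ C²(Ω)`
satisfies `∂x2x2 φ = f(φ)` in the open set `Ω`, `F` is a primitive of the `C¹` function
`f`, and `v1 = ∂x2 φ`, `v2 = -∂x1 φ`, `p = -(∂x2 φ)²/2 + F(φ)`, then `(v1, v2, p)` is a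
classical solution of the steady hydrostatic Euler equations in `Ω`. -/
theorem stmt_15 (Ω : Set (ℝ × ℝ)) (hΩ : IsOpen Ω)
    (f F : ℝ → ℝ) (hf : ContDiff ℝ 1 f)
    (hF : ∀ t : ℝ, HasDerivAt F (f t) t)
    (φ : ℝ × ℝ → ℝ) (hφ : ContDiffOn ℝ 2 φ Ω)
    (heq : ∀ x ∈ Ω, deriv (deriv (fun t => φ (x.1, t))) x.2 = f (φ x))
    (v1 v2 p : ℝ × ℝ → ℝ)
    (hv1 : ∀ x : ℝ × ℝ, v1 x = deriv (fun t => φ (x.1, t)) x.2)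
    (hv2 : ∀ x : ℝ × ℝ, v2 x = - deriv (fun t => φ (t, x.2)) x.1)
    (hp : ∀ x : ℝ × ℝ, p x = - (v1 x) ^ 2 / 2 + F (φ x)) :
    ∀ x ∈ Ω,
      v1 x * deriv (fun t => v1 (t, x.2)) x.1
        + v2 x * deriv (fun t => v1 (x.1, t)) x.2
        = - deriv (fun t => p (t, x.2)) x.1
      ∧ deriv (fun t => p (x.1, t)) x.2 = 0
      ∧ deriv (fun t => v1 (t, x.2)) x.1 + deriv (fun t => v2 (x.1, t)) x.2 = 0 :=
  stmt_15_general Ω hΩ f F hF φ hφ heq v1 v2 p hv1 hv2 hp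
end

section
/- Let (v1, v2) be a C¹ divergence-free vector field on a domain Ω with v1 > 0 in Ω, tangent to the boundary of Ω = {(x1, x2) : s0(x1) < x2 < s1(x1)} with s0, s1 ∈ C². Then any streamline (integral curve of (v1, v2)) starting at a point of Ω stays in Ω for all time: it never reaches ∂Ω. In particular, if a streamline through (x1⁰, x2⁰) ∈ Ω touched the lower boundary at (x1¹, s0(x1¹)), Green's theorem would force ∫_{s0(x1⁰)}^{x2⁰} v1(x1⁰, x2) dx2 = 0, contradicting v1 > 0. -/
/-!
Tangency makes each boundary graph `x2 = s x1` invariant in a quantitative way. Along a streamline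
the height `h = x2 - s x1` has derivative `v2 - s' x1 * v1`, which vanishes on the graph; after
straightening the boundary by `(x1, y) ↦ (x1, s x1 + y)` this is a `C¹` function on a compact
convex box, hence Lipschitz, so `|h'| ≤ K |h|` near the graph. By Grönwall's inequality a
streamline lying on the graph at time `T` already lay on it just before `T`, so a streamline
starting in `Ω` has no first exit time. Negative times follow by reversing the field.
-/

open Set Filter Topology

theorem Ici_subset_of_isOpen_of_Ico_subset {α : Type*} [ConditionallyCompleteLinearOrder α]
    [TopologicalSpace α] [OrderTopology α] {s : Set α} {a : α} (hs : IsOpen s) (ha : a ∈ s)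
    (hstep : ∀ b, a < b → Ico a b ⊆ s → b ∈ s) : Ici a ⊆ s := by
  intro b hab
  by_contra hb
  have hgap : ∀ x ∈ sᶜ ∩ Ioc a b, (sᶜ ∩ Ico a x).Nonempty := by
    rintro x ⟨hxs, hax, -⟩
    by_contra hempty
    exact hxs (hstep x hax fun y hy => by_contra fun hys => hempty ⟨y, hys, hy⟩)
  exact IsClosed.mem_of_ge_of_forall_exists_lt (hs.isClosed_compl.inter isClosed_Icc) hb hab
    hgap ha

theorem eq_zero_of_norm_deriv_le_mul_norm_of_eq_zero_right_endpoint
    {E : Type*} [NormedAddCommGroup E] [NormedSpace ℝ E] {f f' : ℝ → E} {K a b : ℝ}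
    (hf : ∀ t ∈ Icc a b, HasDerivAt f (f' t) t) (hb : f b = 0)
    (bound : ∀ t ∈ Icc a b, ‖f' t‖ ≤ K * ‖f t‖) : ∀ t ∈ Icc a b, f t = 0 := by
  have hrev : ∀ u ∈ Icc (-b) (-a), HasDerivAt (fun u => f (-u)) (-f' (-u)) u := fun u hu => by
    simpa [Function.comp_def] using
      (hf (-u) ⟨le_neg.2 hu.2, neg_le.1 hu.1⟩).scomp u (hasDerivAt_neg u)
  have := eq_zero_of_abs_deriv_le_mul_abs_self_of_eq_zero_right (K := K)
    (fun u hu => (hrev u hu).continuousAt.continuousWithinAt)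
    (fun u hu => (hrev u (Ico_subset_Icc_self hu)).hasDerivWithinAt) (by simpa using hb)
    (fun u hu => by simpa using bound (-u) ⟨le_neg.2 hu.2.le, neg_le.1 hu.1⟩)
  intro t ht
  simpa using this (-t) ⟨neg_le_neg ht.2, neg_le_neg ht.1⟩

def nozzle (s0 s1 : ℝ → ℝ) : Set (ℝ × ℝ) := {x | s0 x.1 < x.2 ∧ x.2 < s1 x.1}

theorem closure_nozzle {s0 s1 : ℝ → ℝ} (hs0 : Continuous s0) (hs1 : Continuous s1)
    (hlt : ∀ x1, s0 x1 < s1 x1) :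
    closure (nozzle s0 s1) = {x | s0 x.1 ≤ x.2 ∧ x.2 ≤ s1 x.1} := by
  apply subset_antisymm
  · refine closure_minimal (fun x hx => ⟨hx.1.le, hx.2.le⟩) ?_
    exact (isClosed_le (hs0.comp continuous_fst) continuous_snd).inter
      (isClosed_le continuous_snd (hs1.comp continuous_fst))
  · rintro ⟨x1, x2⟩ hx
    have hvert : Continuous fun y : ℝ => (x1, y) := continuous_const.prodMk continuous_id
    have hx2 : x2 ∈ closure (Ioo (s0 x1) (s1 x1)) := by rwa [closure_Ioo (hlt x1).ne]
    exact closure_mono (image_subset_iff.2 fun y hy => hy)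
      (image_closure_subset_closure_image hvert (mem_image_of_mem _ hx2))

theorem exists_abs_normal_component_le {s : ℝ → ℝ} (hs : ContDiff ℝ 2 s) {v1 v2 : ℝ × ℝ → ℝ}
    {S : Set (ℝ × ℝ)} (hv : ContDiffOn ℝ 1 (fun x => (v1 x, v2 x)) S)
    (htang : ∀ x1, v2 (x1, s x1) = deriv s x1 * v1 (x1, s x1))
    {I J : Set ℝ} (hI : Convex ℝ I) (hIc : IsCompact I) (hJ : Convex ℝ J) (hJc : IsCompact J)
    (hJ0 : 0 ∈ J) (hIJ : ∀ x1 ∈ I, ∀ y ∈ J, (x1, s x1 + y) ∈ S) :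
    ∃ K, ∀ x1 ∈ I, ∀ y ∈ J,
      |v2 (x1, s x1 + y) - deriv s x1 * v1 (x1, s x1 + y)| ≤ K * |y| := by
  set Φ : ℝ × ℝ → ℝ × ℝ := fun p => (p.1, s p.1 + p.2)
  have hΦ : ContDiff ℝ 1 Φ :=
    contDiff_fst.prodMk ((hs.of_le (by norm_num)).comp contDiff_fst |>.add contDiff_snd)
  have hvΦ : ContDiffOn ℝ 1 (fun p => (v1 (Φ p), v2 (Φ p))) (I ×ˢ J) :=
    hv.comp hΦ.contDiffOn fun p hp => hIJ p.1 hp.1 p.2 hp.2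
  have hs' : ContDiff ℝ 1 (deriv s) := hs.deriv'
  have hnormal : ContDiffOn ℝ 1
      (fun p : ℝ × ℝ => v2 (Φ p) - deriv s p.1 * v1 (Φ p)) (I ×ˢ J) :=
    (contDiff_snd.comp_contDiffOn hvΦ).sub
      ((hs'.comp contDiff_fst).contDiffOn.mul (contDiff_fst.comp_contDiffOn hvΦ))
  obtain ⟨K, hK⟩ := hnormal.exists_lipschitzOnWith one_ne_zero (hI.prod hJ) (hIc.prod hJc)
  refine ⟨K, fun x1 hx1 y hy => ?_⟩
  have h := hK.dist_le_mul (x1, y) ⟨hx1, hy⟩ (x1, 0) ⟨hx1, hJ0⟩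
  simpa [Φ, Prod.dist_eq, Real.dist_eq, htang] using h

theorem eventually_nhdsLT_on_graph_of_on_graph {s : ℝ → ℝ} (hs : ContDiff ℝ 2 s)
    {v1 v2 : ℝ × ℝ → ℝ} {S : Set (ℝ × ℝ)} (hv : ContDiffOn ℝ 1 (fun x => (v1 x, v2 x)) S)
    (htang : ∀ x1, v2 (x1, s x1) = deriv s x1 * v1 (x1, s x1))
    {I J : Set ℝ} (hI : Convex ℝ I) (hIc : IsCompact I) (hJ : Convex ℝ J) (hJc : IsCompact J)
    (hJ0 : 0 ∈ J) (hIJ : ∀ x1 ∈ I, ∀ y ∈ J, (x1, s x1 + y) ∈ S)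
    {X : ℝ → ℝ × ℝ} (hX : ∀ t, HasDerivAt X (v1 (X t), v2 (X t)) t) {T : ℝ}
    (hTI : (X T).1 ∈ I) (hT : (X T).2 = s (X T).1)
    (hstrip : ∀ᶠ t in 𝓝[<] T, (X t).1 ∈ I ∧ (X t).2 - s (X t).1 ∈ J) :
    ∀ᶠ t in 𝓝[<] T, (X t).2 = s (X t).1 := by
  obtain ⟨K, hK⟩ := exists_abs_normal_component_le hs hv htang hI hIc hJ hJc hJ0 hIJ
  set h : ℝ → ℝ := fun t => (X t).2 - s (X t).1
  have hderiv : ∀ t, HasDerivAt h (v2 (X t) - deriv s (X t).1 * v1 (X t)) t := fun t => by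
    have hX1 : HasDerivAt (fun t => (X t).1) (v1 (X t)) t :=
      (ContinuousLinearMap.fst ℝ ℝ ℝ).hasFDerivAt.comp_hasDerivAt t (hX t)
    have hX2 : HasDerivAt (fun t => (X t).2) (v2 (X t)) t :=
      (ContinuousLinearMap.snd ℝ ℝ ℝ).hasFDerivAt.comp_hasDerivAt t (hX t)
    exact hX2.sub ((hs.differentiable (by norm_num) _).hasDerivAt.comp t hX1)
  have hbound : ∀ t, (X t).1 ∈ I → h t ∈ J →
      |v2 (X t) - deriv s (X t).1 * v1 (X t)| ≤ K * |h t| := fun t ht1 hth => by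
    simpa [h] using hK _ ht1 _ hth
  obtain ⟨l, hl, hlT⟩ := mem_nhdsLT_iff_exists_Ioo_subset.1 hstrip
  filter_upwards [Ioo_mem_nhdsLT hl] with a ha
  have hstrip' : ∀ t ∈ Icc a T, (X t).1 ∈ I ∧ h t ∈ J := by
    rintro t ⟨hat, htT⟩
    rcases htT.lt_or_eq with htT | rfl
    · exact hlT ⟨ha.1.trans_le hat, htT⟩
    · exact ⟨hTI, by simpa [h, hT] using hJ0⟩
  have := eq_zero_of_norm_deriv_le_mul_norm_of_eq_zero_right_endpoint (fun t _ => hderiv t)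
    (by simp [h, hT]) (fun t ht => hbound t (hstrip' t ht).1 (hstrip' t ht).2) a
    ⟨le_rfl, ha.2.le⟩
  exact sub_eq_zero.1 this

theorem mem_nozzle_of_eventually_mem {s0 s1 : ℝ → ℝ} (hs0 : ContDiff ℝ 2 s0)
    (hs1 : ContDiff ℝ 2 s1) (hlt : ∀ x1, s0 x1 < s1 x1) {v1 v2 : ℝ × ℝ → ℝ}
    (hreg : ContDiffOn ℝ 1 (fun x => (v1 x, v2 x)) (closure (nozzle s0 s1)))
    (htang0 : ∀ x1, v2 (x1, s0 x1) = deriv s0 x1 * v1 (x1, s0 x1))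
    (htang1 : ∀ x1, v2 (x1, s1 x1) = deriv s1 x1 * v1 (x1, s1 x1))
    {X : ℝ → ℝ × ℝ} (hX : ∀ t, HasDerivAt X (v1 (X t), v2 (X t)) t) {T : ℝ}
    (hin : ∀ᶠ t in 𝓝[<] T, X t ∈ nozzle s0 s1) : X T ∈ nozzle s0 s1 := by
  by_contra hT
  have hXc : Continuous X := continuous_iff_continuousAt.2 fun t => (hX t).continuousAt
  have hXT : X T ∈ closure (nozzle s0 s1) :=
    mem_closure_of_tendsto (hXc.continuousAt.tendsto.mono_left nhdsWithin_le_nhds) hin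
  rw [closure_nozzle hs0.continuous hs1.continuous hlt] at hreg hXT
  set x0 := (X T).1
  have hx0 : x0 ∈ Icc (x0 - 1) (x0 + 1) := ⟨(sub_one_lt x0).le, (lt_add_one x0).le⟩
  obtain ⟨c, hc, hcI⟩ := isCompact_Icc.exists_forall_le' (a := 0) (s := Icc (x0 - 1) (x0 + 1))
    (f := fun x1 => s1 x1 - s0 x1) (hs1.continuous.sub hs0.continuous).continuousOn
    fun x1 _ => sub_pos.2 (hlt x1)
  have hnearI : ∀ᶠ t in 𝓝[<] T, (X t).1 ∈ Icc (x0 - 1) (x0 + 1) :=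
    nhdsWithin_le_nhds <| (continuous_fst.comp hXc).continuousAt.preimage_mem_nhds
      (Icc_mem_nhds (sub_one_lt x0) (lt_add_one x0))
  have hnear : ∀ s : ℝ → ℝ, Continuous s → (X T).2 = s x0 →
      ∀ᶠ t in 𝓝[<] T, (X t).2 - s (X t).1 ∈ Icc (-c) c := fun s hs hTs => by
    have hcont : Continuous fun t => (X t).2 - s (X t).1 :=
      (continuous_snd.comp hXc).sub (hs.comp (continuous_fst.comp hXc))
    refine nhdsWithin_le_nhds <| hcont.continuousAt.preimage_mem_nhds ?_
    rw [hTs, sub_self]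
    exact Icc_mem_nhds (neg_lt_zero.2 hc) hc
  have hgraph : (X T).2 = s0 x0 ∨ (X T).2 = s1 x0 := by
    by_contra! hne
    exact hT ⟨hXT.1.lt_of_ne hne.1.symm, hXT.2.lt_of_ne hne.2⟩
  rcases hgraph with hT0 | hT1
  · have hgr := eventually_nhdsLT_on_graph_of_on_graph hs0 hreg htang0 (convex_Icc _ _)
      isCompact_Icc (convex_Icc 0 c) isCompact_Icc ⟨le_rfl, hc.le⟩
      (fun x1 hx1 y hy => ⟨by linarith [hy.1], by linarith [hy.2, hcI x1 hx1]⟩) hX hx0 hT0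
      (by
        filter_upwards [hin, hnearI, hnear s0 hs0.continuous hT0] with t hΩ hI hcl
        exact ⟨hI, by linarith [hΩ.1], hcl.2⟩)
    obtain ⟨t, hgr, hΩ⟩ := (hgr.and hin).exists
    exact hΩ.1.ne' hgr
  · have hgr := eventually_nhdsLT_on_graph_of_on_graph hs1 hreg htang1 (convex_Icc _ _)
      isCompact_Icc (convex_Icc (-c) 0) isCompact_Icc ⟨by linarith, le_rfl⟩
      (fun x1 hx1 y hy => ⟨by linarith [hy.1, hcI x1 hx1], by linarith [hy.2]⟩) hX hx0 hT1
      (by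
        filter_upwards [hin, hnearI, hnear s1 hs1.continuous hT1] with t hΩ hI hcl
        exact ⟨hI, hcl.1, by linarith [hΩ.2]⟩)
    obtain ⟨t, hgr, hΩ⟩ := (hgr.and hin).exists
    exact hΩ.2.ne hgr

theorem nozzle_forward_invariant {s0 s1 : ℝ → ℝ} (hs0 : ContDiff ℝ 2 s0)
    (hs1 : ContDiff ℝ 2 s1) (hlt : ∀ x1, s0 x1 < s1 x1) {v1 v2 : ℝ × ℝ → ℝ}
    (hreg : ContDiffOn ℝ 1 (fun x => (v1 x, v2 x)) (closure (nozzle s0 s1)))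
    (htang0 : ∀ x1, v2 (x1, s0 x1) = deriv s0 x1 * v1 (x1, s0 x1))
    (htang1 : ∀ x1, v2 (x1, s1 x1) = deriv s1 x1 * v1 (x1, s1 x1))
    {X : ℝ → ℝ × ℝ} (hX : ∀ t, HasDerivAt X (v1 (X t), v2 (X t)) t)
    (hX0 : X 0 ∈ nozzle s0 s1) {t : ℝ} (ht : 0 ≤ t) : X t ∈ nozzle s0 s1 := by
  have hXc : Continuous X := continuous_iff_continuousAt.2 fun t => (hX t).continuousAt
  have hopen : IsOpen (nozzle s0 s1) :=
    (isOpen_lt (hs0.continuous.comp continuous_fst) continuous_snd).inter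
      (isOpen_lt continuous_snd (hs1.continuous.comp continuous_fst))
  refine Ici_subset_of_isOpen_of_Ico_subset (hopen.preimage hXc) hX0 (fun T hT hsub => ?_) ht
  exact mem_nozzle_of_eventually_mem hs0 hs1 hlt hreg htang0 htang1 hX
    (mem_of_superset (Ioo_mem_nhdsLT hT) fun t ht => hsub (Ioo_subset_Ico_self ht))

theorem stmt_16_general (s0 s1 : ℝ → ℝ)
    (hs0 : ContDiff ℝ 2 s0) (hs1 : ContDiff ℝ 2 s1)
    (hlt : ∀ x1 : ℝ, s0 x1 < s1 x1)
    (Ω : Set (ℝ × ℝ))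
    (hΩ : Ω = {x : ℝ × ℝ | s0 x.1 < x.2 ∧ x.2 < s1 x.1})
    (v1 v2 : ℝ × ℝ → ℝ)
    (hreg : ContDiffOn ℝ 1 (fun x => (v1 x, v2 x)) (closure Ω))
    (htang0 : ∀ x1 : ℝ, v2 (x1, s0 x1) = deriv s0 x1 * v1 (x1, s0 x1))
    (htang1 : ∀ x1 : ℝ, v2 (x1, s1 x1) = deriv s1 x1 * v1 (x1, s1 x1))
    (X : ℝ → ℝ × ℝ)
    (hX : ∀ t : ℝ, HasDerivAt X (v1 (X t), v2 (X t)) t)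
    (hX0 : X 0 ∈ Ω) :
    ∀ t : ℝ, X t ∈ Ω := by
  obtain rfl : Ω = nozzle s0 s1 := hΩ
  intro t
  rcases le_or_gt 0 t with ht | ht
  · exact nozzle_forward_invariant hs0 hs1 hlt hreg htang0 htang1 hX hX0 ht
  · have hrev := nozzle_forward_invariant (v1 := -v1) (v2 := -v2) (X := fun s => X (-s))
      hs0 hs1 hlt hreg.neg (by simp [htang0]) (by simp [htang1])
      (fun s => by simpa [Function.comp_def] using (hX (-s)).scomp s (hasDerivAt_neg s))
      (by simpa only [neg_zero] using hX0) (neg_nonneg.2 ht.le)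
    simpa only [neg_neg] using hrev

/-- Streamlines of a `C¹` divergence-free field with `v1 > 0`, tangent to the boundary
of the nozzle `Ω = {(x1,x2) : s0(x1) < x2 < s1(x1)}`, stay in `Ω` for all time. -/
theorem stmt_16 (s0 s1 : ℝ → ℝ)
    (hs0 : ContDiff ℝ 2 s0) (hs1 : ContDiff ℝ 2 s1)
    (hlt : ∀ x1 : ℝ, s0 x1 < s1 x1)
    (Ω : Set (ℝ × ℝ))
    (hΩ : Ω = {x : ℝ × ℝ | s0 x.1 < x.2 ∧ x.2 < s1 x.1})
    (v1 v2 : ℝ × ℝ → ℝ)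
    (hreg : ContDiffOn ℝ 1 (fun x => (v1 x, v2 x)) (closure Ω))
    (hdiv : ∀ x ∈ closure Ω,
      deriv (fun t => v1 (t, x.2)) x.1 + deriv (fun t => v2 (x.1, t)) x.2 = 0)
    (hpos : ∀ x ∈ Ω, 0 < v1 x)
    (htang0 : ∀ x1 : ℝ, v2 (x1, s0 x1) = deriv s0 x1 * v1 (x1, s0 x1))
    (htang1 : ∀ x1 : ℝ, v2 (x1, s1 x1) = deriv s1 x1 * v1 (x1, s1 x1))
    (X : ℝ → ℝ × ℝ)
    (hX : ∀ t : ℝ, HasDerivAt X (v1 (X t), v2 (X t)) t)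
    (hX0 : X 0 ∈ Ω) :
    ∀ t : ℝ, X t ∈ Ω :=
  stmt_16_general s0 s1 hs0 hs1 hlt Ω hΩ v1 v2 hreg htang0 htang1 X hX hX0
end
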